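/- arXiv:1809.03652 — 5 statements merged into one kernel-verified Lean document; each statement's English description precedes it below -/
import Mathlib

section
/- Let Z ∈ ℝ^{n×n} have compact singular value decomposition Z = U Σ V^T (U, V ∈ ℝ^{n×r} with orthonormal columns and Σ ∈ ℝ^{r×r} diagonal with positive diagonal entries, r = rank(Z)). Then the subdifferential of the nuclear norm at Z is ∂‖Z‖_* = { U V^T + W : W ∈ ℝ^{n×n}, U^T W = 0, W V = 0, ‖W‖₂ ≤ 1 }, where ‖W‖₂ denotes the spectral (operator) norm. -/
noncomputable section

open scoped BigOperators
open Matrix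

/-- Singular values (in some order) of a square real matrix: square roots of the
eigenvalues of `Aᵀ * A`. -/
def singularValues {n : ℕ} (A : Matrix (Fin n) (Fin n) ℝ) : Fin n → ℝ :=
  fun i => Real.sqrt ((Matrix.isHermitian_conjTranspose_mul_self A).eigenvalues i)

/-- Nuclear norm: the sum of the singular values. -/
def nuclearNorm {n : ℕ} (A : Matrix (Fin n) (Fin n) ℝ) : ℝ :=
  ∑ i, singularValues A i

/-- Spectral (operator) norm: the largest singular value. -/
def specNorm {n : ℕ} (A : Matrix (Fin n) (Fin n) ℝ) : ℝ :=
  ⨆ i, singularValues A i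

/-- Frobenius (trace) inner product `⟨A, B⟩ = trace (Aᵀ B)`. -/
def frobInner {n : ℕ} (A B : Matrix (Fin n) (Fin n) ℝ) : ℝ :=
  ∑ i, ∑ j, A i j * B i j

namespace NuclearAux

open Polynomial

variable {n : ℕ}

-- charpoly of diagonal
lemma charpoly_diag (d : Fin n → ℝ) :
    (Matrix.diagonal d).charpoly = ∏ i, (X - C (d i)) := by
  rw [Matrix.charpoly]
  have : charmatrix (Matrix.diagonal d) = Matrix.diagonal (fun i => X - C (d i)) := by
    ext i j
    by_cases h : i = j
    · subst h; simp
    · simp [Matrix.charmatrix_apply_ne _ _ _ h, Matrix.diagonal_apply_ne _ h]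
  rw [this, Matrix.det_diagonal]

lemma charpoly_conj_orth (B A : Matrix (Fin n) (Fin n) ℝ) (hB : Bᵀ * B = 1) :
    (B * A * Bᵀ).charpoly = A.charpoly := by
  have hB' : B * Bᵀ = 1 := mul_eq_one_comm.mp hB
  have key : charmatrix (B * A * Bᵀ) =
      (C : ℝ →+* ℝ[X]).mapMatrix B * charmatrix A * (C : ℝ →+* ℝ[X]).mapMatrix Bᵀ := by
    rw [charmatrix, charmatrix, mul_sub, sub_mul]
    congr 1
    · have hd : (Matrix.diagonal fun _ : Fin n => (X : ℝ[X])) = (X : ℝ[X]) • (1 : Matrix (Fin n) (Fin n) ℝ[X]) := by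
        ext i j
        by_cases h : i = j
        · subst h; simp
        · simp [Matrix.diagonal_apply_ne _ h, Matrix.one_apply_ne h]
      rw [Matrix.scalar_apply, hd, Matrix.mul_smul, Matrix.smul_mul, mul_one,
        ← RingHom.map_mul, hB']
      simp
    · simp [← RingHom.map_mul]
  rw [Matrix.charpoly, key, Matrix.det_mul, Matrix.det_mul, Matrix.charpoly]
  have : ((C : ℝ →+* ℝ[X]).mapMatrix B).det * ((C : ℝ →+* ℝ[X]).mapMatrix Bᵀ).det = 1 := by
    rw [← Matrix.det_mul, ← RingHom.map_mul, hB', RingHom.mapMatrix_apply]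
    simp
  rw [mul_right_comm, this, one_mul]

variable {M : Matrix (Fin n) (Fin n) ℝ}

lemma hermitian_charpoly (hM : M.IsHermitian) :
    M.charpoly = ∏ i, (X - C (hM.eigenvalues i)) := by
  have hsp := hM.spectral_theorem
  set Q : Matrix (Fin n) (Fin n) ℝ := (hM.eigenvectorUnitary : Matrix (Fin n) (Fin n) ℝ) with hQ
  have hQunit : star Q * Q = 1 := by
    have := hM.eigenvectorUnitary.2
    rw [Matrix.mem_unitaryGroup_iff'] at this
    exact this
  have hQorth : Qᵀ * Q = 1 := by
    rwa [Matrix.star_eq_conjTranspose, Matrix.conjTranspose_eq_transpose_of_trivial] at hQunit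
  have hdiag : (Matrix.diagonal ((RCLike.ofReal : ℝ → ℝ) ∘ hM.eigenvalues))
      = Matrix.diagonal hM.eigenvalues := by
    congr 1
  have hM' : M = Q * Matrix.diagonal hM.eigenvalues * Qᵀ := by
    conv_lhs => rw [hsp]
    rw [hdiag, Unitary.conjStarAlgAut_apply, Matrix.star_eq_conjTranspose, Matrix.conjTranspose_eq_transpose_of_trivial]
  calc M.charpoly = (Q * Matrix.diagonal hM.eigenvalues * Qᵀ).charpoly := by rw [← hM']
    _ = ∏ i, (X - C (hM.eigenvalues i)) := by
        rw [charpoly_conj_orth _ _ hQorth, charpoly_diag]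

/-- Key multiset lemma: if `M = B * diagonal d * Bᵀ` with `B` orthogonal, then the multiset
of eigenvalues of `M` equals the multiset of `d`. -/
lemma eig_multiset (hM : M.IsHermitian) (B : Matrix (Fin n) (Fin n) ℝ) (d : Fin n → ℝ)
    (hB : Bᵀ * B = 1) (hMeq : M = B * Matrix.diagonal d * Bᵀ) :
    Multiset.map hM.eigenvalues Finset.univ.val = Multiset.map d Finset.univ.val := by
  have h1 : M.charpoly = ∏ i, (X - C (hM.eigenvalues i)) := hermitian_charpoly hM
  have h2 : M.charpoly = ∏ i, (X - C (d i)) := by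
    rw [hMeq, charpoly_conj_orth _ _ hB, charpoly_diag]
  have h3 : (Multiset.map (fun a => X - C a) (Multiset.map hM.eigenvalues Finset.univ.val)).prod
      = (Multiset.map (fun a => X - C a) (Multiset.map d Finset.univ.val)).prod := by
    rw [Multiset.map_map, Multiset.map_map]
    rw [← Finset.prod_eq_multiset_prod, ← Finset.prod_eq_multiset_prod]
    exact h1 ▸ h2 ▸ rfl
  have := congrArg Polynomial.roots h3
  rwa [Polynomial.roots_multiset_prod_X_sub_C, Polynomial.roots_multiset_prod_X_sub_C] at this

lemma sum_eig (hM : M.IsHermitian) (B : Matrix (Fin n) (Fin n) ℝ) (d : Fin n → ℝ)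
    (hB : Bᵀ * B = 1) (hMeq : M = B * Matrix.diagonal d * Bᵀ) (f : ℝ → ℝ) :
    ∑ i, f (hM.eigenvalues i) = ∑ i, f (d i) := by
  have h := congrArg (fun s => (Multiset.map f s).sum) (eig_multiset hM B d hB hMeq)
  simpa [Multiset.map_map, Finset.sum_eq_multiset_sum, Function.comp_def] using h

lemma hermitian_decomp (hM : M.IsHermitian) :
    ∃ Q : Matrix (Fin n) (Fin n) ℝ, Qᵀ * Q = 1 ∧
      M = Q * Matrix.diagonal hM.eigenvalues * Qᵀ := by
  have hsp := hM.spectral_theorem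
  set Q : Matrix (Fin n) (Fin n) ℝ := (hM.eigenvectorUnitary : Matrix (Fin n) (Fin n) ℝ) with hQ
  have hQunit : star Q * Q = 1 := by
    have := hM.eigenvectorUnitary.2
    rw [Matrix.mem_unitaryGroup_iff'] at this
    exact this
  have hQorth : Qᵀ * Q = 1 := by
    rwa [Matrix.star_eq_conjTranspose, Matrix.conjTranspose_eq_transpose_of_trivial] at hQunit
  have hdiag : (Matrix.diagonal ((RCLike.ofReal : ℝ → ℝ) ∘ hM.eigenvalues))
      = Matrix.diagonal hM.eigenvalues := by congr 1
  refine ⟨Q, hQorth, ?_⟩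
  conv_lhs => rw [hsp]
  rw [hdiag, Unitary.conjStarAlgAut_apply, Matrix.star_eq_conjTranspose, Matrix.conjTranspose_eq_transpose_of_trivial]

lemma dot_tmul (A : Matrix (Fin n) (Fin n) ℝ) (x : Fin n → ℝ) :
    x ⬝ᵥ ((Aᴴ * A) *ᵥ x) = (A *ᵥ x) ⬝ᵥ (A *ᵥ x) := by
  rw [Matrix.conjTranspose_eq_transpose_of_trivial, ← Matrix.mulVec_mulVec,
    Matrix.dotProduct_mulVec, Matrix.vecMul_transpose]

lemma eigbasis_dot (hM : M.IsHermitian) (i j : Fin n) :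
    ⇑(hM.eigenvectorBasis i) ⬝ᵥ ⇑(hM.eigenvectorBasis j) = if i = j then (1:ℝ) else 0 := by
  have h := hM.eigenvectorBasis.orthonormal
  rw [orthonormal_iff_ite] at h
  have := h i j
  rw [PiLp.inner_apply] at this
  simpa [dotProduct, RCLike.inner_apply, mul_comm] using this

lemma eig_eq_dot (hM : M.IsHermitian) (i : Fin n) :
    hM.eigenvalues i = ⇑(hM.eigenvectorBasis i) ⬝ᵥ (M *ᵥ ⇑(hM.eigenvectorBasis i)) := by
  rw [hM.mulVec_eigenvectorBasis, dotProduct_smul, smul_eq_mul, eigbasis_dot hM i i]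
  simp

lemma sv_nonneg (A : Matrix (Fin n) (Fin n) ℝ) (i : Fin n) : 0 ≤ singularValues A i :=
  Real.sqrt_nonneg _

lemma eig_tmul_nonneg (A : Matrix (Fin n) (Fin n) ℝ) (i : Fin n) :
    0 ≤ (Matrix.isHermitian_conjTranspose_mul_self A).eigenvalues i :=
  Matrix.eigenvalues_conjTranspose_mul_self_nonneg A i

lemma sv_sq (A : Matrix (Fin n) (Fin n) ℝ) (i : Fin n) :
    singularValues A i ^ 2 = (Matrix.isHermitian_conjTranspose_mul_self A).eigenvalues i :=
  Real.sq_sqrt (eig_tmul_nonneg A i)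

lemma sv_le_specNorm (A : Matrix (Fin n) (Fin n) ℝ) (i : Fin n) :
    singularValues A i ≤ specNorm A :=
  le_ciSup (Set.Finite.bddAbove (Set.finite_range _)) i

lemma specNorm_le' (A : Matrix (Fin n) (Fin n) ℝ) {c : ℝ} (hc : 0 ≤ c)
    (h : ∀ i, singularValues A i ≤ c) : specNorm A ≤ c :=
  Real.iSup_le h hc

/-- quadratic-form expansion through an orthogonal conjugation of a diagonal matrix -/
lemma dot_diag_conj (Q : Matrix (Fin n) (Fin n) ℝ) (d : Fin n → ℝ) (x : Fin n → ℝ) :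
    x ⬝ᵥ ((Q * Matrix.diagonal d * Qᵀ) *ᵥ x) = ∑ i, d i * ((Qᵀ *ᵥ x) i)^2 := by
  rw [← Matrix.mulVec_mulVec, ← Matrix.mulVec_mulVec, Matrix.dotProduct_mulVec,
    ← Matrix.mulVec_transpose]
  simp only [dotProduct, Matrix.mulVec_diagonal]
  exact Finset.sum_congr rfl fun i _ => by ring

lemma dot_self_conj (Q : Matrix (Fin n) (Fin n) ℝ) (hQ : Qᵀ * Q = 1) (x : Fin n → ℝ) :
    x ⬝ᵥ x = ∑ i, ((Qᵀ *ᵥ x) i)^2 := by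
  have hQQt : Q * Qᵀ = 1 := mul_eq_one_comm.mp hQ
  have h1 : Q * Matrix.diagonal (fun _ : Fin n => (1:ℝ)) * Qᵀ = 1 := by
    rw [Matrix.diagonal_one, Matrix.mul_one, hQQt]
  have := dot_diag_conj Q (fun _ => (1:ℝ)) x
  rw [h1] at this
  simpa using this

/-- If the spectral norm is at most 1 then `‖A x‖² ≤ ‖x‖²`. -/
lemma mulVec_sq_le {A : Matrix (Fin n) (Fin n) ℝ} (h1 : specNorm A ≤ 1) (x : Fin n → ℝ) :
    (A *ᵥ x) ⬝ᵥ (A *ᵥ x) ≤ x ⬝ᵥ x := by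
  have hM := Matrix.isHermitian_conjTranspose_mul_self A
  obtain ⟨Q, hQ, hdec⟩ := hermitian_decomp hM
  have heig : ∀ i, hM.eigenvalues i ≤ 1 := by
    intro i
    have h2 : singularValues A i ≤ 1 := le_trans (sv_le_specNorm A i) h1
    have := sv_sq A i
    nlinarith [sv_nonneg A i]
  rw [← dot_tmul A x, hdec, dot_diag_conj, dot_self_conj Q hQ x]
  apply Finset.sum_le_sum
  intro i _
  nlinarith [sq_nonneg ((Qᵀ *ᵥ x) i), heig i]

/-- Conversely, the quadratic bound gives a spectral norm bound. -/
lemma specNorm_le_one {A : Matrix (Fin n) (Fin n) ℝ}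
    (h : ∀ x, (A *ᵥ x) ⬝ᵥ (A *ᵥ x) ≤ x ⬝ᵥ x) : specNorm A ≤ 1 := by
  apply specNorm_le' A zero_le_one
  intro i
  have hM := Matrix.isHermitian_conjTranspose_mul_self A
  set v : Fin n → ℝ := ⇑(hM.eigenvectorBasis i) with hv
  have h1 : hM.eigenvalues i = (A *ᵥ v) ⬝ᵥ (A *ᵥ v) := by
    rw [eig_eq_dot hM i, dot_tmul A v]
  have h2 : v ⬝ᵥ v = 1 := by
    have := eigbasis_dot hM i i
    rwa [if_pos rfl] at this
  have h3 : hM.eigenvalues i ≤ 1 := by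
    rw [h1]
    calc (A *ᵥ v) ⬝ᵥ (A *ᵥ v) ≤ v ⬝ᵥ v := h v
      _ = 1 := h2
  rw [singularValues]
  calc Real.sqrt _ ≤ Real.sqrt 1 := Real.sqrt_le_sqrt h3
    _ = 1 := Real.sqrt_one

lemma sum_fin_pad {r : ℕ} (h : r ≤ n) (f : Fin n → ℝ)
    (hf : ∀ j : Fin n, ¬ (j : ℕ) < r → f j = 0) :
    ∑ j, f j = ∑ i : Fin r, f (Fin.castLE h i) := by
  classical
  have h1 : ∑ x ∈ Finset.univ.map ⟨Fin.castLE h, Fin.castLE_injective h⟩, f x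
      = ∑ i : Fin r, f (Fin.castLE h i) := by
    rw [Finset.sum_map]
    rfl
  rw [← h1]
  symm
  apply Finset.sum_subset (Finset.subset_univ _)
  intro x _ hx
  apply hf
  intro hlt
  apply hx
  simp only [Finset.mem_map, Finset.mem_univ, Function.Embedding.coeFn_mk, true_and]
  exact ⟨⟨x, hlt⟩, Fin.ext rfl⟩

lemma nuclearNorm_eq_of_decomp (A B : Matrix (Fin n) (Fin n) ℝ) (d : Fin n → ℝ)
    (hB : Bᵀ * B = 1) (hd : Aᴴ * A = B * Matrix.diagonal d * Bᵀ) :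
    nuclearNorm A = ∑ i, Real.sqrt (d i) := by
  rw [nuclearNorm]
  exact sum_eig (Matrix.isHermitian_conjTranspose_mul_self A) B d hB hd Real.sqrt

/-- nuclear norm of a compact SVD -/
lemma nuclearNorm_svd {r : ℕ} (hrn : r ≤ n) (U V : Matrix (Fin n) (Fin r) ℝ) (σ : Fin r → ℝ)
    (hU : Uᵀ * U = 1) (hV : Vᵀ * V = 1) (hσ : ∀ i, 0 ≤ σ i) :
    nuclearNorm (U * Matrix.diagonal σ * Vᵀ) = ∑ i, σ i := by
  classical
  set A := U * Matrix.diagonal σ * Vᵀ with hA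
  -- columns of V as vectors in EuclideanSpace
  set col : Fin r → EuclideanSpace ℝ (Fin n) := fun a => WithLp.toLp 2 (fun i => V i a) with hcol
  have hVdot : ∀ a b : Fin r, (fun i => V i a) ⬝ᵥ (fun i => V i b) = if a = b then (1:ℝ) else 0 := by
    intro a b
    have : (Vᵀ * V) a b = (1 : Matrix (Fin r) (Fin r) ℝ) a b := by rw [hV]
    simpa [Matrix.mul_apply, dotProduct, Matrix.one_apply] using this
  set s : Set (Fin n) := {j | (j : ℕ) < r} with hs
  set v' : Fin n → EuclideanSpace ℝ (Fin n) :=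
    fun j => if h : (j : ℕ) < r then col ⟨j, h⟩ else 0 with hv'
  have hortho : Orthonormal ℝ (s.restrict v') := by
    rw [orthonormal_iff_ite]
    rintro ⟨i, hi⟩ ⟨j, hj⟩
    have hi' : (i : ℕ) < r := hi
    have hj' : (j : ℕ) < r := hj
    show inner ℝ (v' i) (v' j) = _
    simp only [Set.restrict_apply, hv', dif_pos hi', dif_pos hj']
    have : (inner ℝ (col ⟨i, hi'⟩) (col ⟨j, hj'⟩) : ℝ)
        = (fun k => V k ⟨i, hi'⟩) ⬝ᵥ (fun k => V k ⟨j, hj'⟩) := by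
      rw [PiLp.inner_apply]
      simp [dotProduct, RCLike.inner_apply, hcol]
      exact Finset.sum_congr rfl fun _ _ => mul_comm _ _
    rw [this, hVdot]
    by_cases hij : i = j
    · subst hij; simp
    · have h1 : (⟨i, hi'⟩ : Fin r) ≠ ⟨j, hj'⟩ := fun hc => hij (by
        have := congrArg (Fin.val) hc; exact Fin.ext this)
      have h2 : (⟨i, hi⟩ : s) ≠ ⟨j, hj⟩ := fun hc => hij (by
        have := congrArg Subtype.val hc; exact Fin.ext (congrArg Fin.val this))
      rw [if_neg h1, if_neg h2]
  obtain ⟨b, hb⟩ := hortho.exists_orthonormalBasis_extension_of_card_eq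
    (by simp [finrank_euclideanSpace])
  set B : Matrix (Fin n) (Fin n) ℝ := fun i j => b j i with hB
  have hBcol : ∀ (j : Fin n) (h : (j : ℕ) < r), ∀ i, B i j = V i ⟨j, h⟩ := by
    intro j h i
    have hbj := hb j h
    rw [hv'] at hbj
    simp only [dif_pos h] at hbj
    show b j i = _
    rw [hbj]
  have hBorth : Bᵀ * B = 1 := by
    ext a c
    have h := b.orthonormal
    rw [orthonormal_iff_ite] at h
    have := h a c
    rw [PiLp.inner_apply] at this
    simp only [RCLike.inner_apply, conj_trivial] at this
    simp only [Matrix.mul_apply, Matrix.transpose_apply, Matrix.one_apply, hB]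
    rw [← this]
    show ∑ x, (b a).ofLp x * (b c).ofLp x = _
    exact Finset.sum_congr rfl fun _ _ => mul_comm _ _
  set d : Fin n → ℝ := fun j => if h : (j : ℕ) < r then (σ ⟨j, h⟩)^2 else 0 with hd
  have hAA : Aᴴ * A = B * Matrix.diagonal d * Bᵀ := by
    have hAt : Aᴴ = V * Matrix.diagonal σ * Uᵀ := by
      rw [hA, Matrix.conjTranspose_eq_transpose_of_trivial, Matrix.transpose_mul,
        Matrix.transpose_mul, Matrix.transpose_transpose, Matrix.diagonal_transpose,
        ← Matrix.mul_assoc]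
    have hmid : Aᴴ * A = V * Matrix.diagonal (fun i => σ i ^ 2) * Vᵀ := by
      rw [hAt, hA]
      have h5 : V * Matrix.diagonal σ * Uᵀ * (U * Matrix.diagonal σ * Vᵀ)
          = V * (Matrix.diagonal σ * (Uᵀ * U * Matrix.diagonal σ)) * Vᵀ := by
        simp only [Matrix.mul_assoc]
      rw [h5, hU, Matrix.one_mul, Matrix.diagonal_mul_diagonal]
      congr 2
      ext i
      ring
    rw [hmid]
    ext i k
    have lhs_eq : (V * Matrix.diagonal (fun i => σ i ^ 2) * Vᵀ) i k
        = ∑ j : Fin r, V i j * σ j ^ 2 * V k j := by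
      rw [Matrix.mul_apply]
      apply Finset.sum_congr rfl
      intro j _
      rw [Matrix.mul_diagonal, Matrix.transpose_apply]
    have rhs_eq : (B * Matrix.diagonal d * Bᵀ) i k = ∑ j : Fin n, B i j * d j * B k j := by
      rw [Matrix.mul_apply]
      apply Finset.sum_congr rfl
      intro j _
      rw [Matrix.mul_diagonal, Matrix.transpose_apply]
    rw [lhs_eq, rhs_eq]
    rw [sum_fin_pad hrn (fun j => B i j * d j * B k j) (by
      intro j hj
      simp [hd, dif_neg hj])]
    apply Finset.sum_congr rfl
    intro a _
    have hlt : ((Fin.castLE hrn a : Fin n) : ℕ) < r := a.2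
    have heq : (⟨((Fin.castLE hrn a : Fin n) : ℕ), hlt⟩ : Fin r) = a := Fin.ext rfl
    rw [hBcol _ hlt i, hBcol _ hlt k, heq]
    have hda : d (Fin.castLE hrn a) = σ a ^ 2 := by
      rw [hd]
      simp only [dif_pos hlt, heq]
    rw [hda]
  rw [nuclearNorm_eq_of_decomp A B d hBorth hAA]
  rw [sum_fin_pad hrn (fun j => Real.sqrt (d j)) (by
    intro j hj
    simp [hd, dif_neg hj])]
  apply Finset.sum_congr rfl
  intro a _
  have hlt : ((Fin.castLE hrn a : Fin n) : ℕ) < r := a.2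
  have heq : (⟨((Fin.castLE hrn a : Fin n) : ℕ), hlt⟩ : Fin r) = a := Fin.ext rfl
  have hda : d (Fin.castLE hrn a) = σ a ^ 2 := by
    rw [hd]
    simp only [dif_pos hlt, heq]
  rw [hda, Real.sqrt_sq (hσ a)]

lemma dot_self_nonneg (x : Fin n → ℝ) : 0 ≤ x ⬝ᵥ x :=
  Finset.sum_nonneg fun i _ => mul_self_nonneg _

lemma frobInner_eq_trace (A B : Matrix (Fin n) (Fin n) ℝ) :
    frobInner A B = (Aᵀ * B).trace := by
  rw [frobInner, Matrix.trace]
  rw [Finset.sum_comm]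
  apply Finset.sum_congr rfl
  intro j _
  simp [Matrix.diag, Matrix.mul_apply]

lemma frobInner_sub_right (A B C : Matrix (Fin n) (Fin n) ℝ) :
    frobInner A (B - C) = frobInner A B - frobInner A C := by
  simp [frobInner, mul_sub, Finset.sum_sub_distrib]

lemma dot_le_sqrt (x y : Fin n → ℝ) :
    x ⬝ᵥ y ≤ Real.sqrt (x ⬝ᵥ x) * Real.sqrt (y ⬝ᵥ y) := by
  have h := Finset.sum_mul_sq_le_sq_mul_sq Finset.univ x y
  have h2 : x ⬝ᵥ y ≤ |x ⬝ᵥ y| := le_abs_self _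
  have h3 : |x ⬝ᵥ y| = Real.sqrt ((x ⬝ᵥ y)^2) := (Real.sqrt_sq_eq_abs _).symm
  have h4 : Real.sqrt ((x ⬝ᵥ y)^2) ≤ Real.sqrt ((∑ i, x i ^ 2) * ∑ i, y i ^ 2) := by
    apply Real.sqrt_le_sqrt
    simpa [dotProduct] using h
  have h5 : Real.sqrt ((∑ i, x i ^ 2) * ∑ i, y i ^ 2)
      = Real.sqrt (x ⬝ᵥ x) * Real.sqrt (y ⬝ᵥ y) := by
    rw [Real.sqrt_mul (Finset.sum_nonneg fun i _ => sq_nonneg _)]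
    congr 2 <;> simp [dotProduct, sq]
  linarith

/-- the eigenvalue picture of a rank-one matrix -/
lemma nuclearNorm_vecMulVec (x y : Fin n → ℝ) :
    nuclearNorm (Matrix.vecMulVec x y) = Real.sqrt (x ⬝ᵥ x) * Real.sqrt (y ⬝ᵥ y) := by
  classical
  set M := Matrix.vecMulVec x y with hM
  have hP := Matrix.isHermitian_conjTranspose_mul_self M
  set lam := hP.eigenvalues with hlam
  set c : ℝ := (x ⬝ᵥ x) * (y ⬝ᵥ y) with hc
  -- P = (x⬝x) • vecMulVec y y
  have hPform : Mᴴ * M = (x ⬝ᵥ x) • Matrix.vecMulVec y y := by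
    ext j k
    simp only [Matrix.mul_apply, Matrix.conjTranspose_apply, Matrix.vecMulVec_apply,
      Matrix.smul_apply, smul_eq_mul, star_trivial, hM]
    rw [dotProduct, Finset.sum_mul]
    apply Finset.sum_congr rfl
    intro i _
    ring
  -- trace identities
  obtain ⟨Q, hQ, hdec⟩ := hermitian_decomp hP
  have htr1 : (Mᴴ * M).trace = ∑ i, lam i := by
    rw [hdec, Matrix.trace_mul_comm, ← Matrix.mul_assoc, hQ, Matrix.one_mul,
      Matrix.trace_diagonal]
  have htr2 : ((Mᴴ * M) * (Mᴴ * M)).trace = ∑ i, (lam i)^2 := by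
    rw [hdec]
    have : Q * Matrix.diagonal lam * Qᵀ * (Q * Matrix.diagonal lam * Qᵀ)
        = Q * (Matrix.diagonal lam * ((Qᵀ * Q) * Matrix.diagonal lam)) * Qᵀ := by
      simp only [Matrix.mul_assoc]
    rw [this, hQ, Matrix.one_mul, Matrix.diagonal_mul_diagonal, Matrix.trace_mul_comm,
      ← Matrix.mul_assoc, hQ, Matrix.one_mul, Matrix.trace_diagonal]
    apply Finset.sum_congr rfl
    intro i _
    ring
  have hyy : (Matrix.vecMulVec y y).trace = y ⬝ᵥ y := by
    simp [Matrix.trace, Matrix.vecMulVec_apply, dotProduct, Matrix.diag]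
  have hsum1 : ∑ i, lam i = c := by
    rw [← htr1, hPform, Matrix.trace_smul, hyy, smul_eq_mul, hc]
  have hvv : Matrix.vecMulVec y y * Matrix.vecMulVec y y = (y ⬝ᵥ y) • Matrix.vecMulVec y y := by
    ext j k
    simp only [Matrix.mul_apply, Matrix.vecMulVec_apply, Matrix.smul_apply, smul_eq_mul]
    rw [dotProduct, Finset.sum_mul]
    apply Finset.sum_congr rfl
    intro i _
    ring
  have hsum2 : ∑ i, (lam i)^2 = c^2 := by
    rw [← htr2, hPform]
    rw [Matrix.smul_mul, Matrix.mul_smul, hvv, Matrix.trace_smul, Matrix.trace_smul,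
      Matrix.trace_smul, hyy]
    simp only [smul_eq_mul, hc]
    ring
  have hnonneg : ∀ i, 0 ≤ lam i := fun i => eig_tmul_nonneg M i
  -- pairwise products vanish
  have hpair : ∀ i j, i ≠ j → lam i * lam j = 0 := by
    intro i j hij
    have hdouble : ∑ i, ∑ j, lam i * lam j = c^2 := by
      rw [← Finset.sum_mul_sum]
      rw [hsum1]
      ring
    have hsplit : ∀ i : Fin n, ∑ j, lam i * lam j
        = lam i ^ 2 + ∑ j ∈ Finset.univ.erase i, lam i * lam j := by
      intro i
      rw [← Finset.add_sum_erase _ _ (Finset.mem_univ i)]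
      ring_nf
    have hS : ∑ i, ∑ j ∈ Finset.univ.erase i, lam i * lam j = 0 := by
      have : ∑ i, ∑ j, lam i * lam j
          = ∑ i, (lam i ^ 2 + ∑ j ∈ Finset.univ.erase i, lam i * lam j) := by
        exact Finset.sum_congr rfl fun i _ => hsplit i
      rw [hdouble, Finset.sum_add_distrib, hsum2] at this
      linarith
    have hterm : ∀ i ∈ Finset.univ, (0:ℝ) ≤ ∑ j ∈ Finset.univ.erase i, lam i * lam j :=
      fun i _ => Finset.sum_nonneg fun j _ => mul_nonneg (hnonneg i) (hnonneg j)
    have h0 := (Finset.sum_eq_zero_iff_of_nonneg hterm).mp hS i (Finset.mem_univ i)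
    have hterm2 : ∀ j ∈ Finset.univ.erase i, (0:ℝ) ≤ lam i * lam j :=
      fun j _ => mul_nonneg (hnonneg i) (hnonneg j)
    exact (Finset.sum_eq_zero_iff_of_nonneg hterm2).mp h0 j (Finset.mem_erase.mpr ⟨hij.symm, Finset.mem_univ j⟩)
  -- conclude
  have hsq : (∑ i, Real.sqrt (lam i))^2 = c := by
    rw [sq, Finset.sum_mul_sum]
    have : ∀ i : Fin n, ∑ j, Real.sqrt (lam i) * Real.sqrt (lam j)
        = lam i := by
      intro i
      rw [← Finset.add_sum_erase _ _ (Finset.mem_univ i)]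
      rw [Real.mul_self_sqrt (hnonneg i)]
      have : ∑ j ∈ Finset.univ.erase i, Real.sqrt (lam i) * Real.sqrt (lam j) = 0 := by
        apply Finset.sum_eq_zero
        intro j hj
        rw [← Real.sqrt_mul (hnonneg i), hpair i j (by
          intro hc'
          exact (Finset.mem_erase.mp hj).1 hc'.symm), Real.sqrt_zero]
      rw [this, add_zero]
    rw [Finset.sum_congr rfl fun i _ => this i, hsum1]
  have hnn : 0 ≤ ∑ i, Real.sqrt (lam i) := Finset.sum_nonneg fun i _ => Real.sqrt_nonneg _
  have : nuclearNorm M = Real.sqrt c := by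
    rw [← hsq, Real.sqrt_sq hnn]
    rfl
  rw [this, hc, Real.sqrt_mul (dot_self_nonneg x)]

/-- duality: if `G` is a spectral-norm contraction then `⟨G, Y⟩ ≤ ‖Y‖_*`. -/
lemma frobInner_le_nuclearNorm (G Y : Matrix (Fin n) (Fin n) ℝ)
    (hG : ∀ x, (G *ᵥ x) ⬝ᵥ (G *ᵥ x) ≤ x ⬝ᵥ x) : frobInner G Y ≤ nuclearNorm Y := by
  classical
  have hY := Matrix.isHermitian_conjTranspose_mul_self Y
  set q : Fin n → Fin n → ℝ := fun k => ⇑(hY.eigenvectorBasis k) with hq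
  set B : Matrix (Fin n) (Fin n) ℝ := fun i k => q k i with hB
  have hBorth : Bᵀ * B = 1 := by
    ext a c
    have := eigbasis_dot hY a c
    simp only [Matrix.mul_apply, Matrix.transpose_apply, Matrix.one_apply, hB]
    rw [← this]
    rfl
  have hBBt : B * Bᵀ = 1 := mul_eq_one_comm.mp hBorth
  have hcolG : ∀ k, (fun i => (G * B) i k) = G *ᵥ q k := by
    intro k
    funext i
    simp [Matrix.mul_apply, Matrix.mulVec, dotProduct, hB]
    rfl
  have key : frobInner G Y = ∑ k, (G *ᵥ q k) ⬝ᵥ (Y *ᵥ q k) := by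
    have h1 : frobInner (G * B) (Y * B) = frobInner G Y := by
      rw [frobInner_eq_trace, frobInner_eq_trace]
      have h2 : (G * B)ᵀ * (Y * B) = Bᵀ * (Gᵀ * Y * B) := by
        rw [Matrix.transpose_mul]
        simp only [Matrix.mul_assoc]
      rw [h2, Matrix.trace_mul_comm, Matrix.mul_assoc (Gᵀ * Y) B Bᵀ, hBBt, Matrix.mul_one]
    rw [← h1, frobInner]
    rw [Finset.sum_comm]
    apply Finset.sum_congr rfl
    intro k _
    rw [dotProduct]
    apply Finset.sum_congr rfl
    intro i _
    simp [Matrix.mul_apply, Matrix.mulVec, dotProduct, hB]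
    rfl
  rw [key, nuclearNorm]
  apply Finset.sum_le_sum
  intro k _
  have hq1 : q k ⬝ᵥ q k = 1 := by
    have := eigbasis_dot hY k k
    rwa [if_pos rfl] at this
  have hGq : Real.sqrt ((G *ᵥ q k) ⬝ᵥ (G *ᵥ q k)) ≤ 1 := by
    calc Real.sqrt ((G *ᵥ q k) ⬝ᵥ (G *ᵥ q k)) ≤ Real.sqrt (q k ⬝ᵥ q k) :=
          Real.sqrt_le_sqrt (hG (q k))
      _ = 1 := by rw [hq1, Real.sqrt_one]
  have hYq : Real.sqrt ((Y *ᵥ q k) ⬝ᵥ (Y *ᵥ q k)) = singularValues Y k := by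
    rw [← dot_tmul Y (q k), ← eig_eq_dot hY k]
    rfl
  calc (G *ᵥ q k) ⬝ᵥ (Y *ᵥ q k)
      ≤ Real.sqrt ((G *ᵥ q k) ⬝ᵥ (G *ᵥ q k)) * Real.sqrt ((Y *ᵥ q k) ⬝ᵥ (Y *ᵥ q k)) :=
        dot_le_sqrt _ _
    _ ≤ 1 * singularValues Y k := by
        rw [hYq]
        apply mul_le_mul_of_nonneg_right hGq (sv_nonneg Y k)
    _ = singularValues Y k := one_mul _

lemma dot_mulVec_left {m k : ℕ} (A : Matrix (Fin m) (Fin k) ℝ) (x : Fin k → ℝ) (y : Fin m → ℝ) :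
    (A *ᵥ x) ⬝ᵥ y = x ⬝ᵥ (Aᵀ *ᵥ y) := by
  rw [Matrix.dotProduct_mulVec, Matrix.vecMul_transpose, dotProduct_comm]

lemma dot_mulVec_mulVec {m k l : ℕ} (A : Matrix (Fin m) (Fin k) ℝ) (B : Matrix (Fin m) (Fin l) ℝ)
    (x : Fin k → ℝ) (y : Fin l → ℝ) :
    (A *ᵥ x) ⬝ᵥ (B *ᵥ y) = x ⬝ᵥ ((Aᵀ * B) *ᵥ y) := by
  rw [dot_mulVec_left, Matrix.mulVec_mulVec]

lemma eq_of_dot_sub {u w : Fin n → ℝ} (h : (u - w) ⬝ᵥ (u - w) ≤ 0) : u = w := by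
  funext i
  have hterm : ∀ j ∈ Finset.univ, (0:ℝ) ≤ (u j - w j) * (u j - w j) :=
    fun j _ => mul_self_nonneg _
  have h0 : (u - w) ⬝ᵥ (u - w) = 0 := le_antisymm h (Finset.sum_nonneg hterm)
  have := (Finset.sum_eq_zero_iff_of_nonneg hterm).mp h0 i (Finset.mem_univ i)
  have h2 : u i - w i = 0 := by nlinarith
  linarith

lemma Vt_perp {r : ℕ} (V : Matrix (Fin n) (Fin r) ℝ) (hV : Vᵀ * V = 1) (x : Fin n → ℝ) :
    Vᵀ *ᵥ (x - V *ᵥ (Vᵀ *ᵥ x)) = 0 := by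
  rw [Matrix.mulVec_sub, Matrix.mulVec_mulVec, hV, Matrix.one_mulVec, sub_self]

lemma proj_dot {r : ℕ} (V : Matrix (Fin n) (Fin r) ℝ) (hV : Vᵀ * V = 1) (x : Fin n → ℝ) :
    (x - V *ᵥ (Vᵀ *ᵥ x)) ⬝ᵥ (x - V *ᵥ (Vᵀ *ᵥ x)) = x ⬝ᵥ x - (Vᵀ *ᵥ x) ⬝ᵥ (Vᵀ *ᵥ x) := by
  set y := Vᵀ *ᵥ x with hy
  have h1 : (V *ᵥ y) ⬝ᵥ (V *ᵥ y) = y ⬝ᵥ y := by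
    rw [dot_mulVec_mulVec, hV, Matrix.one_mulVec]
  have h2 : x ⬝ᵥ (V *ᵥ y) = y ⬝ᵥ y := by
    rw [dotProduct_comm, dot_mulVec_left, ← hy]
  have h3 : (V *ᵥ y) ⬝ᵥ x = y ⬝ᵥ y := by rw [dotProduct_comm, h2]
  rw [sub_dotProduct, dotProduct_sub, dotProduct_sub, h1, h2, h3]
  ring

lemma frobInner_vecMulVec (G : Matrix (Fin n) (Fin n) ℝ) (u q : Fin n → ℝ) :
    frobInner G (Matrix.vecMulVec u q) = u ⬝ᵥ (G *ᵥ q) := by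
  rw [frobInner, dotProduct]
  apply Finset.sum_congr rfl
  intro i _
  rw [Matrix.mulVec, dotProduct, Finset.mul_sum]
  apply Finset.sum_congr rfl
  intro j _
  rw [Matrix.vecMulVec_apply]
  ring

lemma frobInner_vecMulVec' (G : Matrix (Fin n) (Fin n) ℝ) (p w : Fin n → ℝ) :
    frobInner G (Matrix.vecMulVec p w) = w ⬝ᵥ (Gᵀ *ᵥ p) := by
  rw [frobInner, Finset.sum_comm, dotProduct]
  apply Finset.sum_congr rfl
  intro j _
  rw [Matrix.mulVec, dotProduct, Finset.mul_sum]
  apply Finset.sum_congr rfl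
  intro i _
  rw [Matrix.vecMulVec_apply, Matrix.transpose_apply]
  ring

/-- spectral norm bound for a matrix via the subgradient-type inequality -/
lemma specNorm_le_one_of_frob {G : Matrix (Fin n) (Fin n) ℝ}
    (h : ∀ Y, frobInner G Y ≤ nuclearNorm Y) : specNorm G ≤ 1 := by
  apply specNorm_le' G zero_le_one
  intro i
  have hM := Matrix.isHermitian_conjTranspose_mul_self G
  set q : Fin n → ℝ := ⇑(hM.eigenvectorBasis i) with hqdef
  have hq1 : q ⬝ᵥ q = 1 := by
    have := eigbasis_dot hM i i
    rwa [if_pos rfl] at this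
  have hlam : (G *ᵥ q) ⬝ᵥ (G *ᵥ q) = hM.eigenvalues i := by
    rw [← dot_tmul G q, ← eig_eq_dot hM i]
  have hfr : frobInner G (Matrix.vecMulVec (G *ᵥ q) q) = hM.eigenvalues i := by
    rw [frobInner_vecMulVec, ← hlam]
  have hnn : nuclearNorm (Matrix.vecMulVec (G *ᵥ q) q) = singularValues G i := by
    rw [nuclearNorm_vecMulVec, hlam, hq1, Real.sqrt_one, mul_one]
    rfl
  have := h (Matrix.vecMulVec (G *ᵥ q) q)
  rw [hfr, hnn] at this
  have hsv := sv_nonneg G i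
  have hsq := sv_sq G i
  nlinarith

lemma nuclearNorm_zero : nuclearNorm (0 : Matrix (Fin n) (Fin n) ℝ) = 0 := by
  have h : (0 : Matrix (Fin n) (Fin n) ℝ)ᴴ * 0
      = 1 * Matrix.diagonal (fun _ : Fin n => (0:ℝ)) * (1 : Matrix (Fin n) (Fin n) ℝ)ᵀ := by
    simp
  rw [nuclearNorm_eq_of_decomp 0 1 _ (by simp) h]
  simp

lemma frobInner_zero (G : Matrix (Fin n) (Fin n) ℝ) : frobInner G 0 = 0 := by
  simp [frobInner]

lemma col_dot {r : ℕ} (U : Matrix (Fin n) (Fin r) ℝ) (hU : Uᵀ * U = 1) (j : Fin r) :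
    (fun i => U i j) ⬝ᵥ (fun i => U i j) = 1 := by
  have : (Uᵀ * U) j j = (1 : Matrix (Fin r) (Fin r) ℝ) j j := by rw [hU]
  simpa [Matrix.mul_apply, dotProduct, Matrix.one_apply] using this

lemma frob_svd {r : ℕ} (G : Matrix (Fin n) (Fin n) ℝ) (U V : Matrix (Fin n) (Fin r) ℝ)
    (σ : Fin r → ℝ) :
    frobInner G (U * Matrix.diagonal σ * Vᵀ)
      = ∑ j, σ j * ((fun i => U i j) ⬝ᵥ (G *ᵥ (fun i => V i j))) := by
  rw [frobInner_eq_trace]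
  have h1 : Gᵀ * (U * Matrix.diagonal σ * Vᵀ) = (Gᵀ * U * Matrix.diagonal σ) * Vᵀ := by
    simp only [Matrix.mul_assoc]
  rw [h1, Matrix.trace_mul_comm]
  rw [Matrix.trace]
  apply Finset.sum_congr rfl
  intro j _
  rw [Matrix.diag]
  rw [← Matrix.mul_assoc, Matrix.mul_diagonal]
  simp only [Matrix.transpose_apply, Matrix.mul_apply, Matrix.mulVec, dotProduct,
    Finset.sum_mul, Finset.mul_sum]
  rw [Finset.sum_comm]
  apply Finset.sum_congr rfl
  intro i _
  apply Finset.sum_congr rfl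
  intro a _
  ring

lemma specNorm_transpose_le_one_of_frob {G : Matrix (Fin n) (Fin n) ℝ}
    (h : ∀ Y, frobInner G Y ≤ nuclearNorm Y) : specNorm Gᵀ ≤ 1 := by
  apply specNorm_le' Gᵀ zero_le_one
  intro i
  have hM := Matrix.isHermitian_conjTranspose_mul_self Gᵀ
  set p : Fin n → ℝ := ⇑(hM.eigenvectorBasis i) with hpdef
  have hp1 : p ⬝ᵥ p = 1 := by
    have := eigbasis_dot hM i i
    rwa [if_pos rfl] at this
  have hlam : (Gᵀ *ᵥ p) ⬝ᵥ (Gᵀ *ᵥ p) = hM.eigenvalues i := by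
    rw [← dot_tmul Gᵀ p, ← eig_eq_dot hM i]
  have hfr : frobInner G (Matrix.vecMulVec p (Gᵀ *ᵥ p)) = hM.eigenvalues i := by
    rw [frobInner_vecMulVec', ← hlam]
  have hnn : nuclearNorm (Matrix.vecMulVec p (Gᵀ *ᵥ p)) = singularValues Gᵀ i := by
    rw [nuclearNorm_vecMulVec, hlam, hp1, Real.sqrt_one, one_mul]
    rfl
  have := h (Matrix.vecMulVec p (Gᵀ *ᵥ p))
  rw [hfr, hnn] at this
  have hsv := sv_nonneg Gᵀ i
  have hsq := sv_sq Gᵀ i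
  nlinarith

end NuclearAux

open NuclearAux in
/-- subdifferential of the nuclear norm at a matrix `Z` with compact SVD
`Z = U Σ Vᵀ` (U, V with orthonormal columns, Σ diagonal positive, `r = rank Z`):
`∂‖Z‖_* = { U Vᵀ + W : Uᵀ W = 0, W V = 0, ‖W‖₂ ≤ 1 }`. -/
theorem subdifferential_nuclearNorm (n r : ℕ) (Z : Matrix (Fin n) (Fin n) ℝ)
    (U V : Matrix (Fin n) (Fin r) ℝ) (σ : Fin r → ℝ)
    (hU : Uᵀ * U = 1) (hV : Vᵀ * V = 1) (hσ : ∀ i, 0 < σ i)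
    (hZ : Z = U * Matrix.diagonal σ * Vᵀ) (hr : Z.rank = r) :
    {G : Matrix (Fin n) (Fin n) ℝ |
        ∀ Y : Matrix (Fin n) (Fin n) ℝ,
          nuclearNorm Z + frobInner G (Y - Z) ≤ nuclearNorm Y} =
      {G : Matrix (Fin n) (Fin n) ℝ |
        ∃ W : Matrix (Fin n) (Fin n) ℝ,
          Uᵀ * W = 0 ∧ W * V = 0 ∧ specNorm W ≤ 1 ∧ G = U * Vᵀ + W} := by
  have hrn : r ≤ n := by
    rw [← hr]
    simpa using Matrix.rank_le_width Z
  have hNZ : nuclearNorm Z = ∑ j, σ j := by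
    rw [hZ]
    exact nuclearNorm_svd hrn U V σ hU hV (fun i => (hσ i).le)
  ext G
  simp only [Set.mem_setOf_eq]
  constructor
  · -- hard direction: subgradient ⇒ structure
    intro h
    -- frobInner G Z = ∑ σ
    have hN0 : nuclearNorm (0 : Matrix (Fin n) (Fin n) ℝ) = 0 := nuclearNorm_zero
    have h0 := h 0
    rw [hN0, frobInner_sub_right, frobInner_zero] at h0
    have h2 := h (Z + Z)
    have hZZ : Z + Z = U * Matrix.diagonal (fun j => σ j + σ j) * Vᵀ := by
      have : Matrix.diagonal (fun j => σ j + σ j) = Matrix.diagonal σ + Matrix.diagonal σ := by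
        rw [← Matrix.diagonal_add]
      rw [this, Matrix.mul_add, Matrix.add_mul, ← hZ]
    have hN2 : nuclearNorm (Z + Z) = ∑ j, (σ j + σ j) := by
      rw [hZZ]
      exact nuclearNorm_svd hrn U V _ hU hV (fun i => by linarith [(hσ i).le])
    rw [hN2, add_sub_cancel_right] at h2
    have hGZ : frobInner G Z = ∑ j, σ j := by
      rw [Finset.sum_add_distrib] at h2
      rw [hNZ] at h0 h2
      linarith
    -- linear bound
    have hGY : ∀ Y, frobInner G Y ≤ nuclearNorm Y := by
      intro Y
      have := h Y
      rw [frobInner_sub_right, hNZ, hGZ] at this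
      linarith
    -- spectral norm bounds
    have hspec : specNorm G ≤ 1 := specNorm_le_one_of_frob hGY
    have hspecT : specNorm Gᵀ ≤ 1 := specNorm_transpose_le_one_of_frob hGY
    have hGq := fun x => mulVec_sq_le hspec x
    have hGtq := fun x => mulVec_sq_le hspecT x
    -- column analysis
    set u : Fin r → Fin n → ℝ := fun j => fun i => U i j with hu
    set v : Fin r → Fin n → ℝ := fun j => fun i => V i j with hv
    set c : Fin r → ℝ := fun j => u j ⬝ᵥ (G *ᵥ v j) with hc
    have hsum : ∑ j, σ j * c j = ∑ j, σ j := by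
      rw [← hGZ, hZ, frob_svd]
    have hudot : ∀ j, u j ⬝ᵥ u j = 1 := fun j => col_dot U hU j
    have hvdot : ∀ j, v j ⬝ᵥ v j = 1 := fun j => col_dot V hV j
    have hc1 : ∀ j, c j ≤ 1 := by
      intro j
      have hcs := dot_le_sqrt (u j) (G *ᵥ v j)
      have hGv : (G *ᵥ v j) ⬝ᵥ (G *ᵥ v j) ≤ 1 := by
        calc (G *ᵥ v j) ⬝ᵥ (G *ᵥ v j) ≤ v j ⬝ᵥ v j := hGq (v j)
          _ = 1 := hvdot j
      have h1 : Real.sqrt (u j ⬝ᵥ u j) = 1 := by rw [hudot j, Real.sqrt_one]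
      have h2' : Real.sqrt ((G *ᵥ v j) ⬝ᵥ (G *ᵥ v j)) ≤ 1 := by
        calc Real.sqrt ((G *ᵥ v j) ⬝ᵥ (G *ᵥ v j)) ≤ Real.sqrt 1 := Real.sqrt_le_sqrt hGv
          _ = 1 := Real.sqrt_one
      have h3 : Real.sqrt ((G *ᵥ v j) ⬝ᵥ (G *ᵥ v j)) ≥ 0 := Real.sqrt_nonneg _
      rw [hc]
      calc u j ⬝ᵥ (G *ᵥ v j) ≤ _ := hcs
        _ ≤ 1 := by rw [h1, one_mul]; exact h2'
    have hceq : ∀ j, c j = 1 := by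
      intro j
      have hzero : ∑ j, σ j * (1 - c j) = 0 := by
        simp only [mul_sub, Finset.sum_sub_distrib, mul_one]
        rw [hsum]
        ring
      have hterm : ∀ j ∈ Finset.univ, (0:ℝ) ≤ σ j * (1 - c j) :=
        fun j _ => mul_nonneg (hσ j).le (by linarith [hc1 j])
      have := (Finset.sum_eq_zero_iff_of_nonneg hterm).mp hzero j (Finset.mem_univ j)
      have hσj := hσ j
      have : 1 - c j = 0 := by
        rcases mul_eq_zero.mp this with h' | h'
        · linarith
        · exact h'
      linarith
    -- G *ᵥ v j = u j
    have hGveq : ∀ j, G *ᵥ v j = u j := by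
      intro j
      symm
      apply eq_of_dot_sub
      have e1 : u j ⬝ᵥ (G *ᵥ v j) = 1 := hceq j
      have e2 : (G *ᵥ v j) ⬝ᵥ u j = 1 := by rw [dotProduct_comm]; exact e1
      have e3 : (G *ᵥ v j) ⬝ᵥ (G *ᵥ v j) ≤ 1 := by
        calc (G *ᵥ v j) ⬝ᵥ (G *ᵥ v j) ≤ v j ⬝ᵥ v j := hGq (v j)
          _ = 1 := hvdot j
      rw [sub_dotProduct, dotProduct_sub, dotProduct_sub,
        hudot j, e1, e2]
      linarith
    have hGtueq : ∀ j, Gᵀ *ᵥ u j = v j := by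
      intro j
      symm
      apply eq_of_dot_sub
      have e1 : (Gᵀ *ᵥ u j) ⬝ᵥ v j = 1 := by
        rw [dot_mulVec_left, Matrix.transpose_transpose]
        exact hceq j
      have e2 : v j ⬝ᵥ (Gᵀ *ᵥ u j) = 1 := by rw [dotProduct_comm]; exact e1
      have e3 : (Gᵀ *ᵥ u j) ⬝ᵥ (Gᵀ *ᵥ u j) ≤ 1 := by
        calc (Gᵀ *ᵥ u j) ⬝ᵥ (Gᵀ *ᵥ u j) ≤ u j ⬝ᵥ u j := hGtq (u j)
          _ = 1 := hudot j
      rw [sub_dotProduct, dotProduct_sub, dotProduct_sub,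
        hvdot j, e1, e2]
      linarith
    have hGV : G * V = U := by
      ext i j
      have h5 := congrFun (hGveq j) i
      simpa [Matrix.mul_apply, Matrix.mulVec, dotProduct, hu, hv] using h5
    have hUtG : Uᵀ * G = Vᵀ := by
      ext j b
      have h5 := congrFun (hGtueq j) b
      simp only [Matrix.mulVec, dotProduct, Matrix.transpose_apply, hu, hv] at h5
      simp only [Matrix.mul_apply, Matrix.transpose_apply]
      rw [← h5]
      apply Finset.sum_congr rfl
      intro a _
      ring
    refine ⟨G - U * Vᵀ, ?_, ?_, ?_, ?_⟩
    · rw [Matrix.mul_sub, hUtG, ← Matrix.mul_assoc, hU, Matrix.one_mul, sub_self]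
    · rw [Matrix.sub_mul, hGV, Matrix.mul_assoc, hV, Matrix.mul_one, sub_self]
    · apply specNorm_le_one
      intro x
      set y := Vᵀ *ᵥ x with hy
      set x2 := x - V *ᵥ y with hx2
      have hWx : (G - U * Vᵀ) *ᵥ x = G *ᵥ x2 := by
        rw [Matrix.sub_mulVec, hx2, Matrix.mulVec_sub, Matrix.mulVec_mulVec, hGV,
          ← Matrix.mulVec_mulVec]
      rw [hWx]
      have h6 : x2 ⬝ᵥ x2 = x ⬝ᵥ x - y ⬝ᵥ y := proj_dot V hV x
      calc (G *ᵥ x2) ⬝ᵥ (G *ᵥ x2) ≤ x2 ⬝ᵥ x2 := hGq x2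
        _ ≤ x ⬝ᵥ x := by
            rw [h6]
            linarith [dot_self_nonneg y]
    · rw [add_sub_cancel]
  · -- easy direction
    rintro ⟨W, hUW, hWV, hWn, rfl⟩
    intro Y
    -- G V = U
    have hGV : (U * Vᵀ + W) * V = U := by
      rw [Matrix.add_mul, Matrix.mul_assoc, hV, Matrix.mul_one, hWV, add_zero]
    -- quadratic bound for G
    have hGq : ∀ x, ((U * Vᵀ + W) *ᵥ x) ⬝ᵥ ((U * Vᵀ + W) *ᵥ x) ≤ x ⬝ᵥ x := by
      intro x
      set y := Vᵀ *ᵥ x with hy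
      set x2 := x - V *ᵥ y with hx2
      have hGx : (U * Vᵀ + W) *ᵥ x = U *ᵥ y + W *ᵥ x2 := by
        rw [Matrix.add_mulVec, ← Matrix.mulVec_mulVec]
        congr 1
        rw [hx2, Matrix.mulVec_sub, Matrix.mulVec_mulVec, hWV, Matrix.zero_mulVec, sub_zero]
      rw [hGx]
      have e1 : (U *ᵥ y) ⬝ᵥ (U *ᵥ y) = y ⬝ᵥ y := by
        rw [dot_mulVec_mulVec, hU, Matrix.one_mulVec]
      have e2 : (U *ᵥ y) ⬝ᵥ (W *ᵥ x2) = 0 := by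
        rw [dot_mulVec_mulVec, hUW, Matrix.zero_mulVec, dotProduct_zero]
      have e3 : (W *ᵥ x2) ⬝ᵥ (U *ᵥ y) = 0 := by rw [dotProduct_comm]; exact e2
      have e4 : (W *ᵥ x2) ⬝ᵥ (W *ᵥ x2) ≤ x2 ⬝ᵥ x2 := mulVec_sq_le hWn x2
      have h6 : x2 ⬝ᵥ x2 = x ⬝ᵥ x - y ⬝ᵥ y := proj_dot V hV x
      rw [add_dotProduct, dotProduct_add, dotProduct_add, e1, e2, e3]
      linarith
    have hfrZ : frobInner (U * Vᵀ + W) Z = ∑ j, σ j := by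
      rw [hZ, frob_svd]
      apply Finset.sum_congr rfl
      intro j _
      have hcol : (U * Vᵀ + W) *ᵥ (fun i => V i j) = fun i => U i j := by
        funext i
        have : ((U * Vᵀ + W) * V) i j = U i j := by rw [hGV]
        simpa [Matrix.mul_apply, Matrix.mulVec, dotProduct] using this
      rw [hcol, col_dot U hU j, mul_one]
    have := frobInner_le_nuclearNorm (U * Vᵀ + W) Y hGq
    rw [frobInner_sub_right, hNZ, hfrZ]
    linarith
end
end

section
/- Let Z ∈ ℝ^{n×n} have singular value decomposition Z = Σ_{i=1}^n σ_i u_i v_i^T and let τ > 0. Define the singular value thresholding operator D_τ(Z) = Σ_{i=1}^n max(σ_i − τ, 0) u_i v_i^T. Then D_τ(Z) is the unique minimizer over Y ∈ ℝ^{n×n} of the function (1/2)‖Z − Y‖_F² + τ‖Y‖_*; that is, D_τ is the proximity operator of the function τ‖·‖_*. -/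
noncomputable section

open scoped BigOperators
open Matrix

/-- Frobenius norm of a real matrix. -/
def frobNorm {n₁ n₂ : ℕ} (A : Matrix (Fin n₁) (Fin n₂) ℝ) : ℝ :=
  Real.sqrt (∑ i, ∑ j, (A i j) ^ 2)

/-- An orthonormal family of vectors in `ℝⁿ`. -/
def OrthoFam {n : ℕ} (u : Fin n → Fin n → ℝ) : Prop :=
  ∀ i j, (∑ k, u i k * u j k) = if i = j then (1 : ℝ) else 0

/-- Rows of a square matrix with orthonormal columns are orthonormal. -/
theorem svt_aux_rows {n : ℕ} {w : Fin n → Fin n → ℝ} (hw : OrthoFam w) (l m : Fin n) :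
    ∑ i, w i l * w i m = if l = m then (1:ℝ) else 0 := by
  classical
  set Q : Matrix (Fin n) (Fin n) ℝ := Matrix.of fun i j => w j i with hQ
  have h1 : Qᵀ * Q = 1 := by
    ext i j
    simp [Matrix.mul_apply, Matrix.transpose_apply, hQ, Matrix.one_apply, hw i j]
  have h2 : Q * Qᵀ = 1 := mul_eq_one_comm.mp h1
  have := congrFun (congrFun h2 l) m
  simpa [Matrix.mul_apply, Matrix.transpose_apply, hQ, Matrix.one_apply] using this

/-- Bessel's inequality, sum form, for a family that is orthonormal except for zero members. -/
theorem svt_aux_bessel {N n : ℕ} (p : Fin N → Fin n → ℝ)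
    (h1 : ∀ i j, i ≠ j → (∑ k, p i k * p j k) = 0)
    (h2 : ∀ i, p i ≠ 0 → (∑ k, p i k * p i k) = 1)
    (x : Fin n → ℝ) :
    ∑ i, (∑ k, p i k * x k) ^ 2 ≤ ∑ k, x k ^ 2 := by
  classical
  set P : Fin N → EuclideanSpace ℝ (Fin n) := fun i => (WithLp.equiv 2 _).symm (p i) with hP
  set X : EuclideanSpace ℝ (Fin n) := (WithLp.equiv 2 _).symm x with hX
  have hinner : ∀ (a b : Fin N), (inner ℝ (P a) (P b) : ℝ) = ∑ k, p a k * p b k := by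
    intro a b; rw [PiLp.inner_apply]; exact Finset.sum_congr rfl fun k _ => by simp [hP, mul_comm]
  have hiX : ∀ a, (inner ℝ (P a) X : ℝ) = ∑ k, p a k * x k := by
    intro a; rw [PiLp.inner_apply]; exact Finset.sum_congr rfl fun k _ => by simp [hP, hX, mul_comm]
  set s : Finset (Fin N) := Finset.univ.filter (fun i => p i ≠ 0) with hs
  have hON : Orthonormal ℝ (fun i : s => P i.1) := by
    rw [orthonormal_iff_ite]
    intro i j
    by_cases hij : (i : Fin N) = (j : Fin N)
    · have : i = j := Subtype.ext hij
      subst this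
      rw [if_pos rfl, hinner]
      exact h2 i.1 (Finset.mem_filter.mp i.2).2
    · simp only [if_neg (fun h : i = j => hij (congrArg Subtype.val h)), hinner]
      exact h1 _ _ hij
  have bessel := hON.sum_inner_products_le (x := X) (s := (Finset.univ : Finset s))
  have hnx : ‖X‖ ^ 2 = ∑ k, x k ^ 2 := by
    rw [← real_inner_self_eq_norm_sq, PiLp.inner_apply]
    refine Finset.sum_congr rfl fun k _ => ?_
    simp [hX, sq]
  have hsum : ∑ i : s, ‖(inner ℝ (P i.1) X : ℝ)‖ ^ 2 = ∑ i ∈ s, (∑ k, p i k * x k) ^ 2 := by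
    rw [← Finset.sum_coe_sort s]
    refine Finset.sum_congr rfl fun i _ => ?_
    rw [hiX, Real.norm_eq_abs, sq_abs]
  have hfull : ∑ i, (∑ k, p i k * x k) ^ 2 = ∑ i ∈ s, (∑ k, p i k * x k) ^ 2 := by
    symm
    refine Finset.sum_subset (Finset.subset_univ s) ?_
    intro i _ hi
    rw [hs, Finset.mem_filter] at hi
    push_neg at hi
    have : p i = 0 := hi (Finset.mem_univ i)
    simp [this]
  rw [hfull, ← hsum]
  calc ∑ i : s, ‖(inner ℝ (P i.1) X : ℝ)‖ ^ 2 ≤ ‖X‖ ^ 2 := bessel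
    _ = ∑ k, x k ^ 2 := hnx

/-- Cauchy–Schwarz in square-root form. -/
theorem svt_aux_cs {N : ℕ} (f g : Fin N → ℝ) :
    ∑ i, f i * g i ≤ Real.sqrt (∑ i, f i ^ 2) * Real.sqrt (∑ i, g i ^ 2) := by
  have h := Finset.sum_mul_sq_le_sq_mul_sq Finset.univ f g
  have h0 : (0:ℝ) ≤ ∑ i, f i ^ 2 := Finset.sum_nonneg fun i _ => sq_nonneg _
  calc ∑ i, f i * g i ≤ |∑ i, f i * g i| := le_abs_self _
    _ = Real.sqrt ((∑ i, f i * g i) ^ 2) := (Real.sqrt_sq_eq_abs _).symm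
    _ ≤ Real.sqrt ((∑ i, f i ^ 2) * ∑ i, g i ^ 2) := Real.sqrt_le_sqrt h
    _ = Real.sqrt (∑ i, f i ^ 2) * Real.sqrt (∑ i, g i ^ 2) := Real.sqrt_mul h0 _

/-- Triple sum reordering. -/
theorem svt_aux_sum3 {α β γ : Type*} [Fintype α] [Fintype β] [Fintype γ]
    (f : α → β → γ → ℝ) :
    ∑ k, ∑ l, ∑ j, f k l j = ∑ j, ∑ k, ∑ l, f k l j := by
  rw [show (∑ k, ∑ l, ∑ j, f k l j) = ∑ k, ∑ j, ∑ l, f k l j from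
    Finset.sum_congr rfl fun k _ => Finset.sum_comm]
  exact Finset.sum_comm

/-- Rotation of a triple sum. -/
theorem svt_aux_rot3 {α β γ : Type*} [Fintype α] [Fintype β] [Fintype γ]
    (f : α → β → γ → ℝ) :
    ∑ k, ∑ i, ∑ j, f k i j = ∑ i, ∑ j, ∑ k, f k i j := by
  rw [svt_aux_sum3 f]
  exact svt_aux_sum3 (fun j k i => f k i j)

theorem svt_aux_sing_nonneg {n : ℕ} (A : Matrix (Fin n) (Fin n) ℝ) (i : Fin n) :
    0 ≤ singularValues A i := Real.sqrt_nonneg _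

/-- Eigen machinery packaged: an orthonormal family `q` diagonalizing `AᵀA`. -/
theorem svt_aux_eigen {n : ℕ} (A : Matrix (Fin n) (Fin n) ℝ) :
    ∃ q : Fin n → Fin n → ℝ, OrthoFam q ∧
      ∀ i j, (∑ k, (A *ᵥ q i) k * (A *ᵥ q j) k)
        = (singularValues A j) ^ 2 * (if i = j then (1:ℝ) else 0) := by
  have hA := Matrix.isHermitian_conjTranspose_mul_self A
  refine ⟨fun i => ⇑(hA.eigenvectorBasis i), ?_, ?_⟩
  · intro i j
    have := orthonormal_iff_ite.mp hA.eigenvectorBasis.orthonormal i j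
    rw [PiLp.inner_apply] at this
    simpa [mul_comm] using this
  · intro i j
    have hqON : ∀ a b, (∑ k, hA.eigenvectorBasis a k * hA.eigenvectorBasis b k)
        = if a = b then (1:ℝ) else 0 := by
      intro a b
      have := orthonormal_iff_ite.mp hA.eigenvectorBasis.orthonormal a b
      rw [PiLp.inner_apply] at this
      simpa [mul_comm] using this
    have hdot : ∀ a b : Fin n → ℝ, (∑ k, (A *ᵥ a) k * (A *ᵥ b) k) = a ⬝ᵥ ((Aᴴ * A) *ᵥ b) := by
      intro a b
      have : a ⬝ᵥ ((Aᴴ * A) *ᵥ b) = (A *ᵥ a) ⬝ᵥ (A *ᵥ b) := by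
        rw [dotProduct_mulVec, ← Matrix.vecMul_vecMul]
        have ha : a ᵥ* Aᴴ = A *ᵥ a := by
          rw [show (Aᴴ : Matrix (Fin n) (Fin n) ℝ) = Aᵀ from by
            ext i j; simp [Matrix.conjTranspose_apply]]
          exact Matrix.vecMul_transpose ..
        rw [ha, ← dotProduct_mulVec]
      rw [this]; rfl
    have hsv : (singularValues A j) ^ 2 = hA.eigenvalues j :=
      Real.sq_sqrt (Matrix.eigenvalues_conjTranspose_mul_self_nonneg A j)
    rw [hdot, hA.mulVec_eigenvectorBasis j, dotProduct_smul, smul_eq_mul, hsv]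
    congr 1
    simpa [dotProduct] using hqON i j

/-- `∑ₖ (∑ᵢ aᵢ uᵢₖ)² = ∑ᵢ aᵢ²` for an orthonormal family `u`. -/
theorem svt_aux_sq {n : ℕ} {u : Fin n → Fin n → ℝ} (hu : OrthoFam u) (a : Fin n → ℝ) :
    ∑ k, (∑ i, a i * u i k) ^ 2 = ∑ i, a i ^ 2 := by
  classical
  calc ∑ k, (∑ i, a i * u i k) ^ 2
      = ∑ k, ∑ i, ∑ j, (a i * a j) * (u i k * u j k) := by
        refine Finset.sum_congr rfl fun k _ => ?_
        rw [sq, Finset.sum_mul_sum]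
        exact Finset.sum_congr rfl fun i _ => Finset.sum_congr rfl fun j _ => by ring
    _ = ∑ i, ∑ j, ∑ k, (a i * a j) * (u i k * u j k) := svt_aux_rot3 _
    _ = ∑ i, ∑ j, (a i * a j) * (if i = j then (1:ℝ) else 0) := by
        refine Finset.sum_congr rfl fun i _ => Finset.sum_congr rfl fun j _ => ?_
        rw [← Finset.mul_sum, hu i j]
    _ = ∑ i, a i ^ 2 := by
        refine Finset.sum_congr rfl fun i _ => ?_
        simp [mul_ite, Finset.sum_ite_eq, sq]

/-- Trace pairing of two matrices given by orthonormal dyad expansions. -/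
theorem svt_aux_pair {n : ℕ} {u v : Fin n → Fin n → ℝ} (hu : OrthoFam u) (hv : OrthoFam v)
    (a b : Fin n → ℝ) :
    ∑ k, ∑ l, (∑ i, a i * (u i k * v i l)) * (∑ j, b j * (u j k * v j l))
      = ∑ i, a i * b i := by
  classical
  calc ∑ k, ∑ l, (∑ i, a i * (u i k * v i l)) * (∑ j, b j * (u j k * v j l))
      = ∑ k, ∑ l, ∑ i, ∑ j, (a i * b j) * ((u i k * u j k) * (v i l * v j l)) := by
        refine Finset.sum_congr rfl fun k _ => Finset.sum_congr rfl fun l _ => ?_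
        rw [Finset.sum_mul_sum]
        exact Finset.sum_congr rfl fun i _ => Finset.sum_congr rfl fun j _ => by ring
    _ = ∑ k, ∑ i, ∑ j, ∑ l, (a i * b j) * ((u i k * u j k) * (v i l * v j l)) := by
        refine Finset.sum_congr rfl fun k _ => ?_
        exact svt_aux_rot3 (fun l i j => (a i * b j) * ((u i k * u j k) * (v i l * v j l)))
    _ = ∑ i, ∑ j, ∑ k, ∑ l, (a i * b j) * ((u i k * u j k) * (v i l * v j l)) := by
        exact svt_aux_rot3 (fun k i j => ∑ l, (a i * b j) * ((u i k * u j k) * (v i l * v j l)))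
    _ = ∑ i, ∑ j, (a i * b j) * ((∑ k, u i k * u j k) * (∑ l, v i l * v j l)) := by
        refine Finset.sum_congr rfl fun i _ => Finset.sum_congr rfl fun j _ => ?_
        rw [Finset.sum_mul_sum, Finset.mul_sum]
        refine Finset.sum_congr rfl fun k _ => ?_
        rw [Finset.mul_sum]
    _ = ∑ i, a i * b i := by
        refine Finset.sum_congr rfl fun i _ => ?_
        rw [show (∑ j, a i * b j * ((∑ k, u i k * u j k) * ∑ l, v i l * v j l))
            = ∑ j, a i * b j * ((if i = j then (1:ℝ) else 0) * (if i = j then (1:ℝ) else 0)) from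
          Finset.sum_congr rfl fun j _ => by rw [hu i j, hv i j]]
        simp [mul_ite, Finset.sum_ite_eq]

/-- `⟨B, Y⟩ ≤ τ ‖Y‖_*` when `B` has operator norm at most `τ`. -/
theorem svt_aux_trace_le {n : ℕ} (B Y : Matrix (Fin n) (Fin n) ℝ) (τ : ℝ) (hτ : 0 ≤ τ)
    (hB : ∀ x : Fin n → ℝ, (∑ k, (B *ᵥ x) k ^ 2) ≤ τ ^ 2 * ∑ k, x k ^ 2) :
    ∑ k, ∑ l, B k l * Y k l ≤ τ * nuclearNorm Y := by
  classical
  obtain ⟨q, hqON, heig⟩ := svt_aux_eigen Y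
  have hmv : ∀ (A : Matrix (Fin n) (Fin n) ℝ) (x : Fin n → ℝ) (k : Fin n),
      (A *ᵥ x) k = ∑ l, A k l * x l := by
    intro A x k; simp [Matrix.mulVec, dotProduct]
  -- trace identity
  have hti : ∑ k, ∑ l, B k l * Y k l = ∑ i, ∑ k, (B *ᵥ q i) k * (Y *ᵥ q i) k := by
    symm
    calc ∑ i, ∑ k, (B *ᵥ q i) k * (Y *ᵥ q i) k
        = ∑ i, ∑ k, ∑ l, ∑ m, (B k l * Y k m) * (q i l * q i m) := by
          refine Finset.sum_congr rfl fun i _ => Finset.sum_congr rfl fun k _ => ?_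
          rw [hmv, hmv, Finset.sum_mul_sum]
          exact Finset.sum_congr rfl fun l _ => Finset.sum_congr rfl fun m _ => by ring
      _ = ∑ k, ∑ i, ∑ l, ∑ m, (B k l * Y k m) * (q i l * q i m) := Finset.sum_comm
      _ = ∑ k, ∑ l, ∑ m, ∑ i, (B k l * Y k m) * (q i l * q i m) := by
          refine Finset.sum_congr rfl fun k _ => ?_
          exact svt_aux_rot3 (fun i l m => (B k l * Y k m) * (q i l * q i m))
      _ = ∑ k, ∑ l, ∑ m, (B k l * Y k m) * (if l = m then (1:ℝ) else 0) := by
          refine Finset.sum_congr rfl fun k _ => Finset.sum_congr rfl fun l _ =>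
            Finset.sum_congr rfl fun m _ => ?_
          rw [← Finset.mul_sum, svt_aux_rows hqON l m]
      _ = ∑ k, ∑ l, B k l * Y k l := by
          refine Finset.sum_congr rfl fun k _ => Finset.sum_congr rfl fun l _ => ?_
          simp [mul_ite, Finset.sum_ite_eq]
  rw [hti]
  -- per-index bound
  have hper : ∀ i, ∑ k, (B *ᵥ q i) k * (Y *ᵥ q i) k ≤ τ * singularValues Y i := by
    intro i
    have hcs := svt_aux_cs (fun k => (B *ᵥ q i) k) (fun k => (Y *ᵥ q i) k)
    have hq1 : (∑ k, q i k ^ 2) = 1 := by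
      have := hqON i i
      rw [if_pos rfl] at this
      rw [← this]
      exact Finset.sum_congr rfl fun k _ => sq (q i k) ▸ (sq (q i k)).symm ▸ rfl
    have hYq : (∑ k, (Y *ᵥ q i) k ^ 2) = (singularValues Y i) ^ 2 := by
      have := heig i i
      rw [if_pos rfl, mul_one] at this
      rw [← this]
      exact Finset.sum_congr rfl fun k _ => sq _
    have h1 : Real.sqrt (∑ k, (B *ᵥ q i) k ^ 2) ≤ τ := by
      calc Real.sqrt (∑ k, (B *ᵥ q i) k ^ 2) ≤ Real.sqrt (τ ^ 2 * ∑ k, q i k ^ 2) :=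
            Real.sqrt_le_sqrt (hB (q i))
        _ = τ := by rw [hq1, mul_one, Real.sqrt_sq hτ]
    have h2 : Real.sqrt (∑ k, (Y *ᵥ q i) k ^ 2) = singularValues Y i := by
      rw [hYq, Real.sqrt_sq (svt_aux_sing_nonneg Y i)]
    calc ∑ k, (B *ᵥ q i) k * (Y *ᵥ q i) k
        ≤ Real.sqrt (∑ k, (B *ᵥ q i) k ^ 2) * Real.sqrt (∑ k, (Y *ᵥ q i) k ^ 2) := hcs
      _ ≤ τ * singularValues Y i := by
          rw [h2]
          exact mul_le_mul_of_nonneg_right h1 (svt_aux_sing_nonneg Y i)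
  calc ∑ i, ∑ k, (B *ᵥ q i) k * (Y *ᵥ q i) k
      ≤ ∑ i, τ * singularValues Y i := Finset.sum_le_sum fun i _ => hper i
    _ = τ * nuclearNorm Y := by rw [nuclearNorm, Finset.mul_sum]

/-- Nuclear norm of a nonnegative dyad combination is at most the sum of coefficients. -/
theorem svt_aux_nuclear_le {n : ℕ} (c : Fin n → ℝ) (u v : Fin n → Fin n → ℝ)
    (hu : OrthoFam u) (hv : OrthoFam v) (hc : ∀ i, 0 ≤ c i) :
    nuclearNorm (∑ i, c i • Matrix.vecMulVec (u i) (v i)) ≤ ∑ i, c i := by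
  classical
  set D : Matrix (Fin n) (Fin n) ℝ := ∑ i, c i • Matrix.vecMulVec (u i) (v i) with hD
  have hDe : ∀ k l, D k l = ∑ j, c j * (u j k * v j l) := by
    intro k l
    rw [hD, Matrix.sum_apply]
    exact Finset.sum_congr rfl fun j _ => by
      simp [Matrix.vecMulVec_apply, mul_assoc]
  obtain ⟨q, hqON, heig⟩ := svt_aux_eigen D
  set s : Fin n → ℝ := singularValues D with hs
  have hs0 : ∀ i, 0 ≤ s i := fun i => svt_aux_sing_nonneg D i
  set p : Fin n → Fin n → ℝ :=
    fun i k => if s i = 0 then 0 else (s i)⁻¹ * (D *ᵥ q i) k with hp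
  -- orthogonality facts for p
  have hp1 : ∀ i j, i ≠ j → (∑ k, p i k * p j k) = 0 := by
    intro i j hij
    by_cases hsi : s i = 0
    · simp [hp, hsi]
    · by_cases hsj : s j = 0
      · simp [hp, hsj]
      · have : ∑ k, p i k * p j k = (s i)⁻¹ * ((s j)⁻¹ * ∑ k, (D *ᵥ q i) k * (D *ᵥ q j) k) := by
          rw [Finset.mul_sum, Finset.mul_sum]
          exact Finset.sum_congr rfl fun k _ => by simp [hp, hsi, hsj]; ring
        rw [this, heig i j, if_neg hij, mul_zero, mul_zero, mul_zero]
  have hp2 : ∀ i, p i ≠ 0 → (∑ k, p i k * p i k) = 1 := by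
    intro i hpi
    by_cases hsi : s i = 0
    · exact absurd (funext fun k => by simp [hp, hsi]) hpi
    · have : ∑ k, p i k * p i k = (s i)⁻¹ * ((s i)⁻¹ * ∑ k, (D *ᵥ q i) k * (D *ᵥ q i) k) := by
        rw [Finset.mul_sum, Finset.mul_sum]
        exact Finset.sum_congr rfl fun k _ => by simp [hp, hsi]; ring
      rw [this, heig i i, if_pos rfl, mul_one]
      field_simp
  -- s i as a pairing
  have hp3 : ∀ i, s i = ∑ k, p i k * (D *ᵥ q i) k := by
    intro i
    by_cases hsi : s i = 0
    · simp [hp, hsi]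
    · have : ∑ k, p i k * (D *ᵥ q i) k = (s i)⁻¹ * ∑ k, (D *ᵥ q i) k * (D *ᵥ q i) k := by
        rw [Finset.mul_sum]
        exact Finset.sum_congr rfl fun k _ => by simp [hp, hsi]; ring
      rw [this, heig i i, if_pos rfl, mul_one]
      field_simp
  have hmv : ∀ (x : Fin n → ℝ) (k : Fin n), (D *ᵥ x) k = ∑ l, D k l * x l := by
    intro x k; simp [Matrix.mulVec, dotProduct]
  -- expand the pairing
  have key : ∀ i, ∑ k, p i k * (D *ᵥ q i) k
      = ∑ j, c j * ((∑ k, p i k * u j k) * (∑ l, q i l * v j l)) := by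
    intro i
    calc ∑ k, p i k * (D *ᵥ q i) k
        = ∑ k, ∑ l, ∑ j, (c j) * ((p i k * u j k) * (q i l * v j l)) := by
          refine Finset.sum_congr rfl fun k _ => ?_
          rw [hmv, Finset.mul_sum]
          refine Finset.sum_congr rfl fun l _ => ?_
          rw [hDe, Finset.sum_mul, Finset.mul_sum]
          exact Finset.sum_congr rfl fun j _ => by ring
      _ = ∑ j, ∑ k, ∑ l, (c j) * ((p i k * u j k) * (q i l * v j l)) := svt_aux_sum3 _
      _ = ∑ j, c j * ((∑ k, p i k * u j k) * (∑ l, q i l * v j l)) := by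
          refine Finset.sum_congr rfl fun j _ => ?_
          rw [Finset.sum_mul_sum, Finset.mul_sum]
          refine Finset.sum_congr rfl fun k _ => ?_
          rw [Finset.mul_sum]
  -- Bessel bounds
  have hq1 : ∀ i j, i ≠ j → (∑ k, q i k * q j k) = 0 := by
    intro i j hij; rw [hqON i j, if_neg hij]
  have hq2 : ∀ i, q i ≠ 0 → (∑ k, q i k * q i k) = 1 := by
    intro i _; rw [hqON i i, if_pos rfl]
  have hbound : ∀ j, ∑ i, (∑ k, p i k * u j k) * (∑ l, q i l * v j l) ≤ 1 := by
    intro j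
    have hcs := svt_aux_cs (fun i => ∑ k, p i k * u j k) (fun i => ∑ l, q i l * v j l)
    have hb1 : ∑ i, (∑ k, p i k * u j k) ^ 2 ≤ ∑ k, u j k ^ 2 :=
      svt_aux_bessel p hp1 hp2 (u j)
    have hb2 : ∑ i, (∑ l, q i l * v j l) ^ 2 ≤ ∑ l, v j l ^ 2 :=
      svt_aux_bessel q hq1 hq2 (v j)
    have hu1 : (∑ k, u j k ^ 2) = 1 := by
      have := hu j j; rw [if_pos rfl] at this; rw [← this]
      exact Finset.sum_congr rfl fun k _ => sq _
    have hv1 : (∑ l, v j l ^ 2) = 1 := by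
      have := hv j j; rw [if_pos rfl] at this; rw [← this]
      exact Finset.sum_congr rfl fun k _ => sq _
    calc ∑ i, (∑ k, p i k * u j k) * (∑ l, q i l * v j l)
        ≤ Real.sqrt (∑ i, (∑ k, p i k * u j k) ^ 2)
            * Real.sqrt (∑ i, (∑ l, q i l * v j l) ^ 2) := hcs
      _ ≤ Real.sqrt 1 * Real.sqrt 1 := by
          refine mul_le_mul (Real.sqrt_le_sqrt (by rw [← hu1] at *; exact hb1))
            (Real.sqrt_le_sqrt (by rw [← hv1] at *; exact hb2)) (Real.sqrt_nonneg _)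
            (Real.sqrt_nonneg _)
      _ = 1 := by rw [Real.sqrt_one, mul_one]
  -- put it together
  calc nuclearNorm D = ∑ i, s i := rfl
    _ = ∑ i, ∑ j, c j * ((∑ k, p i k * u j k) * (∑ l, q i l * v j l)) := by
        refine Finset.sum_congr rfl fun i _ => ?_
        rw [← key, ← hp3]
    _ = ∑ j, c j * ∑ i, (∑ k, p i k * u j k) * (∑ l, q i l * v j l) := by
        rw [Finset.sum_comm]
        exact Finset.sum_congr rfl fun j _ => by rw [Finset.mul_sum]
    _ ≤ ∑ j, c j := by
        refine Finset.sum_le_sum fun j _ => ?_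
        calc c j * ∑ i, (∑ k, p i k * u j k) * (∑ l, q i l * v j l)
            ≤ c j * 1 := mul_le_mul_of_nonneg_left (hbound j) (hc j)
          _ = c j := mul_one _

/-- Singular value thresholding: given an SVD `Z = Σᵢ σᵢ uᵢ vᵢᵀ`,
`D_τ(Z) = Σᵢ max(σᵢ − τ, 0) uᵢ vᵢᵀ` is the unique minimizer of
`Y ↦ (1/2)‖Z − Y‖_F² + τ‖Y‖_*`. -/
theorem svt_is_prox (n : ℕ) (Z : Matrix (Fin n) (Fin n) ℝ) (τ : ℝ) (hτ : 0 < τ)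
    (σ : Fin n → ℝ) (u v : Fin n → Fin n → ℝ)
    (hu : OrthoFam u) (hv : OrthoFam v) (hσ : ∀ i, 0 ≤ σ i)
    (hZ : Z = ∑ i, σ i • Matrix.vecMulVec (u i) (v i)) :
    ∀ Y : Matrix (Fin n) (Fin n) ℝ,
      Y ≠ ∑ i, max (σ i - τ) 0 • Matrix.vecMulVec (u i) (v i) →
      (1 / 2) * frobNorm (Z - ∑ i, max (σ i - τ) 0 • Matrix.vecMulVec (u i) (v i)) ^ 2
          + τ * nuclearNorm (∑ i, max (σ i - τ) 0 • Matrix.vecMulVec (u i) (v i))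
        < (1 / 2) * frobNorm (Z - Y) ^ 2 + τ * nuclearNorm Y := by
  classical
  intro Y hYD
  set m : Fin n → ℝ := fun i => max (σ i - τ) 0 with hm
  have hm0 : ∀ i, 0 ≤ m i := fun i => le_max_right _ 0
  set D : Matrix (Fin n) (Fin n) ℝ := ∑ i, m i • Matrix.vecMulVec (u i) (v i) with hD
  -- entry formulas
  have hDe : ∀ k l, D k l = ∑ i, m i * (u i k * v i l) := by
    intro k l
    rw [hD, Matrix.sum_apply]
    exact Finset.sum_congr rfl fun i _ => by simp [Matrix.vecMulVec_apply, mul_assoc]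
  have hZe : ∀ k l, Z k l = ∑ i, σ i * (u i k * v i l) := by
    intro k l
    rw [hZ, Matrix.sum_apply]
    exact Finset.sum_congr rfl fun i _ => by simp [Matrix.vecMulVec_apply, mul_assoc]
  have hBe : ∀ k l, (Z - D) k l = ∑ i, min (σ i) τ * (u i k * v i l) := by
    intro k l
    rw [Matrix.sub_apply, hDe, hZe, ← Finset.sum_sub_distrib]
    refine Finset.sum_congr rfl fun i _ => ?_
    have : σ i - m i = min (σ i) τ := by
      rcases le_total (σ i) τ with h | h
      · simp only [hm]
        rw [min_eq_left h, max_eq_right (sub_nonpos.mpr h), sub_zero]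
      · simp only [hm]
        rw [min_eq_right h, max_eq_left (sub_nonneg.mpr h)]; ring
    rw [← this]; ring
  have hmin0 : ∀ i, 0 ≤ min (σ i) τ := fun i => le_min (hσ i) hτ.le
  have hminτ : ∀ i, min (σ i) τ ≤ τ := fun i => min_le_right _ _
  -- operator norm bound for Z - D
  have hB : ∀ x : Fin n → ℝ, (∑ k, ((Z - D) *ᵥ x) k ^ 2) ≤ τ ^ 2 * ∑ k, x k ^ 2 := by
    intro x
    have hmv : ∀ k, ((Z - D) *ᵥ x) k = ∑ i, (min (σ i) τ * (∑ l, v i l * x l)) * u i k := by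
      intro k
      have : ((Z - D) *ᵥ x) k = ∑ l, (Z - D) k l * x l := by
        simp [Matrix.mulVec, dotProduct]
      rw [this]
      calc ∑ l, (Z - D) k l * x l
          = ∑ l, ∑ i, (min (σ i) τ * (v i l * x l)) * u i k := by
            refine Finset.sum_congr rfl fun l _ => ?_
            rw [hBe, Finset.sum_mul]
            exact Finset.sum_congr rfl fun i _ => by ring
        _ = ∑ i, ∑ l, (min (σ i) τ * (v i l * x l)) * u i k := Finset.sum_comm
        _ = ∑ i, (min (σ i) τ * (∑ l, v i l * x l)) * u i k := by
            refine Finset.sum_congr rfl fun i _ => ?_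
            rw [Finset.mul_sum, Finset.sum_mul]
    calc ∑ k, ((Z - D) *ᵥ x) k ^ 2
        = ∑ k, (∑ i, (min (σ i) τ * (∑ l, v i l * x l)) * u i k) ^ 2 := by
          exact Finset.sum_congr rfl fun k _ => by rw [hmv]
      _ = ∑ i, (min (σ i) τ * (∑ l, v i l * x l)) ^ 2 := svt_aux_sq hu _
      _ ≤ ∑ i, τ ^ 2 * (∑ l, v i l * x l) ^ 2 := by
          refine Finset.sum_le_sum fun i _ => ?_
          rw [mul_pow]
          exact mul_le_mul_of_nonneg_right
            (pow_le_pow_left₀ (hmin0 i) (hminτ i) 2) (sq_nonneg _)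
      _ = τ ^ 2 * ∑ i, (∑ l, v i l * x l) ^ 2 := by rw [Finset.mul_sum]
      _ ≤ τ ^ 2 * ∑ k, x k ^ 2 := by
          refine mul_le_mul_of_nonneg_left ?_ (sq_nonneg τ)
          exact svt_aux_bessel v
            (fun i j hij => by rw [hv i j, if_neg hij])
            (fun i _ => by rw [hv i i, if_pos rfl]) x
  -- the four key quantities
  have h_traceY : ∑ k, ∑ l, (Z - D) k l * Y k l ≤ τ * nuclearNorm Y :=
    svt_aux_trace_le (Z - D) Y τ hτ.le hB
  have h_traceD : ∑ k, ∑ l, (Z - D) k l * D k l = τ * ∑ i, m i := by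
    calc ∑ k, ∑ l, (Z - D) k l * D k l
        = ∑ k, ∑ l, (∑ i, min (σ i) τ * (u i k * v i l)) * (∑ j, m j * (u j k * v j l)) := by
          exact Finset.sum_congr rfl fun k _ => Finset.sum_congr rfl fun l _ => by
            rw [hBe, hDe]
      _ = ∑ i, min (σ i) τ * m i := svt_aux_pair hu hv _ _
      _ = ∑ i, τ * m i := by
          refine Finset.sum_congr rfl fun i _ => ?_
          rcases le_total (σ i) τ with h | h
          · simp only [hm]
            rw [max_eq_right (sub_nonpos.mpr h), mul_zero, mul_zero]
          · rw [min_eq_right h]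
      _ = τ * ∑ i, m i := by rw [Finset.mul_sum]
  have h_nucD : nuclearNorm D ≤ ∑ i, m i := svt_aux_nuclear_le m u v hu hv hm0
  -- Frobenius expansions
  have hfr : ∀ A : Matrix (Fin n) (Fin n) ℝ, frobNorm A ^ 2 = ∑ k, ∑ l, A k l ^ 2 := by
    intro A
    exact Real.sq_sqrt (Finset.sum_nonneg fun k _ => Finset.sum_nonneg fun l _ => sq_nonneg _)
  have hiden : ∑ k, ∑ l, (Z - Y) k l ^ 2
      = (∑ k, ∑ l, (Z - D) k l ^ 2) - 2 * (∑ k, ∑ l, (Z - D) k l * Y k l)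
        + 2 * (∑ k, ∑ l, (Z - D) k l * D k l) + ∑ k, ∑ l, (Y - D) k l ^ 2 := by
    have hpt : ∀ k l, (Z - Y) k l ^ 2
        = (Z - D) k l ^ 2 - 2 * ((Z - D) k l * Y k l) + 2 * ((Z - D) k l * D k l)
          + (Y - D) k l ^ 2 := by
      intro k l
      simp only [Matrix.sub_apply]
      ring
    calc ∑ k, ∑ l, (Z - Y) k l ^ 2
        = ∑ k, ∑ l, ((Z - D) k l ^ 2 - 2 * ((Z - D) k l * Y k l)
            + 2 * ((Z - D) k l * D k l) + (Y - D) k l ^ 2) :=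
          Finset.sum_congr rfl fun k _ => Finset.sum_congr rfl fun l _ => hpt k l
      _ = _ := by
          simp only [Finset.sum_add_distrib, Finset.sum_sub_distrib, ← Finset.mul_sum]
  -- positivity of ‖Y - D‖²
  have hSD : 0 < ∑ k, ∑ l, (Y - D) k l ^ 2 := by
    have hne : ∃ k l, Y k l ≠ D k l := by
      by_contra hc
      push_neg at hc
      exact hYD (by ext k l; exact hc k l)
    obtain ⟨k0, l0, hk⟩ := hne
    have hpos : 0 < (Y - D) k0 l0 ^ 2 := by
      have : (Y - D) k0 l0 ≠ 0 := by
        rw [Matrix.sub_apply]; exact sub_ne_zero.mpr hk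
      positivity
    refine Finset.sum_pos' (fun k _ => Finset.sum_nonneg fun l _ => sq_nonneg _) ?_
    exact ⟨k0, Finset.mem_univ k0,
      Finset.sum_pos' (fun l _ => sq_nonneg _) ⟨l0, Finset.mem_univ l0, hpos⟩⟩
  -- assemble
  rw [hfr, hfr]
  have hmul : τ * nuclearNorm D ≤ τ * ∑ i, m i :=
    mul_le_mul_of_nonneg_left h_nucD hτ.le
  linarith [hiden, h_traceY, h_traceD, hmul, hSD]
end
end

section
/- Let 𝒜 : ℝ^{n×n} → ℝ^m be a nonzero linear operator, y ∈ ℝ^m, and λ > 0. Consider the forward–backward splitting iteration Z_{k+1} = D_{α_k λ}(Z_k − α_k 𝒜*(𝒜(Z_k) − y)) started from an arbitrary Z₀ ∈ ℝ^{n×n}. If the stepsizes satisfy 0 < inf_k α_k ≤ sup_k α_k < 2/‖𝒜‖², where ‖𝒜‖ is the operator norm of 𝒜 from (ℝ^{n×n}, ‖·‖_F) to (ℝ^m, ‖·‖₂), then the sequence {Z_k} converges to a minimizer of the function Z ↦ (1/2)‖𝒜(Z) − y‖₂² + λ‖Z‖_*. -/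
noncomputable section

open scoped BigOperators
open Matrix Filter

/-- Euclidean (ℓ₂) norm of a real vector. -/
def l2norm {m : ℕ} (y : Fin m → ℝ) : ℝ :=
  Real.sqrt (∑ i, (y i) ^ 2)

/-- `B = D_τ(A)`: `B` is obtained from `A` by soft-thresholding the singular values of
some SVD `A = Σᵢ σᵢ uᵢ vᵢᵀ` at level `τ`. -/
def IsSVT {n : ℕ} (τ : ℝ) (A B : Matrix (Fin n) (Fin n) ℝ) : Prop :=
  ∃ (σ : Fin n → ℝ) (u v : Fin n → Fin n → ℝ),
    OrthoFam u ∧ OrthoFam v ∧ (∀ i, 0 ≤ σ i) ∧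
    A = ∑ i, σ i • Matrix.vecMulVec (u i) (v i) ∧
    B = ∑ i, max (σ i - τ) 0 • Matrix.vecMulVec (u i) (v i)

/-- Operator norm of `𝒜 : (ℝ^{n×n}, ‖·‖_F) → (ℝ^m, ‖·‖₂)`. -/
def opNormA {n m : ℕ} (𝒜 : Matrix (Fin n) (Fin n) ℝ →ₗ[ℝ] (Fin m → ℝ)) : ℝ :=
  sSup {c : ℝ | ∃ Z : Matrix (Fin n) (Fin n) ℝ, frobNorm Z ≤ 1 ∧ c = l2norm (𝒜 Z)}

namespace FBS
variable {n : ℕ}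

lemma fi_trace (A B : Matrix (Fin n) (Fin n) ℝ) : frobInner A B = Matrix.trace (Aᵀ * B) := by
  simp only [frobInner, Matrix.trace, Matrix.diag, Matrix.mul_apply, Matrix.transpose_apply]
  exact Finset.sum_comm

lemma trace_diagonal_mul (d : Fin n → ℝ) (M : Matrix (Fin n) (Fin n) ℝ) :
    Matrix.trace (Matrix.diagonal d * M) = ∑ i, d i * M i i := by
  simp [Matrix.trace, Matrix.diag, Matrix.mul_apply, Matrix.diagonal, Finset.sum_ite_eq]

/-- M1 -/
lemma fi_svd_svd {U V : Matrix (Fin n) (Fin n) ℝ} (hU : U * Uᵀ = 1) (hV : V * Vᵀ = 1)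
    (c d : Fin n → ℝ) :
    frobInner (Uᵀ * Matrix.diagonal c * V) (Uᵀ * Matrix.diagonal d * V) = ∑ i, c i * d i := by
  rw [fi_trace]
  have h1 : (Uᵀ * Matrix.diagonal c * V)ᵀ = Vᵀ * Matrix.diagonal c * U := by
    simp [Matrix.transpose_mul, Matrix.diagonal_transpose, Matrix.mul_assoc]
  rw [h1]
  have h2 : Vᵀ * Matrix.diagonal c * U * (Uᵀ * Matrix.diagonal d * V)
      = Vᵀ * (Matrix.diagonal (fun i => c i * d i)) * V := by
    have : Matrix.diagonal c * (U * Uᵀ) * Matrix.diagonal d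
        = Matrix.diagonal (fun i => c i * d i) := by
      rw [hU, Matrix.mul_one, Matrix.diagonal_mul_diagonal]
    calc Vᵀ * Matrix.diagonal c * U * (Uᵀ * Matrix.diagonal d * V)
        = Vᵀ * (Matrix.diagonal c * (U * Uᵀ) * Matrix.diagonal d) * V := by
          simp only [Matrix.mul_assoc]
      _ = _ := by rw [this]
  rw [h2, Matrix.trace_mul_cycle, hV, Matrix.one_mul, Matrix.trace_diagonal]

/-- M2* : dual-type inequality between two SVD forms. -/
lemma fi_svd_le {U V P Q : Matrix (Fin n) (Fin n) ℝ}
    (hU : U * Uᵀ = 1) (hV : V * Vᵀ = 1) (hP : P * Pᵀ = 1) (hQ : Q * Qᵀ = 1)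
    {c d : Fin n → ℝ} (hc : ∀ i, |c i| ≤ 1) (hd : ∀ i, 0 ≤ d i) :
    frobInner (Uᵀ * Matrix.diagonal c * V) (Pᵀ * Matrix.diagonal d * Q) ≤ ∑ i, d i := by
  rw [fi_trace]
  have h1 : (Uᵀ * Matrix.diagonal c * V)ᵀ = Vᵀ * Matrix.diagonal c * U := by
    simp [Matrix.transpose_mul, Matrix.diagonal_transpose, Matrix.mul_assoc]
  set R := Q * Vᵀ with hR
  set S := U * Pᵀ with hS
  have key : (Uᵀ * Matrix.diagonal c * V)ᵀ * (Pᵀ * Matrix.diagonal d * Q)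
      = (Vᵀ * Matrix.diagonal c * (U * Pᵀ)) * (Matrix.diagonal d * Q) := by
    rw [h1]; simp only [Matrix.mul_assoc]
  rw [key, Matrix.trace_mul_cycle]
  -- now trace (diagonal d * Q * (Vᵀ * diagonal c * (U * Pᵀ)))
  have h3 : Matrix.diagonal d * Q * (Vᵀ * Matrix.diagonal c) * (U * Pᵀ)
      = Matrix.diagonal d * (R * Matrix.diagonal c * S) := by
    simp only [hR, hS, Matrix.mul_assoc]
  rw [h3, trace_diagonal_mul]
  have hRR : R * Rᵀ = 1 := by
    have hV' : Vᵀ * V = 1 := mul_eq_one_comm.mp hV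
    rw [hR, Matrix.transpose_mul, Matrix.transpose_transpose]
    calc Q * Vᵀ * (V * Qᵀ) = Q * (Vᵀ * V) * Qᵀ := by simp only [Matrix.mul_assoc]
      _ = 1 := by rw [hV', Matrix.mul_one, hQ]
  have hSS : Sᵀ * S = 1 := by
    have hU' : Uᵀ * U = 1 := mul_eq_one_comm.mp hU
    rw [hS, Matrix.transpose_mul, Matrix.transpose_transpose]
    calc P * Uᵀ * (U * Pᵀ) = P * (Uᵀ * U) * Pᵀ := by simp only [Matrix.mul_assoc]
      _ = 1 := by rw [hU', Matrix.mul_one, hP]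
  have hbound : ∀ i, (R * Matrix.diagonal c * S) i i ≤ 1 := by
    intro i
    have hexp : (R * Matrix.diagonal c * S) i i = ∑ j, R i j * c j * S j i := by
      simp [Matrix.mul_apply, Matrix.diagonal, Finset.sum_mul]
    have habs : (∑ j, R i j * c j * S j i) ≤ ∑ j, |R i j| * |S j i| := by
      apply Finset.sum_le_sum
      intro j _
      calc R i j * c j * S j i ≤ |R i j * c j * S j i| := le_abs_self _
        _ = |R i j| * |c j| * |S j i| := by rw [abs_mul, abs_mul]
        _ ≤ |R i j| * 1 * |S j i| := by
            apply mul_le_mul_of_nonneg_right _ (abs_nonneg _)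
            exact mul_le_mul_of_nonneg_left (hc j) (abs_nonneg _)
        _ = |R i j| * |S j i| := by ring
    have hcs : (∑ j, |R i j| * |S j i|) ^ 2 ≤ (∑ j, R i j ^ 2) * (∑ j, S j i ^ 2) := by
      have := Finset.sum_mul_sq_le_sq_mul_sq Finset.univ (fun j => |R i j|) (fun j => |S j i|)
      simpa [sq_abs] using this
    have hr1 : (∑ j, R i j ^ 2) = 1 := by
      have : (R * Rᵀ) i i = 1 := by rw [hRR]; simp [Matrix.one_apply]
      rw [← this]; simp [Matrix.mul_apply, sq]
    have hs1 : (∑ j, S j i ^ 2) = 1 := by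
      have : (Sᵀ * S) i i = 1 := by rw [hSS]; simp [Matrix.one_apply]
      rw [← this]; simp [Matrix.mul_apply, sq]
    have hsum_nonneg : 0 ≤ ∑ j, |R i j| * |S j i| :=
      Finset.sum_nonneg fun j _ => mul_nonneg (abs_nonneg _) (abs_nonneg _)
    have : (∑ j, |R i j| * |S j i|) ≤ 1 := by nlinarith [hcs, hr1, hs1]
    rw [hexp]; linarith
  calc (∑ i, d i * (R * Matrix.diagonal c * S) i i) ≤ ∑ i, d i * 1 :=
        Finset.sum_le_sum fun i _ => mul_le_mul_of_nonneg_left (hbound i) (hd i)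
    _ = ∑ i, d i := by simp

lemma sv_nonneg (W : Matrix (Fin n) (Fin n) ℝ) (i : Fin n) : 0 ≤ singularValues W i :=
  Real.sqrt_nonneg _

lemma euclid_inner {ι : Type*} [Fintype ι] (x y : EuclideanSpace ℝ ι) :
    (inner ℝ x y : ℝ) = ∑ i, x i * y i := by
  simp [PiLp.inner_apply, RCLike.inner_apply, starRingEnd_apply]
  exact Finset.sum_congr rfl fun i _ => mul_comm _ _

/-- L1: SVD existence. -/
lemma exists_svd (W : Matrix (Fin n) (Fin n) ℝ) :
    ∃ U V : Matrix (Fin n) (Fin n) ℝ, U * Uᵀ = 1 ∧ V * Vᵀ = 1 ∧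
      W = Uᵀ * Matrix.diagonal (singularValues W) * V := by
  classical
  have hH := Matrix.isHermitian_conjTranspose_mul_self W
  set μ : Fin n → ℝ := hH.eigenvalues with hμdef
  set S : Matrix (Fin n) (Fin n) ℝ := (hH.eigenvectorUnitary : Matrix (Fin n) (Fin n) ℝ) with hSdef
  have h1 : star S = Sᵀ := by
    ext i j; simp [Matrix.star_eq_conjTranspose, Matrix.conjTranspose_apply]
  have hS1 : Sᵀ * S = 1 := by
    have := (Matrix.mem_unitaryGroup_iff').mp hH.eigenvectorUnitary.2
    rwa [← h1]
  have hS2 : S * Sᵀ = 1 := mul_eq_one_comm.mp hS1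
  have hconj : Wᴴ = Wᵀ := by
    ext i j; simp [Matrix.conjTranspose_apply]
  have hspec : Wᵀ * W = S * Matrix.diagonal μ * Sᵀ := by
    have h2 : (RCLike.ofReal ∘ μ : Fin n → ℝ) = μ := by ext i; simp
    have := hH.spectral_theorem
    simp only [Unitary.conjStarAlgAut_apply] at this
    rw [h2, h1] at this
    rw [← hconj]; exact this
  have hμ : ∀ i, 0 ≤ μ i := by
    have psd : (Wᴴ * W).PosSemidef := Matrix.posSemidef_conjTranspose_mul_self W
    exact fun i => psd.eigenvalues_nonneg i
  set s : Fin n → ℝ := singularValues W with hsdef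
  have hs2 : ∀ i, s i ^ 2 = μ i := fun i => Real.sq_sqrt (hμ i)
  set V : Matrix (Fin n) (Fin n) ℝ := Sᵀ with hVdef
  have hV : V * Vᵀ = 1 := by rw [hVdef, Matrix.transpose_transpose]; exact hS1
  set X : Matrix (Fin n) (Fin n) ℝ := W * S with hXdef
  have hXX : ∀ i j, (∑ k, X k i * X k j) = if i = j then μ i else 0 := by
    have : Xᵀ * X = Matrix.diagonal μ := by
      rw [hXdef, Matrix.transpose_mul]
      calc Sᵀ * Wᵀ * (W * S) = Sᵀ * (Wᵀ * W) * S := by simp only [Matrix.mul_assoc]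
        _ = Sᵀ * (S * Matrix.diagonal μ * Sᵀ) * S := by rw [hspec]
        _ = (Sᵀ * S) * Matrix.diagonal μ * (Sᵀ * S) := by simp only [Matrix.mul_assoc]
        _ = Matrix.diagonal μ := by rw [hS1, Matrix.one_mul, Matrix.mul_one]
    intro i j
    have := congrFun (congrFun this i) j
    simpa [Matrix.mul_apply, Matrix.diagonal, Matrix.transpose_apply] using this
  -- orthonormal family on support of s
  set w : Fin n → EuclideanSpace ℝ (Fin n) :=
    fun i => (WithLp.equiv 2 _).symm (fun k => (s i)⁻¹ * X k i) with hwdef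
  have hwinner : ∀ i j, (inner ℝ (w i) (w j) : ℝ) = (s i)⁻¹ * (s j)⁻¹ * (∑ k, X k i * X k j) := by
    intro i j
    rw [euclid_inner]
    simp only [hwdef, WithLp.equiv_symm_apply, PiLp.toLp_apply, Finset.mul_sum]
    congr 1; ext k; ring
  have hOrtho : Orthonormal ℝ (Set.restrict {i | s i ≠ 0} w) := by
    rw [orthonormal_iff_ite]
    rintro ⟨i, hi⟩ ⟨j, hj⟩
    change inner ℝ (w i) (w j) = _
    rw [hwinner, hXX]
    by_cases hij : i = j
    · subst hij
      simp only [Subtype.mk.injEq, if_pos rfl, if_true]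
      have hsi : s i ≠ 0 := hi
      rw [← hs2 i]
      field_simp
    · rw [if_neg hij, if_neg (by simp [Subtype.mk.injEq, hij])]
      ring
  obtain ⟨b, hb⟩ := hOrtho.exists_orthonormalBasis_extension_of_card_eq
    (by simp [finrank_euclideanSpace_fin])
  set U : Matrix (Fin n) (Fin n) ℝ := Matrix.of (fun i k => b i k) with hUdef
  have hU : U * Uᵀ = 1 := by
    ext i j
    have := orthonormal_iff_ite.mp b.orthonormal i j
    rw [euclid_inner] at this
    simp only [hUdef, Matrix.mul_apply, Matrix.transpose_apply, Matrix.of_apply]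
    rw [this, Matrix.one_apply]
  refine ⟨U, V, hU, hV, ?_⟩
  have hXzero : ∀ i, s i = 0 → ∀ k, X k i = 0 := by
    intro i hsi k
    have hsum : (∑ k, X k i * X k i) = 0 := by
      rw [hXX i i, if_pos rfl, ← hs2 i, hsi]; ring
    have hterm : ∀ k' : Fin n, 0 ≤ X k' i * X k' i := fun k' => mul_self_nonneg _
    have := (Finset.sum_eq_zero_iff_of_nonneg (fun k' _ => hterm k')).mp hsum k (Finset.mem_univ k)
    nlinarith [this]
  have hkey : Uᵀ * Matrix.diagonal s = X := by
    ext k i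
    have hentry : (Uᵀ * Matrix.diagonal s) k i = s i * b i k := by
      simp [Matrix.mul_apply, Matrix.diagonal, hUdef]
      ring
    rw [hentry]
    by_cases hsi : s i = 0
    · rw [hsi, hXzero i hsi k]; ring
    · have : b i = w i := hb i hsi
      rw [this]
      simp only [hwdef, WithLp.equiv_symm_apply, PiLp.toLp_apply]
      field_simp
  calc W = W * (S * Sᵀ) := by rw [hS2, Matrix.mul_one]
    _ = X * V := by rw [hXdef, hVdef, Matrix.mul_assoc]
    _ = Uᵀ * Matrix.diagonal s * V := by rw [hkey]


-- chunk 3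


lemma fi_comm (A B : Matrix (Fin n) (Fin n) ℝ) : frobInner A B = frobInner B A := by
  simp [frobInner, mul_comm]

lemma fi_add_right (G B C : Matrix (Fin n) (Fin n) ℝ) :
    frobInner G (B + C) = frobInner G B + frobInner G C := by
  simp [frobInner, Matrix.add_apply, mul_add, Finset.sum_add_distrib]

lemma fi_sub_right (G B C : Matrix (Fin n) (Fin n) ℝ) :
    frobInner G (B - C) = frobInner G B - frobInner G C := by
  simp [frobInner, Matrix.sub_apply, mul_sub, Finset.sum_sub_distrib]

lemma fi_sub_left (G B C : Matrix (Fin n) (Fin n) ℝ) :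
    frobInner (B - C) G = frobInner B G - frobInner C G := by
  rw [fi_comm, fi_sub_right, fi_comm G B, fi_comm G C]

lemma fi_smul_left (c : ℝ) (B G : Matrix (Fin n) (Fin n) ℝ) :
    frobInner (c • B) G = c * frobInner B G := by
  simp [frobInner, Matrix.smul_apply, smul_eq_mul, Finset.mul_sum, mul_assoc]

def mE : Matrix (Fin n) (Fin n) ℝ →ₗ[ℝ] EuclideanSpace ℝ (Fin n × Fin n) where
  toFun A := (WithLp.equiv 2 _).symm (fun p => A p.1 p.2)
  map_add' := by intros; rfl
  map_smul' := by intros; rfl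

lemma mE_inner (A B : Matrix (Fin n) (Fin n) ℝ) :
    (inner ℝ (mE A) (mE B) : ℝ) = frobInner A B := by
  rw [euclid_inner]
  simp only [mE, LinearMap.coe_mk, AddHom.coe_mk, WithLp.equiv_symm_apply, PiLp.toLp_apply]
  rw [frobInner]
  exact Fintype.sum_prod_type (f := fun p : Fin n × Fin n => A p.1 p.2 * B p.1 p.2)

lemma mE_norm (A : Matrix (Fin n) (Fin n) ℝ) : ‖mE A‖ = frobNorm A := by
  rw [EuclideanSpace.norm_eq, frobNorm]
  congr 1
  simp only [mE, LinearMap.coe_mk, AddHom.coe_mk, WithLp.equiv_symm_apply, PiLp.toLp_apply,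
    Real.norm_eq_abs, sq_abs]
  exact Fintype.sum_prod_type (f := fun p : Fin n × Fin n => (A p.1 p.2)^2)

lemma frobNorm_nonneg (A : Matrix (Fin n) (Fin n) ℝ) : 0 ≤ frobNorm A := Real.sqrt_nonneg _

lemma fi_self (A : Matrix (Fin n) (Fin n) ℝ) : frobInner A A = frobNorm A ^ 2 := by
  rw [← mE_inner, ← mE_norm, real_inner_self_eq_norm_sq]

lemma fi_cauchy_schwarz (A B : Matrix (Fin n) (Fin n) ℝ) :
    frobInner A B ≤ frobNorm A * frobNorm B := by
  rw [← mE_inner, ← mE_norm, ← mE_norm]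
  exact real_inner_le_norm _ _

/-- nuclear norm of any SVD-form. -/
lemma nn_svd {U V W : Matrix (Fin n) (Fin n) ℝ} (hU : U * Uᵀ = 1) (hV : V * Vᵀ = 1)
    {c : Fin n → ℝ} (hc : ∀ i, 0 ≤ c i) (hW : W = Uᵀ * Matrix.diagonal c * V) :
    nuclearNorm W = ∑ i, c i := by
  obtain ⟨P, Q, hP, hQ, hW2⟩ := exists_svd W
  have h1 : nuclearNorm W = frobInner (Pᵀ * Matrix.diagonal (fun _ => (1:ℝ)) * Q) W := by
    conv_rhs => rw [hW2]
    rw [fi_svd_svd hP hQ]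
    simp [nuclearNorm]
  have le1 : nuclearNorm W ≤ ∑ i, c i := by
    rw [h1]
    conv_lhs => rw [hW]
    exact fi_svd_le hP hQ hU hV (fun i => by norm_num) hc
  have ge1 : (∑ i, c i) ≤ nuclearNorm W := by
    have h2 : (∑ i, c i) = frobInner (Uᵀ * Matrix.diagonal (fun _ => (1:ℝ)) * V) W := by
      conv_rhs => rw [hW]
      rw [fi_svd_svd hU hV]; simp
    have h3 : frobInner (Uᵀ * Matrix.diagonal (fun _ => (1:ℝ)) * V) W ≤ nuclearNorm W := by
      conv_lhs => rw [hW2]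
      have := fi_svd_le hU hV hP hQ (c := fun _ => (1:ℝ)) (d := singularValues W)
        (fun i => by norm_num) (sv_nonneg W)
      simpa [nuclearNorm] using this
    linarith
  linarith

lemma nn_dual_le {U V : Matrix (Fin n) (Fin n) ℝ} (hU : U * Uᵀ = 1) (hV : V * Vᵀ = 1)
    {c : Fin n → ℝ} (hc : ∀ i, |c i| ≤ 1) (W : Matrix (Fin n) (Fin n) ℝ) :
    frobInner (Uᵀ * Matrix.diagonal c * V) W ≤ nuclearNorm W := by
  obtain ⟨P, Q, hP, hQ, hW⟩ := exists_svd W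
  conv_lhs => rw [hW]
  have := fi_svd_le hU hV hP hQ hc (sv_nonneg W)
  simpa [nuclearNorm] using this

lemma nn_nonneg (W : Matrix (Fin n) (Fin n) ℝ) : 0 ≤ nuclearNorm W :=
  Finset.sum_nonneg fun i _ => sv_nonneg W i

lemma frobNorm_le_nn (W : Matrix (Fin n) (Fin n) ℝ) : frobNorm W ≤ nuclearNorm W := by
  obtain ⟨P, Q, hP, hQ, hW⟩ := exists_svd W
  have h1 : frobNorm W ^ 2 = ∑ i, singularValues W i * singularValues W i := by
    rw [← fi_self]
    conv_lhs => rw [hW]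
    rw [fi_svd_svd hP hQ]
  have h2 : frobNorm W ^ 2 ≤ nuclearNorm W ^ 2 := by
    rw [h1, nuclearNorm]
    have := Finset.sum_sq_le_sq_sum_of_nonneg (s := Finset.univ)
      (f := singularValues W) (fun i _ => sv_nonneg W i)
    calc (∑ i, singularValues W i * singularValues W i)
        = ∑ i, singularValues W i ^ 2 := by simp [sq]
      _ ≤ _ := this
  nlinarith [frobNorm_nonneg W, nn_nonneg W]

/-- Lipschitz property of the nuclear norm. -/
lemma nn_lip (A B : Matrix (Fin n) (Fin n) ℝ) :
    nuclearNorm A ≤ nuclearNorm B + Real.sqrt n * frobNorm (A - B) := by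
  obtain ⟨P, Q, hP, hQ, hA⟩ := exists_svd A
  set G := Pᵀ * Matrix.diagonal (fun _ => (1:ℝ)) * Q with hGdef
  have h1 : nuclearNorm A = frobInner G A := by
    conv_rhs => rw [hA]
    rw [hGdef, fi_svd_svd hP hQ]; simp [nuclearNorm]
  have h2 : frobInner G A = frobInner G B + frobInner G (A - B) := by
    rw [← fi_add_right]; congr 1; abel
  have h3 : frobInner G B ≤ nuclearNorm B :=
    nn_dual_le hP hQ (fun i => by norm_num) B
  have h4 : frobInner G (A - B) ≤ Real.sqrt n * frobNorm (A - B) := by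
    have hG : frobNorm G = Real.sqrt n := by
      have : frobNorm G ^ 2 = (n : ℝ) := by
        rw [← fi_self, hGdef, fi_svd_svd hP hQ]; simp
      have h5 : frobNorm G = Real.sqrt (frobNorm G ^ 2) := by
        rw [Real.sqrt_sq (frobNorm_nonneg G)]
      rw [h5, this]
    calc frobInner G (A - B) ≤ frobNorm G * frobNorm (A - B) := fi_cauchy_schwarz _ _
      _ = Real.sqrt n * frobNorm (A - B) := by rw [hG]
  linarith


lemma sum_smul_vecMulVec (σ : Fin n → ℝ) (u v : Fin n → Fin n → ℝ) :
    (∑ i, σ i • Matrix.vecMulVec (u i) (v i))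
      = (Matrix.of u)ᵀ * Matrix.diagonal σ * Matrix.of v := by
  ext j k
  simp only [Matrix.sum_apply, Matrix.smul_apply, Matrix.vecMulVec_apply, smul_eq_mul,
    Matrix.mul_apply, Matrix.diagonal, Matrix.transpose_apply, Matrix.of_apply,
    Finset.sum_mul, Finset.mul_sum]
  rw [Finset.sum_comm]
  apply Finset.sum_congr rfl
  intro i _
  rw [Finset.sum_eq_single i]
  · simp [mul_comm, mul_left_comm]
  · intro l _ hli; simp [if_neg (Ne.symm hli)]
  · intro h; exact absurd (Finset.mem_univ i) h

lemma isSVT_matrix {τ : ℝ} {A B : Matrix (Fin n) (Fin n) ℝ} (h : IsSVT τ A B) :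
    ∃ (σ : Fin n → ℝ) (U V : Matrix (Fin n) (Fin n) ℝ),
      U * Uᵀ = 1 ∧ V * Vᵀ = 1 ∧ (∀ i, 0 ≤ σ i) ∧
      A = Uᵀ * Matrix.diagonal σ * V ∧
      B = Uᵀ * Matrix.diagonal (fun i => max (σ i - τ) 0) * V := by
  obtain ⟨σ, u, v, hu, hv, hσ, hA, hB⟩ := h
  refine ⟨σ, Matrix.of u, Matrix.of v, ?_, ?_, hσ, ?_, ?_⟩
  · ext i j
    simpa [Matrix.mul_apply, Matrix.one_apply] using hu i j
  · ext i j
    simpa [Matrix.mul_apply, Matrix.one_apply] using hv i j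
  · rw [hA, sum_smul_vecMulVec]
  · rw [hB, sum_smul_vecMulVec]

/-- The key prox (subgradient) inequality satisfied by the SVT output. -/
lemma prox_ineq {τ : ℝ} (hτ : 0 < τ) {A B : Matrix (Fin n) (Fin n) ℝ}
    (h : IsSVT τ A B) (W : Matrix (Fin n) (Fin n) ℝ) :
    nuclearNorm B + (1/τ) * frobInner (A - B) (W - B) ≤ nuclearNorm W := by
  obtain ⟨σ, U, V, hU, hV, hσ, hA, hB⟩ := isSVT_matrix h
  have hc1 : ∀ i, |min (σ i) τ / τ| ≤ 1 := by
    intro i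
    have h0 : 0 ≤ min (σ i) τ := le_min (hσ i) hτ.le
    rw [abs_of_nonneg (div_nonneg h0 hτ.le), div_le_one hτ]
    exact min_le_right _ _
  have hAB : A - B = τ • (Uᵀ * Matrix.diagonal (fun i => min (σ i) τ / τ) * V) := by
    rw [hA, hB]
    have h1 : Uᵀ * Matrix.diagonal σ * V - Uᵀ * Matrix.diagonal (fun i => max (σ i - τ) 0) * V
        = Uᵀ * Matrix.diagonal (fun i => σ i - max (σ i - τ) 0) * V := by
      rw [← Matrix.sub_mul, ← Matrix.mul_sub, ← Matrix.diagonal_sub]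
    rw [h1]
    have h2 : (Matrix.diagonal (fun i => σ i - max (σ i - τ) 0))
        = τ • Matrix.diagonal (fun i => min (σ i) τ / τ) := by
      rw [← Matrix.diagonal_smul]
      have hfg : (fun i => σ i - max (σ i - τ) 0) = τ • (fun i => min (σ i) τ / τ) := by
        funext i
        show σ i - max (σ i - τ) 0 = τ * (min (σ i) τ / τ)
        rcases le_total (σ i) τ with hle | hle
        · rw [max_eq_right (by linarith : σ i - τ ≤ 0), min_eq_left hle]
          field_simp
          ring
        · rw [max_eq_left (by linarith : 0 ≤ σ i - τ), min_eq_right hle]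
          field_simp
          ring
      rw [hfg]
    rw [h2, Matrix.mul_smul, Matrix.smul_mul]
  have hnnB : nuclearNorm B = ∑ i, max (σ i - τ) 0 :=
    nn_svd hU hV (fun i => le_max_right _ _) hB
  have h2 : frobInner (Uᵀ * Matrix.diagonal (fun i => min (σ i) τ / τ) * V) B
      = nuclearNorm B := by
    rw [hnnB]
    calc frobInner (Uᵀ * Matrix.diagonal (fun i => min (σ i) τ / τ) * V) B
        = frobInner (Uᵀ * Matrix.diagonal (fun i => min (σ i) τ / τ) * V)
            (Uᵀ * Matrix.diagonal (fun i => max (σ i - τ) 0) * V) := by rw [← hB]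
      _ = ∑ i, (min (σ i) τ / τ) * max (σ i - τ) 0 := fi_svd_svd hU hV _ _
      _ = ∑ i, max (σ i - τ) 0 := by
          apply Finset.sum_congr rfl
          intro i _
          rcases le_total (σ i) τ with hle | hle
          · rw [max_eq_right (by linarith : σ i - τ ≤ 0)]; ring
          · rw [min_eq_right hle]; field_simp
  have h3 : frobInner (Uᵀ * Matrix.diagonal (fun i => min (σ i) τ / τ) * V) W
      ≤ nuclearNorm W := nn_dual_le hU hV hc1 W
  have h4 : frobInner (A - B) (W - B)
      = τ * (frobInner (Uᵀ * Matrix.diagonal (fun i => min (σ i) τ / τ) * V) W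
          - frobInner (Uᵀ * Matrix.diagonal (fun i => min (σ i) τ / τ) * V) B) := by
    rw [hAB, fi_smul_left, fi_sub_right]
  rw [h4, h2]
  have hτ' : τ ≠ 0 := hτ.ne'
  field_simp
  linarith


lemma l2norm_nonneg {m : ℕ} (v : Fin m → ℝ) : 0 ≤ l2norm v := Real.sqrt_nonneg _

lemma l2norm_sq {m : ℕ} (v : Fin m → ℝ) : l2norm v ^ 2 = ∑ i, v i ^ 2 :=
  Real.sq_sqrt (Finset.sum_nonneg fun i _ => sq_nonneg _)

lemma dot_le {m : ℕ} (a b : Fin m → ℝ) : (∑ i, a i * b i) ≤ l2norm a * l2norm b := by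
  have h1 : (∑ i, a i * b i) ^ 2 ≤ (l2norm a * l2norm b) ^ 2 := by
    rw [mul_pow, l2norm_sq, l2norm_sq]
    exact Finset.sum_mul_sq_le_sq_mul_sq Finset.univ a b
  nlinarith [mul_nonneg (l2norm_nonneg a) (l2norm_nonneg b)]

def vE {m : ℕ} : (Fin m → ℝ) →ₗ[ℝ] EuclideanSpace ℝ (Fin m) where
  toFun v := (WithLp.equiv 2 _).symm v
  map_add' := by intros; rfl
  map_smul' := by intros; rfl

lemma vE_norm {m : ℕ} (v : Fin m → ℝ) : ‖vE v‖ = l2norm v := by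
  rw [EuclideanSpace.norm_eq, l2norm]
  congr 1
  simp [vE, Real.norm_eq_abs, sq_abs]

def mEinv : EuclideanSpace ℝ (Fin n × Fin n) →ₗ[ℝ] Matrix (Fin n) (Fin n) ℝ where
  toFun x := Matrix.of (fun i j => x (i, j))
  map_add' := by intros; rfl
  map_smul' := by intros; rfl

lemma mEinv_mE (A : Matrix (Fin n) (Fin n) ℝ) : mEinv (mE A) = A := rfl

lemma frobNorm_smul (c : ℝ) (A : Matrix (Fin n) (Fin n) ℝ) :
    frobNorm (c • A) = |c| * frobNorm A := by
  rw [← mE_norm, ← mE_norm, _root_.map_smul, norm_smul, Real.norm_eq_abs]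

lemma l2norm_smul {m : ℕ} (c : ℝ) (v : Fin m → ℝ) : l2norm (c • v) = |c| * l2norm v := by
  rw [← vE_norm, ← vE_norm, _root_.map_smul, norm_smul, Real.norm_eq_abs]

lemma frobNorm_pos {A : Matrix (Fin n) (Fin n) ℝ} (hA : A ≠ 0) : 0 < frobNorm A := by
  rcases lt_or_eq_of_le (frobNorm_nonneg A) with h | h
  · exact h
  · exfalso
    apply hA
    have hm : ‖mE A‖ = 0 := by rw [mE_norm, ← h]
    have : mE A = 0 := norm_eq_zero.mp hm
    have : mEinv (mE A) = mEinv 0 := by rw [this]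
    rwa [mEinv_mE, map_zero] at this

lemma l2norm_pos {m : ℕ} {v : Fin m → ℝ} (hv : v ≠ 0) : 0 < l2norm v := by
  rcases lt_or_eq_of_le (l2norm_nonneg v) with h | h
  · exact h
  · exfalso
    apply hv
    have hm : ‖vE v‖ = 0 := by rw [vE_norm, ← h]
    have h0 : vE v = 0 := norm_eq_zero.mp hm
    funext i
    exact congrFun (congrArg (WithLp.equiv 2 _) h0) i

section OpNorm
variable {m : ℕ} (𝒜 : Matrix (Fin n) (Fin n) ℝ →ₗ[ℝ] (Fin m → ℝ))

lemma opNormA_set_bdd : BddAbove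
    {c : ℝ | ∃ Z : Matrix (Fin n) (Fin n) ℝ, frobNorm Z ≤ 1 ∧ c = l2norm (𝒜 Z)} := by
  set T : EuclideanSpace ℝ (Fin n × Fin n) →L[ℝ] EuclideanSpace ℝ (Fin m) :=
    LinearMap.toContinuousLinearMap ((vE : (Fin m → ℝ) →ₗ[ℝ] _).comp (𝒜.comp mEinv)) with hT
  refine ⟨‖T‖, ?_⟩
  rintro c ⟨Z, hZ, rfl⟩
  have h1 : l2norm (𝒜 Z) = ‖T (mE Z)‖ := by
    rw [hT]
    simp only [LinearMap.coe_toContinuousLinearMap', LinearMap.coe_comp, Function.comp_apply,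
      mEinv_mE]
    rw [vE_norm]
  rw [h1]
  calc ‖T (mE Z)‖ ≤ ‖T‖ * ‖mE Z‖ := T.le_opNorm _
    _ ≤ ‖T‖ * 1 := by
        apply mul_le_mul_of_nonneg_left _ (norm_nonneg T)
        rwa [mE_norm]
    _ = ‖T‖ := mul_one _

lemma opNormA_mem (Z : Matrix (Fin n) (Fin n) ℝ) (hZ : frobNorm Z ≤ 1) :
    l2norm (𝒜 Z) ≤ opNormA 𝒜 :=
  le_csSup (opNormA_set_bdd 𝒜) ⟨Z, hZ, rfl⟩

lemma opNormA_nonneg : 0 ≤ opNormA 𝒜 := by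
  have h := opNormA_mem 𝒜 0 (by simp [frobNorm])
  calc (0:ℝ) ≤ l2norm (𝒜 0) := l2norm_nonneg _
    _ ≤ _ := h

lemma opNormA_bound (X : Matrix (Fin n) (Fin n) ℝ) :
    l2norm (𝒜 X) ≤ opNormA 𝒜 * frobNorm X := by
  by_cases hX : X = 0
  · subst hX
    simp only [map_zero]
    have : l2norm (0 : Fin m → ℝ) = 0 := by simp [l2norm]
    rw [this]
    have : frobNorm (0 : Matrix (Fin n) (Fin n) ℝ) = 0 := by simp [frobNorm]
    rw [this, mul_zero]
  · have hf : 0 < frobNorm X := frobNorm_pos hX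
    have h1 : frobNorm ((frobNorm X)⁻¹ • X) = 1 := by
      rw [frobNorm_smul, abs_of_nonneg (inv_nonneg.mpr hf.le)]
      field_simp
    have h2 := opNormA_mem 𝒜 _ h1.le
    rw [_root_.map_smul, l2norm_smul, abs_of_nonneg (inv_nonneg.mpr hf.le)] at h2
    calc l2norm (𝒜 X) = frobNorm X * ((frobNorm X)⁻¹ * l2norm (𝒜 X)) := by field_simp
      _ ≤ frobNorm X * opNormA 𝒜 := mul_le_mul_of_nonneg_left h2 hf.le
      _ = opNormA 𝒜 * frobNorm X := mul_comm _ _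

lemma opNormA_pos (h𝒜 : 𝒜 ≠ 0) : 0 < opNormA 𝒜 := by
  have hex : ∃ X, 𝒜 X ≠ 0 := by
    by_contra h
    push_neg at h
    exact h𝒜 (LinearMap.ext fun X => by rw [h X]; rfl)
  obtain ⟨X, hX⟩ := hex
  have hX0 : X ≠ 0 := fun h => hX (by rw [h, map_zero])
  have hf : 0 < frobNorm X := frobNorm_pos hX0
  have hl : 0 < l2norm (𝒜 X) := l2norm_pos hX
  have := opNormA_bound 𝒜 X
  nlinarith

lemma adjoint_bound (𝒜s : (Fin m → ℝ) →ₗ[ℝ] Matrix (Fin n) (Fin n) ℝ)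
    (hadj : ∀ (Z : Matrix (Fin n) (Fin n) ℝ) (w : Fin m → ℝ),
      frobInner (𝒜s w) Z = ∑ ℓ, w ℓ * 𝒜 Z ℓ) (w : Fin m → ℝ) :
    frobNorm (𝒜s w) ≤ opNormA 𝒜 * l2norm w := by
  have h1 : frobNorm (𝒜s w) ^ 2 = ∑ ℓ, w ℓ * 𝒜 (𝒜s w) ℓ := by
    rw [← fi_self, hadj]
  have h2 : (∑ ℓ, w ℓ * 𝒜 (𝒜s w) ℓ) ≤ l2norm w * (opNormA 𝒜 * frobNorm (𝒜s w)) := by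
    calc (∑ ℓ, w ℓ * 𝒜 (𝒜s w) ℓ) ≤ l2norm w * l2norm (𝒜 (𝒜s w)) := dot_le _ _
      _ ≤ l2norm w * (opNormA 𝒜 * frobNorm (𝒜s w)) :=
          mul_le_mul_of_nonneg_left (opNormA_bound 𝒜 _) (l2norm_nonneg w)
  have h3 : frobNorm (𝒜s w) ^ 2 ≤ (opNormA 𝒜 * l2norm w) * frobNorm (𝒜s w) := by
    rw [h1]
    calc (∑ ℓ, w ℓ * 𝒜 (𝒜s w) ℓ) ≤ l2norm w * (opNormA 𝒜 * frobNorm (𝒜s w)) := h2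
      _ = (opNormA 𝒜 * l2norm w) * frobNorm (𝒜s w) := by ring
  nlinarith [frobNorm_nonneg (𝒜s w), mul_nonneg (opNormA_nonneg 𝒜) (l2norm_nonneg w)]

/-- Quadratic expansion of the data-fit term. -/
lemma quad_expand (𝒜s : (Fin m → ℝ) →ₗ[ℝ] Matrix (Fin n) (Fin n) ℝ)
    (hadj : ∀ (Z : Matrix (Fin n) (Fin n) ℝ) (w : Fin m → ℝ),
      frobInner (𝒜s w) Z = ∑ ℓ, w ℓ * 𝒜 Z ℓ) (y : Fin m → ℝ)
    (A B : Matrix (Fin n) (Fin n) ℝ) :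
    (1/2) * l2norm (𝒜 B - y) ^ 2
      = (1/2) * l2norm (𝒜 A - y) ^ 2 + frobInner (𝒜s (𝒜 A - y)) (B - A)
        + (1/2) * l2norm (𝒜 (B - A)) ^ 2 := by
  rw [hadj, l2norm_sq, l2norm_sq, l2norm_sq]
  have key : ∀ ℓ, (𝒜 B - y) ℓ = (𝒜 A - y) ℓ + (𝒜 (B - A)) ℓ := by
    intro ℓ
    simp only [Pi.sub_apply, map_sub]
    ring
  have expand : ∑ ℓ, ((𝒜 B - y) ℓ) ^ 2
      = ∑ ℓ, (((𝒜 A - y) ℓ) ^ 2 + 2 * ((𝒜 A - y) ℓ * (𝒜 (B - A)) ℓ) + ((𝒜 (B - A)) ℓ) ^ 2) := by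
    apply Finset.sum_congr rfl
    intro ℓ _
    rw [key ℓ]
    ring
  rw [expand]
  rw [Finset.sum_add_distrib, Finset.sum_add_distrib, ← Finset.mul_sum]
  ring

end OpNorm


lemma frob_sub_symm (A B : Matrix (Fin n) (Fin n) ℝ) : frobNorm (A - B) = frobNorm (B - A) := by
  rw [← mE_norm, ← mE_norm, map_sub, map_sub, norm_sub_rev]

lemma frob_tri (A B C : Matrix (Fin n) (Fin n) ℝ) :
    frobNorm (A - C) ≤ frobNorm (A - B) + frobNorm (B - C) := by
  rw [← mE_norm, ← mE_norm, ← mE_norm, map_sub, map_sub, map_sub]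
  exact norm_sub_le_norm_sub_add_norm_sub _ _ _

lemma fi_three (A B C : Matrix (Fin n) (Fin n) ℝ) :
    frobInner (A - B) (C - B)
      = (frobNorm (A - B) ^ 2 + frobNorm (C - B) ^ 2 - frobNorm (A - C) ^ 2) / 2 := by
  rw [← mE_inner, ← mE_norm, ← mE_norm, ← mE_norm, map_sub, map_sub, map_sub]
  set x := mE A; set y := mE B; set z := mE C
  have h1 : x - z = (x - y) - (z - y) := by abel
  have h2 : ‖x - z‖ ^ 2 = ‖x - y‖ ^ 2 - 2 * (inner ℝ (x - y) (z - y) : ℝ) + ‖z - y‖ ^ 2 := by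
    rw [h1]; exact norm_sub_sq_real _ _
  linarith

end FBS

set_option maxHeartbeats 1000000 in
/-- forward–backward splitting
`Z_{k+1} = D_{α_k λ}(Z_k − α_k 𝒜*(𝒜(Z_k) − y))` converges to a minimizer of
`Z ↦ (1/2)‖𝒜(Z) − y‖₂² + λ‖Z‖_*`. -/
theorem forward_backward_splitting_converges (n m : ℕ)
    (𝒜 : Matrix (Fin n) (Fin n) ℝ →ₗ[ℝ] (Fin m → ℝ)) (h𝒜 : 𝒜 ≠ 0)
    (𝒜s : (Fin m → ℝ) →ₗ[ℝ] Matrix (Fin n) (Fin n) ℝ)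
    (hadj : ∀ (Z : Matrix (Fin n) (Fin n) ℝ) (w : Fin m → ℝ),
      frobInner (𝒜s w) Z = ∑ ℓ, w ℓ * 𝒜 Z ℓ)
    (y : Fin m → ℝ) (lam : ℝ) (hlam : 0 < lam)
    (α : ℕ → ℝ)
    (hstep : ∃ a b : ℝ, 0 < a ∧ b < 2 / (opNormA 𝒜) ^ 2 ∧ ∀ k, a ≤ α k ∧ α k ≤ b)
    (Z : ℕ → Matrix (Fin n) (Fin n) ℝ)
    (hiter : ∀ k, IsSVT (α k * lam) (Z k - α k • 𝒜s (𝒜 (Z k) - y)) (Z (k + 1))) :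
    ∃ Zs : Matrix (Fin n) (Fin n) ℝ,
      (∀ W : Matrix (Fin n) (Fin n) ℝ,
        (1 / 2) * l2norm (𝒜 Zs - y) ^ 2 + lam * nuclearNorm Zs
          ≤ (1 / 2) * l2norm (𝒜 W - y) ^ 2 + lam * nuclearNorm W) ∧
      Tendsto (fun k => frobNorm (Z k - Zs)) atTop (nhds 0) := by
  classical
  obtain ⟨a, b, ha, hb, hab⟩ := hstep
  have hLop : 0 < opNormA 𝒜 := FBS.opNormA_pos 𝒜 h𝒜
  set L : ℝ := opNormA 𝒜 ^ 2 with hLdef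
  have hL : 0 < L := by positivity
  have hαpos : ∀ k, 0 < α k := fun k => lt_of_lt_of_le ha (hab k).1
  have hb0 : 0 < b := lt_of_lt_of_le (hαpos 0) (hab 0).2
  have hbL : b * L < 2 := by
    have h2 : b * L < (2 / L) * L := mul_lt_mul_of_pos_right hb hL
    have h3 : (2 / L) * L = 2 := by field_simp
    linarith
  set cc : ℝ := 1 / b - L / 2 with hccdef
  have hcc : 0 < cc := by
    rw [hccdef, sub_pos, div_lt_div_iff₀ two_pos hb0]
    linarith
  set f : Matrix (Fin n) (Fin n) ℝ → ℝ := fun W => (1 / 2) * l2norm (𝒜 W - y) ^ 2 with hfdef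
  set Gf : Matrix (Fin n) (Fin n) ℝ → Matrix (Fin n) (Fin n) ℝ :=
    fun W => 𝒜s (𝒜 W - y) with hGfdef
  set F : Matrix (Fin n) (Fin n) ℝ → ℝ := fun W => f W + lam * nuclearNorm W with hFdef
  -- quadratic expansion, convexity, descent
  have hquad : ∀ A B, f B = f A + frobInner (Gf A) (B - A) + (1 / 2) * l2norm (𝒜 (B - A)) ^ 2 :=
    fun A B => FBS.quad_expand 𝒜 𝒜s hadj y A B
  have hcvx : ∀ A B, f A + frobInner (Gf A) (B - A) ≤ f B := by
    intro A B
    have h := hquad A B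
    have h2 : 0 ≤ (1 / 2) * l2norm (𝒜 (B - A)) ^ 2 := by positivity
    linarith
  have hAX : ∀ X, l2norm (𝒜 X) ^ 2 ≤ L * frobNorm X ^ 2 := by
    intro X
    have h := FBS.opNormA_bound 𝒜 X
    have h1 := FBS.l2norm_nonneg (𝒜 X)
    have h2 := FBS.frobNorm_nonneg X
    have h3 := FBS.opNormA_nonneg 𝒜
    rw [hLdef]
    nlinarith
  have hdesc : ∀ A B, f B ≤ f A + frobInner (Gf A) (B - A) + (L / 2) * frobNorm (B - A) ^ 2 := by
    intro A B
    have h := hquad A B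
    have h2 := hAX (B - A)
    linarith
  -- the prox-gradient inequality
  have PG : ∀ k W, lam * nuclearNorm (Z (k + 1))
      + (1 / α k) * frobInner (Z k - α k • Gf (Z k) - Z (k + 1)) (W - Z (k + 1))
      ≤ lam * nuclearNorm W := by
    intro k W
    have hτ : 0 < α k * lam := mul_pos (hαpos k) hlam
    have h := FBS.prox_ineq hτ (hiter k) W
    have h2 := mul_le_mul_of_nonneg_left h hlam.le
    have hcoef : lam * (1 / (α k * lam)) = 1 / α k := by
      rw [one_div, mul_inv, ← mul_assoc, mul_comm lam ((α k)⁻¹), mul_assoc,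
        mul_inv_cancel₀ hlam.ne', mul_one, one_div]
    rw [mul_add, ← mul_assoc, hcoef] at h2
    exact h2
  -- decomposition of the prox-gradient residual
  have hdecomp : ∀ k W', frobInner (Z k - α k • Gf (Z k) - Z (k + 1)) W'
      = frobInner (Z k - Z (k + 1)) W' - α k * frobInner (Gf (Z k)) W' := by
    intro k W'
    have h : Z k - α k • Gf (Z k) - Z (k + 1) = (Z k - Z (k + 1)) - α k • Gf (Z k) :=
      sub_right_comm _ _ _
    rw [h, FBS.fi_sub_left, FBS.fi_smul_left]
  set D : ℕ → ℝ := fun k => frobNorm (Z (k + 1) - Z k) ^ 2 with hDdef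
  have hDnonneg : ∀ k, 0 ≤ D k := fun k => sq_nonneg _
  -- sufficient decrease
  have suffdec : ∀ k, F (Z (k + 1)) + cc * D k ≤ F (Z k) := by
    intro k
    have hpg := PG k (Z k)
    rw [hdecomp] at hpg
    have hfi1 : frobInner (Z k - Z (k + 1)) (Z k - Z (k + 1)) = D k := by
      rw [FBS.fi_self, hDdef, FBS.frob_sub_symm]
    rw [hfi1] at hpg
    set fi4 : ℝ := frobInner (Gf (Z k)) (Z k - Z (k + 1)) with hfi4
    have hd := hdesc (Z k) (Z (k + 1))
    have hfi5 : frobInner (Gf (Z k)) (Z (k + 1) - Z k) = -fi4 := by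
      rw [hfi4, FBS.fi_sub_right, FBS.fi_sub_right]; ring
    rw [hfi5] at hd
    -- hpg : lam * N Z+ + (1/αk) * (D k - αk * fi4) ≤ lam * N Zk
    have hexp : (1 / α k) * (D k - α k * fi4) = (1 / α k) * D k - fi4 := by
      rw [mul_sub, ← mul_assoc, one_div, inv_mul_cancel₀ (hαpos k).ne', one_mul]
    rw [hexp] at hpg
    have hinv : 1 / b ≤ 1 / α k := one_div_le_one_div_of_le (hαpos k) (hab k).2
    have hDk := hDnonneg k
    have hcoef : cc * D k ≤ (1 / α k - L / 2) * D k := by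
      apply mul_le_mul_of_nonneg_right _ hDk
      rw [hccdef]; linarith
    have hDk' : frobNorm (Z (k + 1) - Z k) ^ 2 = D k := rfl
    rw [hDk'] at hd
    rw [hFdef]
    simp only
    clear_value D cc L f
    linarith [hpg, hd, hcoef]
  have hFnonneg : ∀ W, 0 ≤ F W := by
    intro W
    rw [hFdef]
    simp only
    have h1 : 0 ≤ f W := by rw [hfdef]; positivity
    have h2 : 0 ≤ nuclearNorm W := FBS.nn_nonneg W
    nlinarith
  have hFmono : ∀ k, F (Z (k + 1)) ≤ F (Z k) := by
    intro k
    have := suffdec k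
    have := mul_nonneg hcc.le (hDnonneg k)
    linarith
  have hFZ0 : ∀ k, F (Z k) ≤ F (Z 0) := by
    intro k
    induction k with
    | zero => exact le_refl _
    | succ k ih => exact le_trans (hFmono k) ih
  -- summability of the squared steps
  have hpartial : ∀ K, cc * (∑ k ∈ Finset.range K, D k) + F (Z K) ≤ F (Z 0) := by
    intro K
    induction K with
    | zero => simp
    | succ K ih =>
      rw [Finset.sum_range_succ]
      have hsd := suffdec K
      have hexp : cc * (∑ k ∈ Finset.range K, D k + D K)
          = cc * (∑ k ∈ Finset.range K, D k) + cc * D K := by ring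
      rw [hexp]
      linarith
  have hsumle : ∀ K, (∑ k ∈ Finset.range K, D k) ≤ F (Z 0) / cc := by
    intro K
    have h1 := hpartial K
    have h2 := hFnonneg (Z K)
    rw [le_div_iff₀ hcc]
    nlinarith
  have hDsum : Summable D := summable_of_sum_range_le hDnonneg hsumle
  have hD0 : Tendsto D atTop (nhds 0) := hDsum.tendsto_atTop_zero
  have hd0 : Tendsto (fun k => frobNorm (Z (k + 1) - Z k)) atTop (nhds 0) := by
    have h := hD0.sqrt
    rw [Real.sqrt_zero] at h
    have heq : (fun k => Real.sqrt (D k)) = fun k => frobNorm (Z (k + 1) - Z k) :=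
      funext fun k => Real.sqrt_sq (FBS.frobNorm_nonneg _)
    rwa [heq] at h
  -- boundedness
  set R : ℝ := F (Z 0) / lam with hRdef
  have hbound : ∀ k, ‖FBS.mE (Z k)‖ ≤ R := by
    intro k
    rw [FBS.mE_norm]
    have h1 : lam * nuclearNorm (Z k) ≤ F (Z 0) := by
      have h2 := hFZ0 k
      have h3 : 0 ≤ f (Z k) := by rw [hfdef]; positivity
      rw [hFdef] at h2 ⊢
      simp only at h2 ⊢
      linarith
    have h4 : frobNorm (Z k) ≤ nuclearNorm (Z k) := FBS.frobNorm_le_nn (Z k)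
    rw [hRdef, le_div_iff₀ hlam]
    have h5 : frobNorm (Z k) * lam ≤ nuclearNorm (Z k) * lam :=
      mul_le_mul_of_nonneg_right h4 hlam.le
    have h6 : nuclearNorm (Z k) * lam = lam * nuclearNorm (Z k) := mul_comm _ _
    linarith
  -- compactness: extract a convergent subsequence of (mE (Z k), α k)
  set K : Set ((EuclideanSpace ℝ (Fin n × Fin n)) × ℝ) :=
    (Metric.closedBall 0 R) ×ˢ (Set.Icc a b) with hKdef
  have hKc : IsCompact K := (isCompact_closedBall _ _).prod isCompact_Icc
  have hmemK : ∀ k, (FBS.mE (Z k), α k) ∈ K := by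
    intro k
    constructor
    · rw [Metric.mem_closedBall, dist_zero_right]
      exact hbound k
    · exact ⟨(hab k).1, (hab k).2⟩
  obtain ⟨⟨xs, abar⟩, hmemlim, φ, hφ, hconv⟩ := hKc.tendsto_subseq hmemK
  have habar : a ≤ abar := hmemlim.2.1
  have habarpos : 0 < abar := lt_of_lt_of_le ha habar
  set Zs : Matrix (Fin n) (Fin n) ℝ := FBS.mEinv xs with hZsdef
  have hmEZs : FBS.mE Zs = xs := rfl
  have h1 : Tendsto (fun j => FBS.mE (Z (φ j))) atTop (nhds xs) :=
    (continuous_fst.tendsto _).comp hconv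
  have h2 : Tendsto (fun j => α (φ j)) atTop (nhds abar) :=
    (continuous_snd.tendsto _).comp hconv
  have hstep0 : Tendsto (fun j => frobNorm (Z (φ j + 1) - Z (φ j))) atTop (nhds 0) :=
    hd0.comp hφ.tendsto_atTop
  have h3 : Tendsto (fun j => FBS.mE (Z (φ j + 1))) atTop (nhds xs) := by
    rw [tendsto_iff_norm_sub_tendsto_zero]
    have hb1 : ∀ j, ‖FBS.mE (Z (φ j + 1)) - xs‖
        ≤ frobNorm (Z (φ j + 1) - Z (φ j)) + ‖FBS.mE (Z (φ j)) - xs‖ := by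
      intro j
      have := norm_sub_le_norm_sub_add_norm_sub (FBS.mE (Z (φ j + 1))) (FBS.mE (Z (φ j))) xs
      have heq : ‖FBS.mE (Z (φ j + 1)) - FBS.mE (Z (φ j))‖ = frobNorm (Z (φ j + 1) - Z (φ j)) := by
        rw [← map_sub, FBS.mE_norm]
      linarith
    have hz : Tendsto (fun j => frobNorm (Z (φ j + 1) - Z (φ j)) + ‖FBS.mE (Z (φ j)) - xs‖)
        atTop (nhds 0) := by
      have h1' := tendsto_iff_norm_sub_tendsto_zero.mp h1
      have := hstep0.add h1'
      simpa using this
    exact squeeze_zero (fun j => norm_nonneg _) hb1 hz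
  have hZφ : Tendsto (fun j => frobNorm (Z (φ j) - Zs)) atTop (nhds 0) := by
    have h1' := tendsto_iff_norm_sub_tendsto_zero.mp h1
    have heq : (fun j => ‖FBS.mE (Z (φ j)) - xs‖) = fun j => frobNorm (Z (φ j) - Zs) := by
      funext j
      rw [← hmEZs, ← map_sub, FBS.mE_norm]
    rwa [heq] at h1'
  have hZφ1 : Tendsto (fun j => frobNorm (Z (φ j + 1) - Zs)) atTop (nhds 0) := by
    have h3' := tendsto_iff_norm_sub_tendsto_zero.mp h3
    have heq : (fun j => ‖FBS.mE (Z (φ j + 1)) - xs‖) = fun j => frobNorm (Z (φ j + 1) - Zs) := by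
      funext j
      rw [← hmEZs, ← map_sub, FBS.mE_norm]
    rwa [heq] at h3'
  -- continuity of Gf through mE
  set T2 : EuclideanSpace ℝ (Fin n × Fin n) →L[ℝ] EuclideanSpace ℝ (Fin n × Fin n) :=
    LinearMap.toContinuousLinearMap (FBS.mE.comp ((𝒜s.comp 𝒜).comp FBS.mEinv)) with hT2def
  have hGfeq : ∀ W, FBS.mE (Gf W) = T2 (FBS.mE W) - FBS.mE (𝒜s y) := by
    intro W
    rw [hT2def]
    simp only [LinearMap.coe_toContinuousLinearMap', LinearMap.coe_comp, Function.comp_apply,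
      FBS.mEinv_mE]
    rw [hGfdef]
    simp only
    rw [map_sub, map_sub]
  have hGfcont : Tendsto (fun j => FBS.mE (Gf (Z (φ j)))) atTop (nhds (FBS.mE (Gf Zs))) := by
    have hT2c : Tendsto (fun j => T2 (FBS.mE (Z (φ j)))) atTop (nhds (T2 xs)) :=
      (T2.continuous.tendsto _).comp h1
    have := hT2c.sub_const (FBS.mE (𝒜s y))
    have heq : (fun j => T2 (FBS.mE (Z (φ j))) - FBS.mE (𝒜s y))
        = fun j => FBS.mE (Gf (Z (φ j))) := by
      funext j; rw [hGfeq]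
    rw [heq] at this
    have heq2 : T2 xs - FBS.mE (𝒜s y) = FBS.mE (Gf Zs) := by
      rw [hGfeq Zs, hmEZs]
    rwa [heq2] at this
  -- continuity of the nuclear norm along the shifted subsequence
  have hNlip : ∀ A, |nuclearNorm A - nuclearNorm Zs| ≤ Real.sqrt n * frobNorm (A - Zs) := by
    intro A
    rw [abs_sub_le_iff]
    constructor
    · have := FBS.nn_lip A Zs
      linarith
    · have := FBS.nn_lip Zs A
      rw [FBS.frob_sub_symm] at this
      linarith
  have hNcont : Tendsto (fun j => nuclearNorm (Z (φ j + 1))) atTop (nhds (nuclearNorm Zs)) := by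
    have hz : Tendsto (fun j => nuclearNorm (Z (φ j + 1)) - nuclearNorm Zs) atTop (nhds 0) := by
      apply squeeze_zero_norm (fun j => hNlip (Z (φ j + 1)))
      have := hZφ1.const_mul (Real.sqrt n)
      simpa using this
    have := hz.add_const (nuclearNorm Zs)
    simpa using this
  -- Zs is a minimizer
  have hmin : ∀ W, F Zs ≤ F W := by
    intro W
    have key : ∀ j, α (φ j) * (lam * nuclearNorm (Z (φ j + 1)))
        + (inner ℝ (FBS.mE (Z (φ j) - α (φ j) • Gf (Z (φ j)) - Z (φ j + 1)))
            (FBS.mE (W - Z (φ j + 1))) : ℝ)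
        ≤ α (φ j) * (lam * nuclearNorm W) := by
      intro j
      have hpg := PG (φ j) W
      have h := mul_le_mul_of_nonneg_left hpg (hαpos (φ j)).le
      rw [mul_add, ← mul_assoc (α (φ j)) (1 / α (φ j))] at h
      have hcoef : α (φ j) * (1 / α (φ j)) = 1 := by
        rw [mul_one_div, div_self (hαpos (φ j)).ne']
      rw [hcoef, one_mul, ← FBS.mE_inner] at h
      exact h
    -- limits of both sides
    have hltend : Tendsto (fun j => α (φ j) * (lam * nuclearNorm (Z (φ j + 1)))
        + (inner ℝ (FBS.mE (Z (φ j) - α (φ j) • Gf (Z (φ j)) - Z (φ j + 1)))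
            (FBS.mE (W - Z (φ j + 1))) : ℝ)) atTop
        (nhds (abar * (lam * nuclearNorm Zs)
          + (inner ℝ (-(abar • FBS.mE (Gf Zs))) (FBS.mE W - xs) : ℝ))) := by
      apply Tendsto.add
      · exact h2.mul (hNcont.const_mul lam)
      · apply Tendsto.inner
        · have heq : (fun j => FBS.mE (Z (φ j) - α (φ j) • Gf (Z (φ j)) - Z (φ j + 1)))
              = fun j => FBS.mE (Z (φ j)) - α (φ j) • FBS.mE (Gf (Z (φ j)))
                  - FBS.mE (Z (φ j + 1)) := by
            funext j
            rw [map_sub, map_sub, _root_.map_smul]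
          rw [heq]
          have hlim : Tendsto (fun j => FBS.mE (Z (φ j)) - α (φ j) • FBS.mE (Gf (Z (φ j)))
              - FBS.mE (Z (φ j + 1))) atTop (nhds (xs - abar • FBS.mE (Gf Zs) - xs)) :=
            (h1.sub (h2.smul hGfcont)).sub h3
          have heq2 : xs - abar • FBS.mE (Gf Zs) - xs = -(abar • FBS.mE (Gf Zs)) := by abel
          rwa [heq2] at hlim
        · have heq : (fun j => FBS.mE (W - Z (φ j + 1)))
              = fun j => FBS.mE W - FBS.mE (Z (φ j + 1)) := by
            funext j; rw [map_sub]
          rw [heq]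
          exact tendsto_const_nhds.sub h3
    have hrtend : Tendsto (fun j => α (φ j) * (lam * nuclearNorm W)) atTop
        (nhds (abar * (lam * nuclearNorm W))) := h2.mul_const _
    have hlim := le_of_tendsto_of_tendsto' hltend hrtend key
    -- rewrite the limit inequality
    have hinner : (inner ℝ (-(abar • FBS.mE (Gf Zs))) (FBS.mE W - xs) : ℝ)
        = -(abar * frobInner (Gf Zs) (W - Zs)) := by
      rw [inner_neg_left, real_inner_smul_left]
      congr 1
      congr 1
      rw [← FBS.mE_inner, map_sub, hmEZs]
    rw [hinner] at hlim
    set fi : ℝ := frobInner (Gf Zs) (W - Zs) with hfidef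
    have hdiv : lam * nuclearNorm Zs - fi ≤ lam * nuclearNorm W := by
      have h' : abar * (lam * nuclearNorm Zs - fi) ≤ abar * (lam * nuclearNorm W) := by
        rw [mul_sub]
        linarith
      exact le_of_mul_le_mul_left h' habarpos
    have hconvx := hcvx Zs W
    rw [hFdef]
    simp only
    rw [← hfidef] at hconvx
    linarith
  -- quasi-Fejér monotonicity
  have hfej : ∀ k, frobNorm (Z (k + 1) - Zs) ^ 2
      ≤ frobNorm (Z k - Zs) ^ 2 + (1 + b * L) * D k := by
    intro k
    have hpg := PG k Zs
    have h := mul_le_mul_of_nonneg_left hpg (hαpos k).le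
    rw [mul_add, ← mul_assoc (α k) (1 / α k)] at h
    have hcoef : α k * (1 / α k) = 1 := by
      rw [mul_one_div, div_self (hαpos k).ne']
    rw [hcoef, one_mul, hdecomp] at h
    -- three-point identity
    have h3pt := FBS.fi_three (Z k) (Z (k + 1)) Zs
    have hu : frobNorm (Z k - Z (k + 1)) ^ 2 = D k := by
      rw [hDdef]; simp only; rw [FBS.frob_sub_symm]
    have hv : frobNorm (Zs - Z (k + 1)) ^ 2 = frobNorm (Z (k + 1) - Zs) ^ 2 := by
      rw [FBS.frob_sub_symm]
    rw [hu, hv] at h3pt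
    -- decompose the gradient inner product
    have hsplit : frobInner (Gf (Z k)) (Zs - Z (k + 1))
        = frobInner (Gf (Z k)) (Zs - Z k) + frobInner (Gf (Z k)) (Z k - Z (k + 1)) := by
      rw [← FBS.fi_add_right]
      congr 1
      abel
    have hcvx1 := hcvx (Z k) Zs
    have hd := hdesc (Z k) (Z (k + 1))
    have hfi45 : frobInner (Gf (Z k)) (Z (k + 1) - Z k)
        = -frobInner (Gf (Z k)) (Z k - Z (k + 1)) := by
      rw [FBS.fi_sub_right, FBS.fi_sub_right]; ring
    rw [hfi45] at hd
    have hmink := hmin (Z (k + 1))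
    rw [hFdef] at hmink
    simp only at hmink
    have hmul := mul_le_mul_of_nonneg_left hmink (hαpos k).le
    have hmulbc := mul_le_mul_of_nonneg_left
      (by linarith [hcvx1, hd] :
        f (Z (k + 1)) - f Zs ≤ -frobInner (Gf (Z k)) (Z k - Z (k + 1))
          - frobInner (Gf (Z k)) (Zs - Z k) + (L / 2) * frobNorm (Z (k + 1) - Z k) ^ 2)
      (hαpos k).le
    have hDk : frobNorm (Z (k + 1) - Z k) ^ 2 = D k := rfl
    rw [hDk] at hmulbc
    have hαb : α k * (L / 2) * D k ≤ b * (L / 2) * D k := by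
      apply mul_le_mul_of_nonneg_right _ (hDnonneg k)
      apply mul_le_mul_of_nonneg_right (hab k).2
      linarith
    rw [hsplit] at h
    have hmul' : α k * (lam * nuclearNorm Zs) - α k * (lam * nuclearNorm (Z (k + 1)))
        ≤ α k * f (Z (k + 1)) - α k * f Zs := by nlinarith [hmul]
    have hmulbc' : α k * f (Z (k + 1)) - α k * f Zs
        ≤ -(α k * frobInner (Gf (Z k)) (Z k - Z (k + 1)))
          - α k * frobInner (Gf (Z k)) (Zs - Z k) + α k * (L / 2) * D k := by
      nlinarith [hmulbc]
    linarith [h, h3pt, hmul', hmulbc', hαb, hDnonneg k]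
  -- wrap-up: quasi-Fejér sequences with a null subsequence converge to zero
  set e : ℕ → ℝ := fun k => (1 + b * L) * D k with hedef
  have hesum : Summable e := hDsum.mul_left _
  have henonneg : ∀ k, 0 ≤ e k := by
    intro k
    apply mul_nonneg _ (hDnonneg k)
    have := mul_nonneg hb0.le hL.le
    linarith
  set S : ℝ := ∑' k, e k with hSdef
  set r : ℕ → ℝ := fun k => S - ∑ i ∈ Finset.range k, e i with hrdef
  have hrnonneg : ∀ k, 0 ≤ r k := by
    intro k
    rw [hrdef]
    simp only [sub_nonneg]
    exact Summable.sum_le_tsum _ (fun i _ => henonneg i) hesum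
  have hr0 : Tendsto r atTop (nhds 0) := by
    have := hesum.hasSum.tendsto_sum_nat
    have h := tendsto_const_nhds.sub this (α := ℕ) (f := fun _ => S)
    rw [← hSdef, sub_self] at h
    exact h
  set g : ℕ → ℝ := fun k => frobNorm (Z k - Zs) ^ 2 + r k with hgdef
  have hganti : Antitone g := by
    apply antitone_nat_of_succ_le
    intro k
    rw [hgdef]
    simp only
    have h1 := hfej k
    have h2 : r k - r (k + 1) = e k := by
      rw [hrdef]
      simp only
      rw [Finset.sum_range_succ]
      ring
    have h3 : e k = (1 + b * L) * D k := rfl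
    linarith
  have hgnonneg : ∀ k, 0 ≤ g k := by
    intro k
    rw [hgdef]
    simp only
    have := hrnonneg k
    nlinarith [sq_nonneg (frobNorm (Z k - Zs))]
  have hgbdd : BddBelow (Set.range g) := ⟨0, by rintro x ⟨k, rfl⟩; exact hgnonneg k⟩
  have hgconv : Tendsto g atTop (nhds (⨅ k, g k)) := tendsto_atTop_ciInf hganti hgbdd
  have hgsub0 : Tendsto (fun j => g (φ j)) atTop (nhds 0) := by
    rw [hgdef]
    simp only
    have hsq : Tendsto (fun j => frobNorm (Z (φ j) - Zs) ^ 2) atTop (nhds 0) := by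
      have := hZφ.mul hZφ
      simp only [mul_zero] at this
      have heq : (fun j => frobNorm (Z (φ j) - Zs) ^ 2)
          = fun j => frobNorm (Z (φ j) - Zs) * frobNorm (Z (φ j) - Zs) := by
        funext j; ring
      rwa [heq]
    have hrsub : Tendsto (fun j => r (φ j)) atTop (nhds 0) := hr0.comp hφ.tendsto_atTop
    have := hsq.add hrsub
    simpa using this
  have hinf0 : (⨅ k, g k) = 0 := by
    have hgsubconv : Tendsto (fun j => g (φ j)) atTop (nhds (⨅ k, g k)) :=
      hgconv.comp hφ.tendsto_atTop
    exact tendsto_nhds_unique hgsubconv hgsub0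
  rw [hinf0] at hgconv
  have hsq0 : Tendsto (fun k => frobNorm (Z k - Zs) ^ 2) atTop (nhds 0) := by
    apply squeeze_zero (fun k => sq_nonneg _) _ hgconv
    intro k
    rw [hgdef]
    simp only
    have := hrnonneg k
    linarith
  have hfinal : Tendsto (fun k => frobNorm (Z k - Zs)) atTop (nhds 0) := by
    have h := hsq0.sqrt
    rw [Real.sqrt_zero] at h
    have heq : (fun k => Real.sqrt (frobNorm (Z k - Zs) ^ 2))
        = fun k => frobNorm (Z k - Zs) :=
      funext fun k => Real.sqrt_sq (FBS.frobNorm_nonneg _)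
    rwa [heq] at h
  refine ⟨Zs, ?_, hfinal⟩
  intro W
  have := hmin W
  rw [hFdef] at this
  simp only at this
  rw [hfdef] at this
  simp only at this
  exact this
end
end

section
/- Let X ∈ ℝ^{n×n} have rank at most r and y = 𝒜(X), where 𝒜 : ℝ^{n×n} → ℝ^m is a linear operator satisfying the restricted isometry property of rank 2r with constant δ_{2r} < 1/3. Consider the iterative hard thresholding (SVP) iteration Z_{k+1} = 𝒯_r(Z_k + α 𝒜*(y − 𝒜(Z_k))) with constant stepsize α = 1/(1 + δ_{2r}), started from Z₀ = 0. Then the iterates converge linearly to X: there exists ρ ∈ (0,1), depending only on δ_{2r}, such that ‖𝒜(Z_{k+1}) − y‖₂² ≤ ρ ‖𝒜(Z_k) − y‖₂² for all k, and consequently Z_k → X. -/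
noncomputable section

open scoped BigOperators
open Matrix Filter

/-- Restricted isometry property of rank `s` with constant `δ`. -/
def HasRIP {n m : ℕ} (A : Matrix (Fin n) (Fin n) ℝ → (Fin m → ℝ)) (s : ℕ) (δ : ℝ) : Prop :=
  ∀ Z : Matrix (Fin n) (Fin n) ℝ, Z.rank ≤ s →
    (1 - δ) * frobNorm Z ^ 2 ≤ l2norm (A Z) ^ 2 ∧
    l2norm (A Z) ^ 2 ≤ (1 + δ) * frobNorm Z ^ 2

/-- `Z` is a best rank-`r` approximation of `M` in Frobenius norm. -/
def IsBestRankApprox {n : ℕ} (r : ℕ) (M Z : Matrix (Fin n) (Fin n) ℝ) : Prop :=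
  Z.rank ≤ r ∧ ∀ W : Matrix (Fin n) (Fin n) ℝ, W.rank ≤ r →
    frobNorm (M - Z) ≤ frobNorm (M - W)

/-! ### Auxiliary lemmas -/

lemma myrank_sub_le {n : ℕ} (A B : Matrix (Fin n) (Fin n) ℝ) :
    (A - B).rank ≤ A.rank + B.rank := by
  unfold Matrix.rank
  have h : LinearMap.range (A - B).mulVecLin ≤
      LinearMap.range A.mulVecLin ⊔ LinearMap.range B.mulVecLin := by
    rintro x ⟨v, rfl⟩
    have : (A - B).mulVecLin v = A.mulVecLin v - B.mulVecLin v := by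
      simp [Matrix.mulVecLin, Matrix.sub_mulVec]
    rw [this]
    exact Submodule.sub_mem_sup (LinearMap.mem_range_self _ _) (LinearMap.mem_range_self _ _)
  exact (Submodule.finrank_mono h).trans
    (Submodule.finrank_add_le_finrank_add_finrank _ _)

lemma sq_l2norm {m : ℕ} (v : Fin m → ℝ) : l2norm v ^ 2 = ∑ i, v i ^ 2 := by
  rw [l2norm, Real.sq_sqrt]
  exact Finset.sum_nonneg fun i _ => sq_nonneg _

lemma sq_frobNorm {n₁ n₂ : ℕ} (A : Matrix (Fin n₁) (Fin n₂) ℝ) :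
    frobNorm A ^ 2 = ∑ i, ∑ j, A i j ^ 2 := by
  rw [frobNorm, Real.sq_sqrt]
  exact Finset.sum_nonneg fun i _ => Finset.sum_nonneg fun j _ => sq_nonneg _

lemma frobNorm_nonneg {n₁ n₂ : ℕ} (A : Matrix (Fin n₁) (Fin n₂) ℝ) : 0 ≤ frobNorm A :=
  Real.sqrt_nonneg _

lemma l2norm_nonneg {m : ℕ} (v : Fin m → ℝ) : 0 ≤ l2norm v := Real.sqrt_nonneg _

lemma frobNorm_sub_symm {n : ℕ} (A B : Matrix (Fin n) (Fin n) ℝ) :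
    frobNorm (A - B) = frobNorm (B - A) := by
  unfold frobNorm
  congr 1
  refine Finset.sum_congr rfl fun i _ => Finset.sum_congr rfl fun j _ => ?_
  simp [Matrix.sub_apply]; ring

/-- expansion of the squared Frobenius norm of `A + c • B`. -/
lemma frob_expand {n : ℕ} (A B : Matrix (Fin n) (Fin n) ℝ) (c : ℝ) :
    frobNorm (A + c • B) ^ 2
      = frobNorm A ^ 2 + 2 * c * frobInner A B + c ^ 2 * frobNorm B ^ 2 := by
  rw [sq_frobNorm, sq_frobNorm, sq_frobNorm, frobInner]
  have h : ∀ i j, (A i j + c * B i j) ^ 2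
      = A i j ^ 2 + 2 * c * (A i j * B i j) + c ^ 2 * B i j ^ 2 := fun i j => by ring
  simp only [Matrix.add_apply, Matrix.smul_apply, smul_eq_mul, h,
    Finset.sum_add_distrib, ← Finset.mul_sum]

lemma sqrt_pow_comm (x : ℝ) (hx : 0 ≤ x) (k : ℕ) :
    Real.sqrt (x ^ k) = Real.sqrt x ^ k := by
  induction k with
  | zero => simp
  | succ k ih => rw [pow_succ, pow_succ, Real.sqrt_mul (pow_nonneg hx k), ih]

lemma l2_expand {m : ℕ} (a b : Fin m → ℝ) :
    l2norm (a + b) ^ 2 = l2norm a ^ 2 + 2 * (∑ i, a i * b i) + l2norm b ^ 2 := by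
  rw [sq_l2norm, sq_l2norm, sq_l2norm]
  have h : ∀ i, (a i + b i) ^ 2 = a i ^ 2 + 2 * (a i * b i) + b i ^ 2 := fun i => by ring
  simp only [Pi.add_apply, h, Finset.sum_add_distrib, ← Finset.mul_sum]

/-- IHT/SVP: under the rank-`2r` RIP with `δ_{2r} < 1/3`, iterative hard
thresholding with stepsize `1/(1+δ_{2r})` started at `Z₀ = 0` converges linearly to `X`:
there is `ρ ∈ (0,1)` depending only on `δ_{2r}` with
`‖𝒜(Z_{k+1}) − y‖₂² ≤ ρ ‖𝒜(Z_k) − y‖₂²` for all `k`, and `Z_k → X`. -/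
theorem iht_svp_converges (δ : ℝ) (hδ0 : 0 < δ) (hδ : δ < 1 / 3) :
    ∃ ρ : ℝ, 0 < ρ ∧ ρ < 1 ∧
    ∀ (n m r : ℕ) (𝒜 : Matrix (Fin n) (Fin n) ℝ →ₗ[ℝ] (Fin m → ℝ))
      (𝒜s : (Fin m → ℝ) →ₗ[ℝ] Matrix (Fin n) (Fin n) ℝ),
      (∀ (Z : Matrix (Fin n) (Fin n) ℝ) (w : Fin m → ℝ),
        frobInner (𝒜s w) Z = ∑ ℓ, w ℓ * 𝒜 Z ℓ) →
      HasRIP (fun Z => 𝒜 Z) (2 * r) δ →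
      ∀ (X : Matrix (Fin n) (Fin n) ℝ), X.rank ≤ r →
      ∀ (y : Fin m → ℝ), y = 𝒜 X →
      ∀ Z : ℕ → Matrix (Fin n) (Fin n) ℝ, Z 0 = 0 →
        (∀ k, IsBestRankApprox r
          (Z k + (1 / (1 + δ)) • 𝒜s (y - 𝒜 (Z k))) (Z (k + 1))) →
        (∀ k, l2norm (𝒜 (Z (k + 1)) - y) ^ 2 ≤ ρ * l2norm (𝒜 (Z k) - y) ^ 2) ∧
        Tendsto (fun k => frobNorm (Z k - X)) atTop (nhds 0) := by
  have h1δ : (0:ℝ) < 1 - δ := by linarith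
  have h1δ' : (0:ℝ) < 1 + δ := by linarith
  refine ⟨2 * δ / (1 - δ), by positivity, ?_, ?_⟩
  · rw [div_lt_one h1δ]; linarith
  intro n m r 𝒜 𝒜s hadj hRIP X hX y hy Z hZ0 happrox
  set ρ : ℝ := 2 * δ / (1 - δ) with hρdef
  -- ranks of iterates
  have hrank : ∀ k, (Z k).rank ≤ r := by
    intro k
    cases k with
    | zero => rw [hZ0]; simp [Matrix.rank_zero]
    | succ k => exact (happrox k).1
  have hrank2 : ∀ (A B : Matrix (Fin n) (Fin n) ℝ),
      A.rank ≤ r → B.rank ≤ r → (A - B).rank ≤ 2 * r := fun A B hA hB =>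
    (myrank_sub_le A B).trans (by omega)
  -- the key one-step estimate
  have key : ∀ k, l2norm (𝒜 (Z (k + 1)) - y) ^ 2 ≤ ρ * l2norm (𝒜 (Z k) - y) ^ 2 := by
    intro k
    set W : Matrix (Fin n) (Fin n) ℝ := Z (k+1) with hW
    set G : Matrix (Fin n) (Fin n) ℝ := 𝒜s (y - 𝒜 (Z k)) with hG
    set α : ℝ := 1 / (1 + δ) with hα
    set Fk : ℝ := l2norm (𝒜 (Z k) - y) ^ 2 with hFk
    -- the inner-product term S, for an arbitrary matrix V
    -- S V := ∑ ℓ, (𝒜 (V - Z k)) ℓ * (𝒜 (Z k) - y) ℓ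
    have hFknn : 0 ≤ Fk := sq_nonneg _
    -- adjoint computation: frobInner (V - Z k) G = - S V   (as sums)
    have hadj' : ∀ V : Matrix (Fin n) (Fin n) ℝ,
        frobInner (V - Z k) G = -∑ ℓ, (𝒜 (V - Z k)) ℓ * (𝒜 (Z k) - y) ℓ := by
      intro V
      have h1 : frobInner (V - Z k) G = frobInner G (V - Z k) := by
        unfold frobInner
        refine Finset.sum_congr rfl fun i _ => Finset.sum_congr rfl fun j _ => mul_comm _ _
      rw [h1, hG, hadj]
      rw [← Finset.sum_neg_distrib]
      refine Finset.sum_congr rfl fun ℓ _ => ?_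
      simp only [Pi.sub_apply]
      ring
    -- expansion of the squared distance to B := Z k + α • G
    have hexp : ∀ V : Matrix (Fin n) (Fin n) ℝ,
        frobNorm (Z k + α • G - V) ^ 2
          = frobNorm (V - Z k) ^ 2
            + 2 * α * (∑ ℓ, (𝒜 (V - Z k)) ℓ * (𝒜 (Z k) - y) ℓ)
            + α ^ 2 * frobNorm G ^ 2 := by
      intro V
      have h2 : Z k + α • G - V = (Z k - V) + α • G := by abel
      rw [h2, frob_expand]
      have h3 : frobNorm (Z k - V) = frobNorm (V - Z k) := frobNorm_sub_symm _ _
      have h4 : frobInner (Z k - V) G = -frobInner (V - Z k) G := by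
        unfold frobInner
        rw [← Finset.sum_neg_distrib]
        refine Finset.sum_congr rfl fun i _ => ?_
        rw [← Finset.sum_neg_distrib]
        refine Finset.sum_congr rfl fun j _ => ?_
        simp [Matrix.sub_apply]; ring
      rw [h3, h4, hadj' V]
      ring
    -- best rank-r approximation inequality, applied with X
    have hbest : frobNorm (Z k + α • G - W) ^ 2 ≤ frobNorm (Z k + α • G - X) ^ 2 := by
      have := (happrox k).2 X hX
      exact pow_le_pow_left₀ (frobNorm_nonneg _) this 2
    rw [hexp W, hexp X] at hbest
    -- abbreviations for the scalar quantities
    set SW : ℝ := ∑ ℓ, (𝒜 (W - Z k)) ℓ * (𝒜 (Z k) - y) ℓ with hSW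
    set SX : ℝ := ∑ ℓ, (𝒜 (X - Z k)) ℓ * (𝒜 (Z k) - y) ℓ with hSX
    set U1 : ℝ := frobNorm (W - Z k) ^ 2 with hU1
    set U2 : ℝ := frobNorm (X - Z k) ^ 2 with hU2
    -- from hbest: U1 + 2α SW ≤ U2 + 2α SX, hence (1+δ) U1 + 2 SW ≤ (1+δ) U2 + 2 SX
    have hα1 : α * (1 + δ) = 1 := by rw [hα]; field_simp
    have hstep1 : (1 + δ) * U1 + 2 * SW ≤ (1 + δ) * U2 + 2 * SX := by
      have h5 : U1 + 2 * α * SW ≤ U2 + 2 * α * SX := by linarith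
      have h6 := mul_le_mul_of_nonneg_left h5 (le_of_lt h1δ')
      have hL : (1 + δ) * (U1 + 2 * α * SW) = (1 + δ) * U1 + 2 * SW := by
        linear_combination 2 * SW * hα1
      have hR : (1 + δ) * (U2 + 2 * α * SX) = (1 + δ) * U2 + 2 * SX := by
        linear_combination 2 * SX * hα1
      linarith [hL ▸ hR ▸ h6]
    -- expansion of F(k+1)
    have hvec : 𝒜 W - y = (𝒜 (Z k) - y) + 𝒜 (W - Z k) := by
      rw [map_sub]; abel
    have hFk1 : l2norm (𝒜 W - y) ^ 2 = Fk + 2 * SW + l2norm (𝒜 (W - Z k)) ^ 2 := by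
      rw [hvec, l2_expand]
      have hc : ∑ i, (𝒜 (Z k) - y) i * (𝒜 (W - Z k)) i = SW := by
        rw [hSW]; exact Finset.sum_congr rfl fun i _ => mul_comm _ _
      rw [hc]
    -- RIP upper bound on the residual direction
    have hripW := (hRIP (W - Z k) (hrank2 W (Z k) (hrank (k+1)) (hrank k))).2
    -- RIP lower bound on X - Z k, and 𝒜 (X - Z k) = -(𝒜 Z k - y)
    have hXvec : 𝒜 (X - Z k) = -(𝒜 (Z k) - y) := by
      rw [map_sub, hy]
      abel
    have hripX := (hRIP (X - Z k) (hrank2 X (Z k) hX (hrank k))).1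
    have hXnorm : l2norm (𝒜 (X - Z k)) ^ 2 = Fk := by
      rw [hXvec, hFk, sq_l2norm, sq_l2norm]
      refine Finset.sum_congr rfl fun i _ => ?_
      simp only [Pi.neg_apply, Pi.sub_apply]
      ring
    have hripX' : (1 - δ) * U2 ≤ Fk := by rw [← hXnorm]; exact hripX
    -- SX = -Fk
    have hSXval : SX = -Fk := by
      rw [hSX, hFk, sq_l2norm]
      rw [← Finset.sum_neg_distrib]
      refine Finset.sum_congr rfl fun ℓ _ => ?_
      rw [hXvec]
      simp only [Pi.neg_apply]
      ring
    -- combine everything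
    have hchain : l2norm (𝒜 W - y) ^ 2 ≤ -Fk + (1 + δ) * U2 := by
      have := hripW
      simp only at this
      nlinarith [hFk1, hstep1, hSXval, this]
    rw [div_mul_eq_mul_div, le_div_iff₀ h1δ]
    nlinarith [mul_le_mul_of_nonneg_right hchain (le_of_lt h1δ),
      mul_le_mul_of_nonneg_left hripX' (le_of_lt h1δ')]
  refine ⟨key, ?_⟩
  -- geometric decay of F k
  set F : ℕ → ℝ := fun k => l2norm (𝒜 (Z k) - y) ^ 2 with hF
  have hρ0 : 0 < ρ := by positivity
  have hρ1 : ρ < 1 := by rw [hρdef, div_lt_one h1δ]; linarith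
  have hgeo : ∀ k, F k ≤ ρ ^ k * F 0 := by
    intro k
    induction k with
    | zero => simp
    | succ k ih =>
      calc F (k+1) ≤ ρ * F k := key k
        _ ≤ ρ * (ρ ^ k * F 0) := by
            exact mul_le_mul_of_nonneg_left ih (le_of_lt hρ0)
        _ = ρ ^ (k+1) * F 0 := by ring
  -- bound the Frobenius distance by F k
  have hdist : ∀ k, (1 - δ) * frobNorm (Z k - X) ^ 2 ≤ F k := by
    intro k
    have hr := (hRIP (Z k - X) (hrank2 (Z k) X (hrank k) hX)).1
    have hv : 𝒜 (Z k - X) = 𝒜 (Z k) - y := by rw [map_sub, hy]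
    show (1 - δ) * frobNorm (Z k - X) ^ 2 ≤ l2norm (𝒜 (Z k) - y) ^ 2
    rw [← hv]
    exact hr
  -- squeeze
  have hF0 : 0 ≤ F 0 := sq_nonneg _
  set C : ℝ := Real.sqrt (F 0 / (1 - δ)) with hC
  have hbound : ∀ k, frobNorm (Z k - X) ≤ C * Real.sqrt ρ ^ k := by
    intro k
    have h1 : frobNorm (Z k - X) ^ 2 ≤ ρ ^ k * (F 0 / (1 - δ)) := by
      have h3 := hgeo k
      have h2 := hdist k
      rw [← mul_div_assoc, le_div_iff₀ h1δ]
      nlinarith [h3, h2, pow_nonneg (le_of_lt hρ0) k]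
    calc frobNorm (Z k - X) ≤ Real.sqrt (ρ ^ k * (F 0 / (1 - δ))) := by
          rw [← Real.sqrt_sq (frobNorm_nonneg _)]
          exact Real.sqrt_le_sqrt h1
      _ = C * Real.sqrt ρ ^ k := by
          rw [Real.sqrt_mul (pow_nonneg (le_of_lt hρ0) k),
            sqrt_pow_comm ρ (le_of_lt hρ0) k]
          ring
  have htend : Tendsto (fun k => C * Real.sqrt ρ ^ k) atTop (nhds 0) := by
    have h1 : Real.sqrt ρ < 1 := by
      rw [show (1:ℝ) = Real.sqrt 1 by simp]
      exact Real.sqrt_lt_sqrt (le_of_lt hρ0) hρ1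
    have := tendsto_pow_atTop_nhds_zero_of_lt_one (Real.sqrt_nonneg ρ) h1
    have h2 := this.const_mul C
    simpa using h2
  exact squeeze_zero (fun k => frobNorm_nonneg _) hbound htend
end
end

section
/- There exist universal constants c > 0, c₀ > 0 and ρ ∈ (0,1) such that the following holds. Let X ∈ ℝ^{n×n} have rank r, let y = 𝒜(X), and suppose 𝒜 satisfies the restricted isometry property of rank 3r with constant δ_{3r} ≤ c. Consider the RGrad iteration: G_k = 𝒜*(y − 𝒜(Z_k)), Z_{k+1} = 𝒯_r(Z_k + α_k 𝒫_{T_k}(G_k)), with stepsize α_k = ‖𝒫_{T_k}(G_k)‖_F² / ‖𝒜(𝒫_{T_k}(G_k))‖₂², where T_k is the tangent space of the rank-r matrix manifold at Z_k and 𝒫_{T_k} the orthogonal projection onto it. If the initial guess Z₀ is a rank-r matrix satisfying ‖Z₀ − X‖_F ≤ c₀ σ_r(X), then ‖Z_k − X‖_F ≤ ρ^k ‖Z₀ − X‖_F for all k ≥ 0; in particular the iterates converge linearly to X. -/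
noncomputable section

open scoped BigOperators
open Matrix

set_option maxHeartbeats 1000000

/-- `P` is the orthogonal projection (w.r.t. the Frobenius inner product) of `G` onto the
tangent space `T = {U Bᵀ + C Vᵀ}` of the rank-`r` manifold. -/
def IsTanProj {n r : ℕ} (U V : Matrix (Fin n) (Fin r) ℝ)
    (G P : Matrix (Fin n) (Fin n) ℝ) : Prop :=
  (∃ B C : Matrix (Fin n) (Fin r) ℝ, P = U * Bᵀ + C * Vᵀ) ∧
  ∀ B C : Matrix (Fin n) (Fin r) ℝ, frobInner (G - P) (U * Bᵀ + C * Vᵀ) = 0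

namespace RG

def dot2 {m : ℕ} (u v : Fin m → ℝ) : ℝ := ∑ i, u i * v i

variable {n m a b r n₁ n₂ n₃ : ℕ}

lemma frobNorm_nonneg (A : Matrix (Fin n₁) (Fin n₂) ℝ) : 0 ≤ frobNorm A :=
  Real.sqrt_nonneg _

lemma frobNorm_sq (A : Matrix (Fin n) (Fin n) ℝ) : frobNorm A ^ 2 = frobInner A A := by
  rw [frobNorm, Real.sq_sqrt (by positivity)]
  unfold frobInner
  exact Finset.sum_congr rfl fun i _ => Finset.sum_congr rfl fun j _ => (sq (A i j)).symm ▸ rfl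

lemma l2norm_nonneg (u : Fin m → ℝ) : 0 ≤ l2norm u := Real.sqrt_nonneg _

lemma l2norm_sq (u : Fin m → ℝ) : l2norm u ^ 2 = dot2 u u := by
  rw [l2norm, Real.sq_sqrt (by positivity), dot2]
  exact Finset.sum_congr rfl fun i _ => sq (u i)

lemma frobInner_comm (A B : Matrix (Fin n) (Fin n) ℝ) : frobInner A B = frobInner B A := by
  unfold frobInner
  exact Finset.sum_congr rfl fun i _ => Finset.sum_congr rfl fun j _ => mul_comm _ _

lemma frobInner_add_left (A B C : Matrix (Fin n) (Fin n) ℝ) :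
    frobInner (A + B) C = frobInner A C + frobInner B C := by
  unfold frobInner
  rw [← Finset.sum_add_distrib]
  refine Finset.sum_congr rfl fun i _ => ?_
  rw [← Finset.sum_add_distrib]
  exact Finset.sum_congr rfl fun j _ => by simp [Matrix.add_apply]; ring

lemma frobInner_smul_left (c : ℝ) (A B : Matrix (Fin n) (Fin n) ℝ) :
    frobInner (c • A) B = c * frobInner A B := by
  unfold frobInner
  rw [Finset.mul_sum]
  refine Finset.sum_congr rfl fun i _ => ?_
  rw [Finset.mul_sum]
  exact Finset.sum_congr rfl fun j _ => by simp [Matrix.smul_apply]; ring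

lemma frobInner_add_right (A B C : Matrix (Fin n) (Fin n) ℝ) :
    frobInner A (B + C) = frobInner A B + frobInner A C := by
  rw [frobInner_comm, frobInner_add_left, frobInner_comm B A, frobInner_comm C A]

lemma frobInner_smul_right (c : ℝ) (A B : Matrix (Fin n) (Fin n) ℝ) :
    frobInner A (c • B) = c * frobInner A B := by
  rw [frobInner_comm, frobInner_smul_left, frobInner_comm B A]

lemma frobInner_sub_left (A B C : Matrix (Fin n) (Fin n) ℝ) :
    frobInner (A - B) C = frobInner A C - frobInner B C := by
  have h := frobInner_add_left (A - B) B C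
  rw [sub_add_cancel] at h
  linarith

lemma frobInner_zero_left (B : Matrix (Fin n) (Fin n) ℝ) : frobInner 0 B = 0 := by
  have := frobInner_smul_left 0 B B
  simpa using this

lemma frobInner_self_nonneg (A : Matrix (Fin n) (Fin n) ℝ) : 0 ≤ frobInner A A := by
  rw [← frobNorm_sq]; positivity

lemma eq_zero_of_frobInner_self (A : Matrix (Fin n) (Fin n) ℝ) (h : frobInner A A = 0) :
    A = 0 := by
  unfold frobInner at h
  have h' : ∀ i ∈ (Finset.univ : Finset (Fin n)), ∑ j, A i j * A i j = 0 := by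
    rw [← Finset.sum_eq_zero_iff_of_nonneg]
    · exact h
    · intro i _
      exact Finset.sum_nonneg fun j _ => mul_self_nonneg _
  ext i j
  have h'' := (Finset.sum_eq_zero_iff_of_nonneg (fun j _ => mul_self_nonneg (A i j))).1
      (h' i (Finset.mem_univ i)) j (Finset.mem_univ j)
  simpa using mul_self_eq_zero.1 h''

lemma frobNorm_eq_zero {A : Matrix (Fin n) (Fin n) ℝ} (h : frobNorm A = 0) : A = 0 := by
  apply eq_zero_of_frobInner_self
  rw [← frobNorm_sq, h]; ring

lemma frobInner_le (A B : Matrix (Fin n) (Fin n) ℝ) :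
    frobInner A B ≤ frobNorm A * frobNorm B := by
  have h := Real.sum_mul_le_sqrt_mul_sqrt (Finset.univ : Finset (Fin n × Fin n))
      (fun p => A p.1 p.2) (fun p => B p.1 p.2)
  rw [Fintype.sum_prod_type, Fintype.sum_prod_type, Fintype.sum_prod_type] at h
  exact h

lemma abs_frobInner_le (A B : Matrix (Fin n) (Fin n) ℝ) :
    |frobInner A B| ≤ frobNorm A * frobNorm B := by
  rw [abs_le]
  constructor
  · have h := frobInner_le A ((-1 : ℝ) • B)
    rw [frobInner_smul_right] at h
    have hn : frobNorm ((-1 : ℝ) • B) = frobNorm B := by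
      unfold frobNorm
      congr 1
      exact Finset.sum_congr rfl fun i _ => Finset.sum_congr rfl fun j _ => by
        simp [Matrix.smul_apply]
    rw [hn] at h; linarith
  · exact frobInner_le A B

lemma frobNorm_smul (c : ℝ) (A : Matrix (Fin n) (Fin n) ℝ) :
    frobNorm (c • A) = |c| * frobNorm A := by
  unfold frobNorm
  have h : ∑ i, ∑ j, ((c • A) i j) ^ 2 = c ^ 2 * ∑ i, ∑ j, (A i j) ^ 2 := by
    rw [Finset.mul_sum]
    refine Finset.sum_congr rfl fun i _ => ?_
    rw [Finset.mul_sum]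
    exact Finset.sum_congr rfl fun j _ => by simp [Matrix.smul_apply]; ring
  rw [h, Real.sqrt_mul (sq_nonneg c), Real.sqrt_sq_eq_abs]

lemma frobNorm_neg (A : Matrix (Fin n) (Fin n) ℝ) : frobNorm (-A) = frobNorm A := by
  have := frobNorm_smul (-1) A
  simpa using this

lemma frobNorm_sub_comm (A B : Matrix (Fin n) (Fin n) ℝ) :
    frobNorm (A - B) = frobNorm (B - A) := by
  rw [← frobNorm_neg (A - B), neg_sub]

lemma frobNorm_add_le (A B : Matrix (Fin n) (Fin n) ℝ) :
    frobNorm (A + B) ≤ frobNorm A + frobNorm B := by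
  have hsq : frobNorm (A + B) ^ 2 ≤ (frobNorm A + frobNorm B) ^ 2 := by
    rw [frobNorm_sq, frobInner_add_left, frobInner_add_right, frobInner_add_right]
    have h1 := frobInner_le A B
    have h2 : frobInner B A = frobInner A B := frobInner_comm B A
    have h3 := frobNorm_sq A
    have h4 := frobNorm_sq B
    nlinarith [frobNorm_nonneg A, frobNorm_nonneg B]
  have h0 : (0:ℝ) ≤ frobNorm A + frobNorm B := by
    have := frobNorm_nonneg A; have := frobNorm_nonneg B; linarith
  nlinarith [frobNorm_nonneg (A + B)]

lemma frobInner_eq_trace (A B : Matrix (Fin n) (Fin n) ℝ) :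
    frobInner A B = Matrix.trace (Aᵀ * B) := by
  unfold frobInner Matrix.trace
  rw [Finset.sum_comm]
  refine Finset.sum_congr rfl fun j _ => ?_
  simp [Matrix.diag, Matrix.mul_apply, Matrix.transpose_apply]

lemma frobNorm_sq_eq_trace (A : Matrix (Fin n₁) (Fin n₂) ℝ) :
    frobNorm A ^ 2 = Matrix.trace (A * Aᵀ) := by
  rw [frobNorm, Real.sq_sqrt (by positivity)]
  unfold Matrix.trace
  refine Finset.sum_congr rfl fun i _ => ?_
  simp [Matrix.diag, Matrix.mul_apply, Matrix.transpose_apply, sq]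

lemma norm_eq_of_sq_eq {x y : ℝ} (hx : 0 ≤ x) (hy : 0 ≤ y) (h : x ^ 2 = y ^ 2) : x = y := by
  nlinarith

lemma frobNorm_mul_transpose {V : Matrix (Fin n) (Fin r) ℝ} (hV : Vᵀ * V = 1)
    (M : Matrix (Fin n₁) (Fin r) ℝ) : frobNorm (M * Vᵀ) = frobNorm M := by
  refine norm_eq_of_sq_eq (frobNorm_nonneg _) (frobNorm_nonneg _) ?_
  rw [frobNorm_sq_eq_trace, frobNorm_sq_eq_trace, Matrix.transpose_mul,
    Matrix.transpose_transpose]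
  rw [Matrix.mul_assoc, ← Matrix.mul_assoc Vᵀ V Mᵀ, hV, Matrix.one_mul]

lemma frobNorm_unitary_mul {U : Matrix (Fin n) (Fin r) ℝ} (hU : Uᵀ * U = 1)
    (M : Matrix (Fin r) (Fin n₂) ℝ) : frobNorm (U * M) = frobNorm M := by
  refine norm_eq_of_sq_eq (frobNorm_nonneg _) (frobNorm_nonneg _) ?_
  rw [frobNorm_sq_eq_trace, frobNorm_sq_eq_trace, Matrix.transpose_mul]
  rw [Matrix.mul_assoc, ← Matrix.mul_assoc M Mᵀ Uᵀ, ← Matrix.mul_assoc U (M * Mᵀ) Uᵀ,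
    Matrix.trace_mul_cycle, hU, Matrix.one_mul]

lemma frobNorm_proj_mul_le {Q : Matrix (Fin n) (Fin n) ℝ} (M : Matrix (Fin n) (Fin n) ℝ)
    (hsymm : Qᵀ = Q) (hidem : Q * Q = Q) : frobNorm (Q * M) ≤ frobNorm M := by
  have h2 : frobNorm (Q * M) ^ 2 = frobInner M (Q * M) := by
    rw [frobNorm_sq, frobInner_eq_trace, frobInner_eq_trace, Matrix.transpose_mul, hsymm,
      Matrix.mul_assoc Mᵀ Q (Q * M), ← Matrix.mul_assoc Q Q M, hidem]
  have hcs := frobInner_le M (Q * M)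
  rcases eq_or_lt_of_le (frobNorm_nonneg (Q * M)) with h | h
  · rw [← h]; exact frobNorm_nonneg M
  · nlinarith

lemma frobNorm_mul_proj_le {Q : Matrix (Fin n) (Fin n) ℝ} (M : Matrix (Fin n) (Fin n) ℝ)
    (hsymm : Qᵀ = Q) (hidem : Q * Q = Q) : frobNorm (M * Q) ≤ frobNorm M := by
  have h2 : frobNorm (M * Q) ^ 2 = frobInner M (M * Q) := by
    rw [frobNorm_sq, frobInner_eq_trace, frobInner_eq_trace, Matrix.transpose_mul, hsymm]
    rw [show Q * Mᵀ * (M * Q) = Q * (Mᵀ * (M * Q)) from Matrix.mul_assoc _ _ _,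
      Matrix.trace_mul_comm, Matrix.mul_assoc (Mᵀ) (M * Q) Q, Matrix.mul_assoc M Q Q, hidem]
  have hcs := frobInner_le M (M * Q)
  rcases eq_or_lt_of_le (frobNorm_nonneg (M * Q)) with h | h
  · rw [← h]; exact frobNorm_nonneg M
  · nlinarith

lemma frobNorm_mul_le (A : Matrix (Fin n₁) (Fin n₂) ℝ) (B : Matrix (Fin n₂) (Fin n₃) ℝ) :
    frobNorm (A * B) ≤ frobNorm A * frobNorm B := by
  have key : ∑ i, ∑ j, ((A * B) i j) ^ 2 ≤
      (∑ i, ∑ k, (A i k) ^ 2) * (∑ k, ∑ j, (B k j) ^ 2) := by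
    have h1 : ∀ i j, ((A * B) i j) ^ 2 ≤ (∑ k, (A i k) ^ 2) * (∑ k, (B k j) ^ 2) := by
      intro i j
      have := Finset.sum_mul_sq_le_sq_mul_sq Finset.univ (fun k => A i k) (fun k => B k j)
      simpa [Matrix.mul_apply] using this
    calc ∑ i, ∑ j, ((A * B) i j) ^ 2
        ≤ ∑ i, ∑ j, (∑ k, (A i k) ^ 2) * (∑ k, (B k j) ^ 2) := by
          refine Finset.sum_le_sum fun i _ => Finset.sum_le_sum fun j _ => h1 i j
      _ = (∑ i, ∑ k, (A i k) ^ 2) * (∑ k, ∑ j, (B k j) ^ 2) := by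
          rw [Finset.sum_mul]
          refine Finset.sum_congr rfl fun i _ => ?_
          rw [← Finset.mul_sum, Finset.sum_comm]
  unfold frobNorm
  calc Real.sqrt (∑ i, ∑ j, ((A * B) i j) ^ 2)
      ≤ Real.sqrt ((∑ i, ∑ k, (A i k) ^ 2) * (∑ k, ∑ j, (B k j) ^ 2)) :=
        Real.sqrt_le_sqrt key
    _ = _ := Real.sqrt_mul (by positivity) _

lemma frobNorm_diagonal_mul_le {τ : Fin r → ℝ} {t : ℝ} (ht0 : 0 ≤ t) (ht : ∀ i, |τ i| ≤ t)
    (N : Matrix (Fin r) (Fin n₂) ℝ) :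
    frobNorm (Matrix.diagonal τ * N) ≤ t * frobNorm N := by
  have key : ∑ i, ∑ j, ((Matrix.diagonal τ * N) i j) ^ 2 ≤ t ^ 2 * ∑ i, ∑ j, (N i j) ^ 2 := by
    rw [Finset.mul_sum]
    refine Finset.sum_le_sum fun i _ => ?_
    rw [Finset.mul_sum]
    refine Finset.sum_le_sum fun j _ => ?_
    have hd : (Matrix.diagonal τ * N) i j = τ i * N i j := by
      simp [Matrix.diagonal_mul]
    rw [hd, mul_pow]
    have : (τ i) ^ 2 ≤ t ^ 2 := by
      have := ht i
      nlinarith [abs_nonneg (τ i), sq_abs (τ i)]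
    nlinarith [sq_nonneg (N i j)]
  unfold frobNorm
  calc Real.sqrt (∑ i, ∑ j, ((Matrix.diagonal τ * N) i j) ^ 2)
      ≤ Real.sqrt (t ^ 2 * ∑ i, ∑ j, (N i j) ^ 2) := Real.sqrt_le_sqrt key
    _ = t * frobNorm N := by
        rw [Real.sqrt_mul (sq_nonneg t), Real.sqrt_sq ht0, frobNorm]

lemma rank_add_le (A B : Matrix (Fin n₁) (Fin n₂) ℝ) : (A + B).rank ≤ A.rank + B.rank := by
  rw [Matrix.rank, Matrix.rank, Matrix.rank, Matrix.mulVecLin_add]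
  have h : LinearMap.range (A.mulVecLin + B.mulVecLin) ≤
      LinearMap.range A.mulVecLin ⊔ LinearMap.range B.mulVecLin := by
    rintro x ⟨v, rfl⟩
    exact Submodule.mem_sup.mpr ⟨A.mulVecLin v, ⟨v, rfl⟩, B.mulVecLin v, ⟨v, rfl⟩, rfl⟩
  exact (Submodule.finrank_mono h).trans
    (Submodule.finrank_add_le_finrank_add_finrank _ _)

lemma rank_smul_le (c : ℝ) (A : Matrix (Fin n₁) (Fin n₂) ℝ) : (c • A).rank ≤ A.rank := by
  have h : c • A = A * (c • (1 : Matrix (Fin n₂) (Fin n₂) ℝ)) := by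
    rw [Matrix.mul_smul, Matrix.mul_one]
  rw [h]
  exact Matrix.rank_mul_le_left _ _

lemma rank_fac_left_le (U : Matrix (Fin n) (Fin r) ℝ) (M : Matrix (Fin r) (Fin n) ℝ) :
    (U * M).rank ≤ r := by
  refine (Matrix.rank_mul_le_left U M).trans ?_
  simpa using Matrix.rank_le_card_width U

lemma rank_fac_right_le (M : Matrix (Fin n) (Fin r) ℝ) (V : Matrix (Fin r) (Fin n) ℝ) :
    (M * V).rank ≤ r := by
  refine (Matrix.rank_mul_le_right M V).trans ?_
  simpa using Matrix.rank_le_card_height V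



variable {n m r : ℕ}

lemma dot2_combo (a b : ℝ) (u v : Fin m → ℝ) :
    dot2 (a • u + b • v) (a • u + b • v) =
      a ^ 2 * dot2 u u + 2 * a * b * dot2 u v + b ^ 2 * dot2 v v := by
  unfold dot2
  rw [Finset.mul_sum, Finset.mul_sum, Finset.mul_sum, ← Finset.sum_add_distrib,
    ← Finset.sum_add_distrib]
  refine Finset.sum_congr rfl fun i _ => ?_
  simp only [Pi.add_apply, Pi.smul_apply, smul_eq_mul]
  ring

lemma frobInner_combo (a b : ℝ) (W Y : Matrix (Fin n) (Fin n) ℝ) :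
    frobInner (a • W + b • Y) (a • W + b • Y) =
      a ^ 2 * frobInner W W + 2 * a * b * frobInner W Y + b ^ 2 * frobInner Y Y := by
  simp only [frobInner_add_left, frobInner_add_right, frobInner_smul_left,
    frobInner_smul_right, frobInner_comm Y W]
  ring

lemma restricted_orthogonality {s' : ℕ} {δ : ℝ}
    (𝒜 : Matrix (Fin n) (Fin n) ℝ →ₗ[ℝ] (Fin m → ℝ))
    (hRIP : HasRIP (fun Z => 𝒜 Z) s' δ)
    (W Y : Matrix (Fin n) (Fin n) ℝ)
    (hrank : ∀ u v : ℝ, (u • W + v • Y).rank ≤ s') :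
    |dot2 (𝒜 W) (𝒜 Y) - frobInner W Y| ≤ δ * frobNorm W * frobNorm Y := by
  rcases eq_or_lt_of_le (frobNorm_nonneg W) with hW | hW
  · have hW0 : W = 0 := frobNorm_eq_zero hW.symm
    subst hW0
    simp only [map_zero]
    have h1 : dot2 (0 : Fin m → ℝ) (𝒜 Y) = 0 := by
      unfold dot2; simp
    have h2 : frobInner (0 : Matrix (Fin n) (Fin n) ℝ) Y = 0 := frobInner_zero_left Y
    rw [h1, h2]
    simp [← hW]
  rcases eq_or_lt_of_le (frobNorm_nonneg Y) with hY | hY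
  · have hY0 : Y = 0 := frobNorm_eq_zero hY.symm
    subst hY0
    simp only [map_zero]
    have h1 : dot2 (𝒜 W) (0 : Fin m → ℝ) = 0 := by
      unfold dot2; simp
    have h2 : frobInner W (0 : Matrix (Fin n) (Fin n) ℝ) = 0 := by
      rw [frobInner_comm]; exact frobInner_zero_left W
    rw [h1, h2]
    simp [← hY]
  set a := frobNorm Y with ha
  set b := frobNorm W with hb
  have hp := hRIP (a • W + b • Y) (hrank a b)
  have hmeq : a • W + (-b) • Y = a • W - b • Y := by
    rw [neg_smul, ← sub_eq_add_neg]
  have hm := hRIP (a • W + (-b) • Y) (hrank a (-b))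
  have hAp : (fun Z => 𝒜 Z) (a • W + b • Y) = a • 𝒜 W + b • 𝒜 Y := by
    simp only [map_add, LinearMap.map_smul]
  have hAm : (fun Z => 𝒜 Z) (a • W + (-b) • Y) = a • 𝒜 W + (-b) • 𝒜 Y := by
    simp only [map_add, LinearMap.map_smul]
  rw [hAp] at hp
  rw [hAm] at hm
  simp only [l2norm_sq, dot2_combo, frobNorm_sq, frobInner_combo] at hp hm
  have e1 : frobInner W W = b ^ 2 := (frobNorm_sq W).symm
  have e2 : frobInner Y Y = a ^ 2 := (frobNorm_sq Y).symm
  have e3 : dot2 (𝒜 W) (𝒜 W) = l2norm (𝒜 W) ^ 2 := (l2norm_sq _).symm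
  have e4 : dot2 (𝒜 Y) (𝒜 Y) = l2norm (𝒜 Y) ^ 2 := (l2norm_sq _).symm
  have hab : 0 < a * b := mul_pos hY hW
  have h1 := hp.2
  have h2 := hm.1
  have h3 := hp.1
  have h4 := hm.2
  rw [e1, e2] at h1 h2 h3 h4
  have comb1 : 4*(a*b)*(dot2 (𝒜 W) (𝒜 Y)) ≤ 4*δ*(a^2*b^2) + 4*(a*b)*(frobInner W Y) := by
    linarith [h1, h2]
  have comb2 : 4*(a*b)*(frobInner W Y) - 4*δ*(a^2*b^2) ≤ 4*(a*b)*(dot2 (𝒜 W) (𝒜 Y)) := by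
    linarith [h3, h4]
  rw [abs_le]
  constructor
  · nlinarith [comb2, hab]
  · nlinarith [comb1, hab]

lemma frobNorm_zero : frobNorm (0 : Matrix (Fin n) (Fin n) ℝ) = 0 := by
  unfold frobNorm; simp

lemma le_of_sq_le_mul {x c : ℝ} (hx : 0 ≤ x) (hc : 0 ≤ c) (h : x ^ 2 ≤ c * x) : x ≤ c := by
  rcases eq_or_lt_of_le hx with h0 | h0
  · rw [← h0]; exact hc
  · nlinarith

lemma combo_rank {Uk Vk : Matrix (Fin n) (Fin r) ℝ} {σk : Fin r → ℝ}
    {Zk X : Matrix (Fin n) (Fin n) ℝ}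
    (hZk : Zk = Uk * Matrix.diagonal σk * Vkᵀ) (hXr : X.rank ≤ r)
    (B C : Matrix (Fin n) (Fin r) ℝ) (u v : ℝ) :
    (u • (Zk - X) + v • (Uk * Bᵀ + C * Vkᵀ)).rank ≤ 3 * r := by
  have hsplit : u • (Zk - X) + v • (Uk * Bᵀ + C * Vkᵀ) =
      (Uk * (u • (Matrix.diagonal σk * Vkᵀ) + v • Bᵀ) + (v • C) * Vkᵀ) + (-u) • X := by
    rw [hZk, Matrix.mul_add, Matrix.mul_smul, Matrix.mul_smul, Matrix.smul_mul,
      Matrix.mul_assoc]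
    module
  rw [hsplit]
  have r1 : (Uk * (u • (Matrix.diagonal σk * Vkᵀ) + v • Bᵀ)).rank ≤ r := rank_fac_left_le _ _
  have r2 : ((v • C) * Vkᵀ).rank ≤ r := rank_fac_right_le _ _
  have r3 : ((-u) • X).rank ≤ r := (rank_smul_le _ _).trans hXr
  have h4 := rank_add_le (Uk * (u • (Matrix.diagonal σk * Vkᵀ) + v • Bᵀ)) ((v • C) * Vkᵀ)
  have h5 := rank_add_le (Uk * (u • (Matrix.diagonal σk * Vkᵀ) + v • Bᵀ) + (v • C) * Vkᵀ)
      ((-u) • X)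
  omega

lemma rank_tangent_le {Uk Vk : Matrix (Fin n) (Fin r) ℝ} (B C : Matrix (Fin n) (Fin r) ℝ) :
    (Uk * Bᵀ + C * Vkᵀ).rank ≤ 3 * r := by
  have h1 : (Uk * Bᵀ).rank ≤ r := rank_fac_left_le _ _
  have h2 : (C * Vkᵀ).rank ≤ r := rank_fac_right_le _ _
  have h3 := rank_add_le (Uk * Bᵀ) (C * Vkᵀ)
  omega

lemma step_exact {X : Matrix (Fin n) (Fin n) ℝ} {Uk Vk : Matrix (Fin n) (Fin r) ℝ}
    {P Zk1 : Matrix (Fin n) (Fin n) ℝ} (c : ℝ)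
    (hT : IsTanProj Uk Vk 0 P)
    (hbest : IsBestRankApprox r (X + c • P) Zk1)
    (hXr : X.rank ≤ r) : Zk1 = X := by
  obtain ⟨⟨B0, C0, hPf⟩, horth⟩ := hT
  have h := horth B0 C0
  rw [← hPf, frobInner_sub_left, frobInner_zero_left] at h
  have hP0 : P = 0 := eq_zero_of_frobInner_self P (by linarith)
  have h2 := hbest.2 X hXr
  rw [hP0, smul_zero, add_zero, sub_self, frobNorm_zero] at h2
  have h3 : frobNorm (X - Zk1) = 0 := le_antisymm h2 (frobNorm_nonneg _)
  have h4 : X - Zk1 = 0 := frobNorm_eq_zero h3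
  have := sub_eq_zero.mp h4
  exact this.symm

lemma step_bound {n m r : ℕ} {X : Matrix (Fin n) (Fin n) ℝ}
    {U V : Matrix (Fin n) (Fin r) ℝ} {σ : Fin r → ℝ}
    (hU : Uᵀ * U = 1) (hV : Vᵀ * V = 1) (hσ : ∀ i, 0 < σ i)
    (hX : X = U * Matrix.diagonal σ * Vᵀ) (hXr : X.rank ≤ r)
    (𝒜 : Matrix (Fin n) (Fin n) ℝ →ₗ[ℝ] (Fin m → ℝ))
    (𝒜s : (Fin m → ℝ) →ₗ[ℝ] Matrix (Fin n) (Fin n) ℝ)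
    (hadj : ∀ (Zm : Matrix (Fin n) (Fin n) ℝ) (w : Fin m → ℝ),
      frobInner (𝒜s w) Zm = ∑ ℓ, w ℓ * 𝒜 Zm ℓ)
    {δ : ℝ} (hδ0 : 0 < δ) (hδ : δ ≤ 1/20)
    (hRIP : HasRIP (fun Z => 𝒜 Z) (3 * r) δ)
    {s : ℝ} (hs : 0 < s)
    {Uk Vk : Matrix (Fin n) (Fin r) ℝ} {σk : Fin r → ℝ} {P Zk Zk1 : Matrix (Fin n) (Fin n) ℝ}
    (hUk : Ukᵀ * Uk = 1) (hVk : Vkᵀ * Vk = 1)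
    (hZk : Zk = Uk * Matrix.diagonal σk * Vkᵀ)
    (hT : IsTanProj Uk Vk (𝒜s (𝒜 X - 𝒜 Zk)) P)
    (hbest : IsBestRankApprox r (Zk + (frobNorm P ^ 2 / l2norm (𝒜 P) ^ 2) • P) Zk1)
    (hsle : ∀ i, s ≤ σ i)
    (hclose : frobNorm (Zk - X) ≤ (1/20) * s) :
    frobNorm (Zk1 - X) ≤ (1/2) * frobNorm (Zk - X) := by
  obtain ⟨⟨B0, C0, hPf⟩, horth⟩ := hT
  set W : Matrix (Fin n) (Fin n) ℝ := Zk - X with hWdef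
  set α : ℝ := frobNorm P ^ 2 / l2norm (𝒜 P) ^ 2 with hαdef
  set G : Matrix (Fin n) (Fin n) ℝ := 𝒜s (𝒜 X - 𝒜 Zk) with hGdef
  clear_value α
  -- inner products against G
  have hAW : 𝒜 W = 𝒜 Zk - 𝒜 X := by rw [hWdef, map_sub]
  have hG : ∀ Y : Matrix (Fin n) (Fin n) ℝ, frobInner G Y = - dot2 (𝒜 W) (𝒜 Y) := by
    intro Y
    rw [hGdef, hadj]
    unfold dot2
    rw [← Finset.sum_neg_distrib]
    refine Finset.sum_congr rfl fun ℓ _ => ?_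
    rw [hAW]
    simp only [Pi.sub_apply]
    ring
  -- projections
  set Q : Matrix (Fin n) (Fin n) ℝ := 1 - Uk * Ukᵀ with hQdef
  set R : Matrix (Fin n) (Fin n) ℝ := 1 - Vk * Vkᵀ with hRdef
  have hQsymm : Qᵀ = Q := by
    rw [hQdef, Matrix.transpose_sub, Matrix.transpose_one, Matrix.transpose_mul,
      Matrix.transpose_transpose]
  have hRsymm : Rᵀ = R := by
    rw [hRdef, Matrix.transpose_sub, Matrix.transpose_one, Matrix.transpose_mul,
      Matrix.transpose_transpose]
  have hA1 : (Uk * Ukᵀ) * (Uk * Ukᵀ) = Uk * Ukᵀ := by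
    rw [Matrix.mul_assoc, ← Matrix.mul_assoc Ukᵀ Uk Ukᵀ, hUk, Matrix.one_mul]
  have hB1 : (Vk * Vkᵀ) * (Vk * Vkᵀ) = Vk * Vkᵀ := by
    rw [Matrix.mul_assoc, ← Matrix.mul_assoc Vkᵀ Vk Vkᵀ, hVk, Matrix.one_mul]
  have hQidem : Q * Q = Q := by
    rw [hQdef, sub_mul, one_mul, mul_sub, mul_one, hA1]
    abel
  have hRidem : R * R = R := by
    rw [hRdef, sub_mul, one_mul, mul_sub, mul_one, hB1]
    abel
  have hQU : Q * Uk = 0 := by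
    rw [hQdef, Matrix.sub_mul, Matrix.one_mul, Matrix.mul_assoc, hUk, Matrix.mul_one, sub_self]
  have hVR : Vkᵀ * R = 0 := by
    rw [hRdef, Matrix.mul_sub, Matrix.mul_one, ← Matrix.mul_assoc, hVk, Matrix.one_mul, sub_self]
  have hQZ : Q * Zk = 0 := by
    rw [hZk, Matrix.mul_assoc Uk, ← Matrix.mul_assoc Q Uk _, hQU, Matrix.zero_mul]
  have hZR : Zk * R = 0 := by
    rw [hZk, Matrix.mul_assoc, hVR, Matrix.mul_zero]
  set Wperp : Matrix (Fin n) (Fin n) ℝ := Q * W * R with hWperpdef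
  -- Wperp is orthogonal to the tangent space
  have hWperp_orth : ∀ B C : Matrix (Fin n) (Fin r) ℝ,
      frobInner Wperp (Uk * Bᵀ + C * Vkᵀ) = 0 := by
    intro B C
    rw [frobInner_add_right]
    have h1 : frobInner Wperp (Uk * Bᵀ) = 0 := by
      rw [frobInner_eq_trace, hWperpdef]
      simp only [Matrix.transpose_mul, hQsymm, hRsymm, Matrix.mul_assoc]
      rw [← Matrix.mul_assoc Q Uk Bᵀ, hQU, Matrix.zero_mul, Matrix.mul_zero, Matrix.mul_zero]
      simp
    have h2 : frobInner Wperp (C * Vkᵀ) = 0 := by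
      rw [frobInner_eq_trace, hWperpdef, Matrix.trace_mul_comm]
      simp only [Matrix.transpose_mul, hQsymm, hRsymm, Matrix.mul_assoc]
      rw [← Matrix.mul_assoc Vkᵀ R (Wᵀ * Q), hVR, Matrix.zero_mul, Matrix.mul_zero]
      simp
    rw [h1, h2, add_zero]
  -- quadratic bound on Wperp
  have hQWR_eq : Wperp = -(Q * X * R) := by
    have h1 : Q * W = -(Q * X) := by
      rw [hWdef, Matrix.mul_sub, hQZ, zero_sub]
    rw [hWperpdef, h1, Matrix.neg_mul]
  have hQX : Q * X = -(Q * W) := by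
    rw [hWdef, Matrix.mul_sub, hQZ, zero_sub, neg_neg]
  have hXR : X * R = -(W * R) := by
    rw [hWdef, Matrix.sub_mul, hZR, zero_sub, neg_neg]
  have hdd : Matrix.diagonal (fun i => (σ i)⁻¹) * Matrix.diagonal σ =
      (1 : Matrix (Fin r) (Fin r) ℝ) := by
    rw [Matrix.diagonal_mul_diagonal,
      show (fun i => (σ i)⁻¹ * σ i) = (fun _ : Fin r => (1 : ℝ)) from
        funext fun i => inv_mul_cancel₀ (ne_of_gt (hσ i))]
    exact Matrix.diagonal_one
  have hfac : Q * X * R = (Q * (U * Matrix.diagonal σ)) *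
      (Matrix.diagonal (fun i => (σ i)⁻¹) * ((Matrix.diagonal σ * Vᵀ) * R)) := by
    rw [hX]
    simp only [Matrix.mul_assoc]
    rw [← Matrix.mul_assoc (Matrix.diagonal (fun i => (σ i)⁻¹)) (Matrix.diagonal σ) (Vᵀ * R),
      hdd, Matrix.one_mul]
  have hnormWperp : frobNorm Wperp ≤ frobNorm W * (s⁻¹ * frobNorm W) := by
    rw [hQWR_eq, frobNorm_neg, hfac]
    have h1 : frobNorm (Q * (U * Matrix.diagonal σ)) ≤ frobNorm W := by
      have e1 : frobNorm (Q * (U * Matrix.diagonal σ)) =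
          frobNorm ((Q * (U * Matrix.diagonal σ)) * Vᵀ) :=
        (frobNorm_mul_transpose hV _).symm
      have e2 : (Q * (U * Matrix.diagonal σ)) * Vᵀ = Q * X := by
        rw [hX]
        simp only [Matrix.mul_assoc]
      rw [e1, e2, hQX, frobNorm_neg]
      exact frobNorm_proj_mul_le W hQsymm hQidem
    have h2 : frobNorm (Matrix.diagonal (fun i => (σ i)⁻¹) * ((Matrix.diagonal σ * Vᵀ) * R)) ≤
        s⁻¹ * frobNorm W := by
      have h3 : frobNorm (Matrix.diagonal (fun i => (σ i)⁻¹) * ((Matrix.diagonal σ * Vᵀ) * R)) ≤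
          s⁻¹ * frobNorm ((Matrix.diagonal σ * Vᵀ) * R) := by
        refine frobNorm_diagonal_mul_le (by positivity) (fun i => ?_) _
        rw [abs_of_pos (inv_pos.2 (hσ i))]
        exact inv_anti₀ hs (hsle i)
      have h4 : frobNorm ((Matrix.diagonal σ * Vᵀ) * R) ≤ frobNorm W := by
        have e3 : frobNorm ((Matrix.diagonal σ * Vᵀ) * R) =
            frobNorm (U * ((Matrix.diagonal σ * Vᵀ) * R)) := (frobNorm_unitary_mul hU _).symm
        have e4 : U * ((Matrix.diagonal σ * Vᵀ) * R) = X * R := by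
          rw [hX]
          simp only [Matrix.mul_assoc]
        rw [e3, e4, hXR, frobNorm_neg]
        exact frobNorm_mul_proj_le W hRsymm hRidem
      calc frobNorm (Matrix.diagonal (fun i => (σ i)⁻¹) * ((Matrix.diagonal σ * Vᵀ) * R))
          ≤ s⁻¹ * frobNorm ((Matrix.diagonal σ * Vᵀ) * R) := h3
        _ ≤ s⁻¹ * frobNorm W := by
            refine mul_le_mul_of_nonneg_left h4 (by positivity)
    calc frobNorm ((Q * (U * Matrix.diagonal σ)) *
          (Matrix.diagonal (fun i => (σ i)⁻¹) * ((Matrix.diagonal σ * Vᵀ) * R)))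
        ≤ frobNorm (Q * (U * Matrix.diagonal σ)) *
          frobNorm (Matrix.diagonal (fun i => (σ i)⁻¹) * ((Matrix.diagonal σ * Vᵀ) * R)) :=
          frobNorm_mul_le _ _
      _ ≤ frobNorm W * (s⁻¹ * frobNorm W) := by
          refine mul_le_mul h1 h2 (frobNorm_nonneg _) (frobNorm_nonneg _)
  -- RIP applied to P
  have hrankP : P.rank ≤ 3 * r := by rw [hPf]; exact rank_tangent_le B0 C0
  have hRIPP : (1 - δ) * frobNorm P ^ 2 ≤ l2norm (𝒜 P) ^ 2 ∧
      l2norm (𝒜 P) ^ 2 ≤ (1 + δ) * frobNorm P ^ 2 := hRIP P hrankP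
  -- the tangent part
  set BV : Matrix (Fin n) (Fin r) ℝ := (Ukᵀ * (W * R))ᵀ + α • B0 with hBVdef
  set CV : Matrix (Fin n) (Fin r) ℝ := W * Vk + α • C0 with hCVdef
  set Pw : Matrix (Fin n) (Fin n) ℝ := W - Wperp with hPwdef
  have hPw_form : Pw = Uk * (Ukᵀ * (W * R)) + (W * Vk) * Vkᵀ := by
    rw [hPwdef, hWperpdef, hQdef, hRdef,
      ← Matrix.mul_assoc Uk Ukᵀ (W * (1 - Vk * Vkᵀ)), Matrix.mul_assoc W Vk Vkᵀ]
    noncomm_ring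
  set Vm : Matrix (Fin n) (Fin n) ℝ := Pw + α • P with hVmdef
  have hVform : Vm = Uk * BVᵀ + CV * Vkᵀ := by
    rw [hVmdef, hPw_form, hPf, hBVdef, hCVdef]
    simp only [Matrix.transpose_add, Matrix.transpose_smul, Matrix.transpose_transpose,
      Matrix.mul_add, Matrix.add_mul, Matrix.mul_smul, Matrix.smul_mul, smul_add]
    abel
  have horthWV : frobInner Wperp Vm = 0 := by
    rw [hVform]; exact hWperp_orth BV CV
  have horthPV : frobInner P Vm = frobInner G Vm := by
    have h := horth BV CV
    rw [← hVform, frobInner_sub_left] at h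
    linarith only [h]
  have hkey : frobInner Vm Vm = frobInner W Vm - α * dot2 (𝒜 W) (𝒜 Vm) := by
    have h1 : frobInner Vm Vm = frobInner Pw Vm + α * frobInner P Vm := by
      nth_rewrite 1 [hVmdef]
      rw [frobInner_add_left, frobInner_smul_left]
    have h2 : frobInner Pw Vm = frobInner W Vm := by
      rw [hPwdef, frobInner_sub_left, horthWV, sub_zero]
    rw [h1, h2, horthPV, hG Vm]
    ring
  have hrankWV : ∀ u v : ℝ, (u • W + v • Vm).rank ≤ 3 * r := by
    intro u v
    rw [hVform, hWdef]
    exact combo_rank hZk hXr BV CV u v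
  have hRO := restricted_orthogonality 𝒜 hRIP W Vm hrankWV
  rw [abs_le] at hRO
  have habsI := abs_frobInner_le W Vm
  have hWVnn : 0 ≤ frobNorm W * frobNorm Vm :=
    mul_nonneg (frobNorm_nonneg W) (frobNorm_nonneg Vm)
  -- bound on Vm
  have hVmb : frobNorm Vm ≤ (2/19) * frobNorm W := by
    by_cases hP0 : P = 0
    · have hα0 : α = 0 := by rw [hαdef, hP0, frobNorm_zero]; norm_num
      have hdz : dot2 (𝒜 W) (𝒜 Vm) = 0 := by
        have h1 := horthPV
        rw [hP0, frobInner_zero_left] at h1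
        have h2 := hG Vm
        linarith only [h1, h2]
      have hsq : frobInner Vm Vm ≤ ((2/19) * frobNorm W) * frobNorm Vm := by
        rw [hkey, hα0, hdz]
        have h3 := hRO.1
        rw [hdz] at h3
        nlinarith only [hWVnn, h3, mul_le_mul_of_nonneg_right hδ hWVnn]
      refine le_of_sq_le_mul (frobNorm_nonneg Vm)
        (mul_nonneg (by norm_num) (frobNorm_nonneg W)) (by rw [frobNorm_sq]; exact hsq)
    · have hPn : 0 < frobNorm P := by
        rcases eq_or_lt_of_le (frobNorm_nonneg P) with h | h
        · exact absurd (frobNorm_eq_zero h.symm) hP0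
        · exact h
      have hp2 : 0 < frobNorm P ^ 2 := by positivity
      have hlow := hRIPP.1
      have hup := hRIPP.2
      have hAP2 : 0 < l2norm (𝒜 P) ^ 2 := by nlinarith only [hlow, hp2, hδ]
      have hαmul : α * l2norm (𝒜 P) ^ 2 = frobNorm P ^ 2 := by
        rw [hαdef, div_mul_cancel₀ _ (ne_of_gt hAP2)]
      have hα0 : 0 ≤ α := by
        rw [hαdef]; positivity
      have hA : α * (1 - δ) ≤ 1 := by
        nlinarith only [mul_le_mul_of_nonneg_left hlow hα0, hαmul, hp2]
      have hB : 1 ≤ α * (1 + δ) := by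
        nlinarith only [mul_le_mul_of_nonneg_left hup hα0, hαmul, hp2]
      have hα2019 : α ≤ 20/19 := by nlinarith only [hA, hα0, hδ]
      have hαδ : α * δ ≤ (20/19) * δ := mul_le_mul_of_nonneg_right hα2019 hδ0.le
      have h1mα : 1 - α ≤ (20/19) * δ := by nlinarith only [hB, hαδ]
      have hαm1 : α - 1 ≤ (20/19) * δ := by nlinarith only [hA, hαδ]
      have habs1 : |1 - α| ≤ (20/19) * δ := abs_le.mpr ⟨by linarith only [hαm1], h1mα⟩
      have hsq : frobInner Vm Vm ≤ ((2/19) * frobNorm W) * frobNorm Vm := by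
        have hids : frobInner Vm Vm = (1 - α) * frobInner W Vm +
            α * (frobInner W Vm - dot2 (𝒜 W) (𝒜 Vm)) := by rw [hkey]; ring
        have t1 : (1 - α) * frobInner W Vm ≤ ((20/19) * δ) * (frobNorm W * frobNorm Vm) := by
          calc (1 - α) * frobInner W Vm ≤ |(1 - α) * frobInner W Vm| := le_abs_self _
            _ = |1 - α| * |frobInner W Vm| := abs_mul _ _
            _ ≤ ((20/19) * δ) * (frobNorm W * frobNorm Vm) :=
                mul_le_mul habs1 habsI (abs_nonneg _) (by nlinarith only [hδ0])
        have t2 : α * (frobInner W Vm - dot2 (𝒜 W) (𝒜 Vm)) ≤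
            (20/19) * (δ * (frobNorm W * frobNorm Vm)) := by
          have hsub : frobInner W Vm - dot2 (𝒜 W) (𝒜 Vm) ≤
              δ * (frobNorm W * frobNorm Vm) := by
            linarith only [hRO.1]
          calc α * (frobInner W Vm - dot2 (𝒜 W) (𝒜 Vm))
              ≤ α * (δ * (frobNorm W * frobNorm Vm)) :=
                mul_le_mul_of_nonneg_left hsub hα0
            _ ≤ (20/19) * (δ * (frobNorm W * frobNorm Vm)) :=
                mul_le_mul_of_nonneg_right hα2019 (mul_nonneg hδ0.le hWVnn)
        rw [hids]
        nlinarith only [t1, t2, mul_le_mul_of_nonneg_right hδ hWVnn, hWVnn]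
      refine le_of_sq_le_mul (frobNorm_nonneg Vm)
        (mul_nonneg (by norm_num) (frobNorm_nonneg W)) (by rw [frobNorm_sq]; exact hsq)
  -- assemble
  have hMX : Zk + α • P - X = Wperp + Vm := by
    rw [hVmdef, hPwdef, hWdef]
    abel
  have h5 : frobNorm (Zk + α • P - X) ≤ frobNorm Wperp + frobNorm Vm := by
    rw [hMX]; exact frobNorm_add_le _ _
  have h6 : frobNorm Wperp ≤ (1/20) * frobNorm W := by
    refine hnormWperp.trans ?_
    nlinarith only [mul_le_mul_of_nonneg_left hclose
        (mul_nonneg (frobNorm_nonneg W) (inv_pos.2 hs).le),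
      mul_inv_cancel₀ (ne_of_gt hs), frobNorm_nonneg W, inv_pos.2 hs]
  have h7 : frobNorm (Zk1 - (Zk + α • P)) ≤ frobNorm (Zk + α • P - X) := by
    rw [frobNorm_sub_comm Zk1 (Zk + α • P)]
    exact hbest.2 X hXr
  have h8 : Zk1 - X = (Zk1 - (Zk + α • P)) + (Zk + α • P - X) := by abel
  calc frobNorm (Zk1 - X)
      = frobNorm ((Zk1 - (Zk + α • P)) + (Zk + α • P - X)) := by rw [← h8]
    _ ≤ frobNorm (Zk1 - (Zk + α • P)) + frobNorm (Zk + α • P - X) := frobNorm_add_le _ _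
    _ ≤ (1/2) * frobNorm W := by linarith only [frobNorm_nonneg W, h6, hVmb, h5, h7]

end RG

/-- RGrad with a good initial guess: there are universal constants
`c, c₀ > 0` and `ρ ∈ (0,1)` such that under the rank-`3r` RIP with `δ_{3r} ≤ c`, RGrad
started from a rank-`r` matrix `Z₀` with `‖Z₀ − X‖_F ≤ c₀ σ_r(X)` satisfies
`‖Z_k − X‖_F ≤ ρᵏ ‖Z₀ − X‖_F`. -/
theorem rgrad_local_convergence :
    ∃ c c₀ ρ : ℝ, 0 < c ∧ 0 < c₀ ∧ 0 < ρ ∧ ρ < 1 ∧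
    ∀ (n m r : ℕ) (X : Matrix (Fin n) (Fin n) ℝ)
      (U V : Matrix (Fin n) (Fin r) ℝ) (σ : Fin r → ℝ),
      -- compact SVD of X (so σ_r(X) = ⨅ i, σ i)
      Uᵀ * U = 1 → Vᵀ * V = 1 → (∀ i, 0 < σ i) →
      X = U * Matrix.diagonal σ * Vᵀ → X.rank = r →
      ∀ (𝒜 : Matrix (Fin n) (Fin n) ℝ →ₗ[ℝ] (Fin m → ℝ))
        (𝒜s : (Fin m → ℝ) →ₗ[ℝ] Matrix (Fin n) (Fin n) ℝ),
        (∀ (Z : Matrix (Fin n) (Fin n) ℝ) (w : Fin m → ℝ),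
          frobInner (𝒜s w) Z = ∑ ℓ, w ℓ * 𝒜 Z ℓ) →
        ∀ δ : ℝ, 0 < δ → δ ≤ c → HasRIP (fun Z => 𝒜 Z) (3 * r) δ →
        ∀ (y : Fin m → ℝ), y = 𝒜 X →
        ∀ Z : ℕ → Matrix (Fin n) (Fin n) ℝ,
          -- initial guess: rank r and close to X
          (Z 0).rank = r → frobNorm (Z 0 - X) ≤ c₀ * (⨅ i, σ i) →
          -- RGrad iteration
          (∀ k, ∃ (Uk Vk : Matrix (Fin n) (Fin r) ℝ) (σk : Fin r → ℝ)
            (P : Matrix (Fin n) (Fin n) ℝ),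
            Ukᵀ * Uk = 1 ∧ Vkᵀ * Vk = 1 ∧ (∀ i, 0 ≤ σk i) ∧
            Z k = Uk * Matrix.diagonal σk * Vkᵀ ∧
            IsTanProj Uk Vk (𝒜s (y - 𝒜 (Z k))) P ∧
            IsBestRankApprox r
              (Z k + (frobNorm P ^ 2 / l2norm (𝒜 P) ^ 2) • P) (Z (k + 1))) →
          ∀ k, frobNorm (Z k - X) ≤ ρ ^ k * frobNorm (Z 0 - X) := by
  refine ⟨1/20, 1/20, 1/2, by norm_num, by norm_num, by norm_num, by norm_num, ?_⟩
  intro n m r X U V σ hU hV hσ hX hXrank 𝒜 𝒜s hadj δ hδ0 hδc hRIP y hy Z hZ0rank hZ0close hiter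
  have hXr : X.rank ≤ r := le_of_eq hXrank
  by_cases h0 : frobNorm (Z 0 - X) = 0
  · have hZX : ∀ k, Z k = X := by
      intro k
      induction k with
      | zero => exact sub_eq_zero.mp (RG.frobNorm_eq_zero h0)
      | succ k ih =>
        obtain ⟨Uk, Vk, σk, P, hUk, hVk, hσk, hZk, hT, hbest⟩ := hiter k
        have hG0 : y - 𝒜 (Z k) = 0 := by rw [hy, ih, sub_self]
        rw [hG0, map_zero] at hT
        rw [ih] at hbest
        exact RG.step_exact _ hT hbest hXr
    intro k
    rw [hZX k, sub_self, RG.frobNorm_zero, hZX 0, sub_self, RG.frobNorm_zero, mul_zero]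
  · have hd0 : 0 < frobNorm (Z 0 - X) :=
      lt_of_le_of_ne (RG.frobNorm_nonneg _) (Ne.symm h0)
    have hσmin : 0 < (⨅ i, σ i) := by linarith only [hd0, hZ0close]
    have hsle : ∀ i, (⨅ i, σ i) ≤ σ i := fun i => ciInf_le (Finite.bddBelow_range _) i
    intro k
    induction k with
    | zero => simp
    | succ k ih =>
      have hpow1 : ((1:ℝ)/2)^k ≤ 1 := pow_le_one₀ (by norm_num) (by norm_num)
      have hclose : frobNorm (Z k - X) ≤ (1/20) * (⨅ i, σ i) := by
        calc frobNorm (Z k - X) ≤ (1/2)^k * frobNorm (Z 0 - X) := ih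
          _ ≤ 1 * frobNorm (Z 0 - X) :=
              mul_le_mul_of_nonneg_right hpow1 (RG.frobNorm_nonneg _)
          _ = frobNorm (Z 0 - X) := one_mul _
          _ ≤ _ := hZ0close
      obtain ⟨Uk, Vk, σk, P, hUk, hVk, hσk, hZk, hT, hbest⟩ := hiter k
      rw [hy] at hT
      have hstep := RG.step_bound hU hV hσ hX hXr 𝒜 𝒜s hadj hδ0 hδc hRIP hσmin
        hUk hVk hZk hT hbest hsle hclose
      calc frobNorm (Z (k+1) - X) ≤ (1/2) * frobNorm (Z k - X) := hstep
        _ ≤ (1/2) * ((1/2)^k * frobNorm (Z 0 - X)) := by linarith only [ih]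
        _ = (1/2)^(k+1) * frobNorm (Z 0 - X) := by ring
end
end
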